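/- arXiv:1905.09675 — 10 statements merged into one kernel-verified Lean document; each statement's English description precedes it below -/
import Mathlib

section
/- Let 0 < a and let u : [0,a] → ℝ be continuous on [0,a] and twice continuously differentiable on [0,a), with u(x) > 0 for x ∈ [0,a) and u(a) = 0. If u'(x) → -∞ as x → a, the limit of u(x)·u'(x) as x → a exists and is negative, then for sufficiently small ε > 0 the restriction u : [a-ε, a] → [0, u(a-ε)] is invertible, its inverse w satisfies w'(0) = 0, and the limit of w'(y)/y as y → 0+ equals 1 / (lim_{x→a} u(x)u'(x)); in particular w is twice differentiable at 0 with w''(0) < 0. -/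
open Set Filter Topology

/-- Lemma A.1 (i) ⟹ (ii): if `u' → -∞` at `a` and `u u'` has a negative limit `L` at `a`,
then for sufficiently small `ε > 0` the restriction `u : [a-ε,a] → [0,u(a-ε)]` is invertible,
its inverse `w` satisfies `w'(0) = 0`, `w'(y)/y → 1/L` as `y → 0+`, and `w` is twice
differentiable at `0` with `w''(0) = 1/L < 0`. -/
theorem stmt0 (a : ℝ) (ha : 0 < a) (u : ℝ → ℝ)
    (hu_cont : ContinuousOn u (Icc 0 a))
    (hu_C2 : ContDiffOn ℝ 2 u (Ico 0 a))
    (hu_pos : ∀ x ∈ Ico (0:ℝ) a, 0 < u x)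
    (hu_a : u a = 0)
    (hu_deriv : Tendsto (deriv u) (𝓝[<] a) atBot)
    (L : ℝ) (hL : L < 0)
    (huu' : Tendsto (fun x => u x * deriv u x) (𝓝[<] a) (𝓝 L)) :
    ∀ᶠ ε in 𝓝[>] (0:ℝ), ε < a ∧
      InjOn u (Icc (a - ε) a) ∧
      u '' Icc (a - ε) a = Icc 0 (u (a - ε)) ∧
      ∃ w : ℝ → ℝ,
        (∀ x ∈ Icc (a - ε) a, w (u x) = x) ∧
        (∀ y ∈ Icc (0:ℝ) (u (a - ε)), u (w y) = y) ∧
        HasDerivWithinAt w 0 (Ici 0) 0 ∧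
        Tendsto (fun y => derivWithin w (Ici 0) y / y) (𝓝[>] 0) (𝓝 (1 / L)) ∧
        HasDerivWithinAt (derivWithin w (Ici 0)) (1 / L) (Ici 0) 0 ∧
        1 / L < 0 := by
  -- differentiability of `u` on the interior
  have hu_diff : DifferentiableOn ℝ u (Ico 0 a) :=
    hu_C2.differentiableOn (by norm_num)
  have hderivAt : ∀ x : ℝ, 0 < x → x < a → HasDerivAt u (deriv u x) x := by
    intro x hx0 hxa
    have hmem : Ico (0:ℝ) a ∈ 𝓝 x := by
      refine mem_nhds_iff.2 ⟨Ioo 0 a, Ioo_subset_Ico_self, isOpen_Ioo, ⟨hx0, hxa⟩⟩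
    exact ((hu_diff x ⟨hx0.le, hxa⟩).differentiableAt hmem).hasDerivAt
  -- choose `b` with `0 ≤ b < a` and `deriv u < -1` on `Ioo b a`
  obtain ⟨l, hl, hlsub⟩ := (mem_nhdsLT_iff_exists_Ioo_subset).1
    (hu_deriv.eventually (eventually_lt_atBot (-1)))
  set b : ℝ := max l 0 with hb_def
  have hb0 : 0 ≤ b := le_max_right _ _
  have hba : b < a := max_lt hl ha
  have hbderiv : ∀ x ∈ Ioo b a, deriv u x < -1 := by
    intro x hx
    exact hlsub ⟨lt_of_le_of_lt (le_max_left l 0) hx.1, hx.2⟩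
  -- `u` is strictly antitone on `Icc b a`
  have hanti : StrictAntiOn u (Icc b a) := by
    apply strictAntiOn_of_deriv_neg (convex_Icc b a)
      (hu_cont.mono (Icc_subset_Icc hb0 le_rfl))
    intro x hx
    rw [interior_Icc] at hx
    exact lt_trans (hbderiv x hx) (by norm_num)
  have hinj : InjOn u (Icc b a) := hanti.injOn
  -- monotonicity facts as `≤`
  have hle : ∀ x ∈ Icc b a, ∀ x' ∈ Icc b a, x ≤ x' → u x' ≤ u x := by
    intro x hx x' hx' hxx'
    rcases eq_or_lt_of_le hxx' with rfl | h
    · exact le_refl _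
    · exact (hanti hx hx' h).le
  -- image of `Icc c a` for any `c ∈ Ico b a`
  have himg : ∀ c, b ≤ c → c < a → u '' Icc c a = Icc 0 (u c) := by
    intro c hbc hca
    apply Subset.antisymm
    · rintro _ ⟨x, hx, rfl⟩
      constructor
      · rcases eq_or_lt_of_le hx.2 with rfl | hxa
        · rw [hu_a]
        · exact (hu_pos x ⟨le_trans hb0 (le_trans hbc hx.1), hxa⟩).le
      · exact hle c ⟨hbc, hca.le⟩ x ⟨le_trans hbc hx.1, hx.2⟩ hx.1
    · have := intermediate_value_Icc' hca.le
        (hu_cont.mono (Icc_subset_Icc (le_trans hb0 hbc) le_rfl))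
      rw [hu_a] at this
      exact this
  have himgb : u '' Icc b a = Icc 0 (u b) := himg b le_rfl hba
  have hub_pos : 0 < u b := hu_pos b ⟨hb0, hba⟩
  -- the inverse function
  set W : ℝ → ℝ := Function.invFunOn u (Icc b a) with hW_def
  have hWleft : ∀ x ∈ Icc b a, W (u x) = x := fun x hx => hinj.leftInvOn_invFunOn hx
  have hWex : ∀ y ∈ Icc 0 (u b), ∃ x ∈ Icc b a, u x = y := by
    intro y hy
    rw [← himgb] at hy
    exact hy
  have hWright : ∀ y ∈ Icc 0 (u b), u (W y) = y := fun y hy =>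
    Function.invFunOn_eq (hWex y hy)
  have hWmem : ∀ y ∈ Icc 0 (u b), W y ∈ Icc b a := fun y hy =>
    Function.invFunOn_mem (hWex y hy)
  have hWa : W 0 = a := by
    have := hWleft a ⟨hba.le, le_rfl⟩
    rwa [hu_a] at this
  -- `W y < a` for `y > 0`
  have hWlt : ∀ y ∈ Icc 0 (u b), 0 < y → W y < a := by
    intro y hy hy0
    rcases eq_or_lt_of_le (hWmem y hy).2 with heq | h
    · exfalso
      have := hWright y hy
      rw [heq, hu_a] at this
      exact absurd this.symm (ne_of_gt hy0)
    · exact h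
  -- `W y > c` for `y < u c`
  have hWgt : ∀ c, b ≤ c → c < a → ∀ y ∈ Icc 0 (u b), y < u c → c < W y := by
    intro c hbc hca y hy hyc
    by_contra hcon
    push_neg at hcon
    have : u c ≤ u (W y) :=
      hle (W y) (hWmem y hy) c ⟨hbc, hca.le⟩ hcon
    rw [hWright y hy] at this
    exact absurd this (not_le.2 hyc)
  -- `W` tends to `a` from the left as `y → 0⁺`
  have hWev : ∀ c, b ≤ c → c < a → ∀ᶠ y in 𝓝[>] (0:ℝ), W y ∈ Ioo c a := by
    intro c hbc hca
    have hyc : 0 < u c := hu_pos c ⟨le_trans hb0 hbc, hca⟩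
    filter_upwards [Ioo_mem_nhdsGT_of_mem ⟨le_rfl, lt_min hyc hub_pos⟩] with y hy
    have hy' : y ∈ Icc 0 (u b) := ⟨hy.1.le, le_of_lt (lt_of_lt_of_le hy.2 (min_le_right _ _))⟩
    exact ⟨hWgt c hbc hca y hy' (lt_of_lt_of_le hy.2 (min_le_left _ _)), hWlt y hy' hy.1⟩
  have hWtendsto : Tendsto W (𝓝[>] (0:ℝ)) (𝓝[<] a) := by
    rw [tendsto_nhdsWithin_iff]
    constructor
    · rw [tendsto_order]
      constructor
      · intro c hc
        have h1 : max c b < a := max_lt hc hba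
        filter_upwards [hWev (max c b) (le_max_right _ _) h1] with y hy
        exact lt_of_le_of_lt (le_max_left c b) hy.1
      · intro c hc
        filter_upwards [hWev b le_rfl hba] with y hy
        exact lt_trans hy.2 hc
    · filter_upwards [hWev b le_rfl hba] with y hy
      exact hy.2
  -- strict antitonicity of `W`
  have hWanti : ∀ y₁ ∈ Icc 0 (u b), ∀ y₂ ∈ Icc 0 (u b), y₁ < y₂ → W y₂ < W y₁ := by
    intro y₁ h₁ y₂ h₂ h12
    rcases lt_trichotomy (W y₂) (W y₁) with h | h | h
    · exact h
    · exfalso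
      have := congrArg u h
      rw [hWright y₂ h₂, hWright y₁ h₁] at this
      exact absurd this (ne_of_gt h12)
    · exfalso
      have := hanti (hWmem y₁ h₁) (hWmem y₂ h₂) h
      rw [hWright y₁ h₁, hWright y₂ h₂] at this
      exact absurd this (not_lt.2 h12.le)
  -- continuity of `W` at interior points
  have hWcont : ∀ y ∈ Ioo 0 (u b), ContinuousAt W y := by
    intro y hy
    have hy' : y ∈ Icc 0 (u b) := ⟨hy.1.le, hy.2.le⟩
    have hWy : W y ∈ Ioo b a :=
      ⟨hWgt b le_rfl hba y hy' hy.2, hWlt y hy' hy.1⟩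
    have hmono : StrictMonoOn (fun z => -W z) (Icc 0 (u b)) := by
      intro y₁ h₁ y₂ h₂ h12
      simpa using hWanti y₁ h₁ y₂ h₂ h12
    have himage : (fun z => -W z) '' Icc 0 (u b) = Icc (-a) (-b) := by
      have h1 : W '' Icc 0 (u b) = Icc b a := by
        rw [← himgb]
        exact hinj.invFunOn_image Subset.rfl
      have : (fun z => -W z) '' Icc 0 (u b) = Neg.neg '' (W '' Icc 0 (u b)) := by
        rw [image_image]
      rw [this, h1, Set.image_neg_eq_neg, Set.neg_Icc]
    have hcont : ContinuousAt (fun z => -W z) y := by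
      apply hmono.continuousAt_of_image_mem_nhds (Icc_mem_nhds hy.1 hy.2)
      rw [himage]
      exact Icc_mem_nhds (by simpa using hWy.2) (by simpa using hWy.1)
    have := hcont.neg
    convert this using 1; funext z; simp
  -- derivative of `W` at interior points
  have hWderiv : ∀ y ∈ Ioo 0 (u b), HasDerivAt W (deriv u (W y))⁻¹ y := by
    intro y hy
    have hy' : y ∈ Icc 0 (u b) := ⟨hy.1.le, hy.2.le⟩
    have hWy : W y ∈ Ioo b a :=
      ⟨hWgt b le_rfl hba y hy' hy.2, hWlt y hy' hy.1⟩
    have hd : HasDerivAt u (deriv u (W y)) (W y) :=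
      hderivAt (W y) (lt_of_le_of_lt hb0 hWy.1) hWy.2
    have hd0 : deriv u (W y) ≠ 0 := ne_of_lt (lt_trans (hbderiv _ hWy) (by norm_num))
    apply hd.of_local_left_inverse (hWcont y hy) hd0
    filter_upwards [Ioo_mem_nhds hy.1 hy.2] with z hz
    exact hWright z ⟨hz.1.le, hz.2.le⟩
  -- slope of `W` at `0` tends to `0`
  have hslope : Tendsto (fun y => (W y - a) / y) (𝓝[>] (0:ℝ)) (𝓝 0) := by
    rw [Metric.tendsto_nhds]
    intro ε hε
    obtain ⟨l', hl', hl'sub⟩ := (mem_nhdsLT_iff_exists_Ioo_subset).1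
      (hu_deriv.eventually (eventually_lt_atBot (-(ε⁻¹ + 1))))
    have hb'a : max l' b < a := max_lt hl' hba
    filter_upwards [hWtendsto.eventually (Ioo_mem_nhdsLT hb'a),
      Ioo_mem_nhdsGT_of_mem (α := ℝ) ⟨le_rfl, hub_pos⟩] with y hWy hy
    set x := W y with hx_def
    have hy' : y ∈ Icc 0 (u b) := ⟨hy.1.le, hy.2.le⟩
    have hux : u x = y := hWright y hy'
    have hx0 : 0 < x := lt_of_le_of_lt hb0 (lt_of_le_of_lt (le_max_right l' b) hWy.1)
    -- mean value theorem on `[x, a]`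
    obtain ⟨c, hc, hc_eq⟩ := exists_hasDerivAt_eq_slope u (deriv u) hWy.2
      (hu_cont.mono (Icc_subset_Icc hx0.le le_rfl))
      (fun t ht => hderivAt t (lt_trans hx0 ht.1) ht.2)
    have hcbound : deriv u c < -(ε⁻¹ + 1) :=
      hl'sub ⟨lt_of_le_of_lt (le_max_left l' b) (lt_trans hWy.1 hc.1), hc.2⟩
    have hεi : (0:ℝ) < ε⁻¹ := inv_pos.2 hε
    have hcneg : deriv u c < 0 := by linarith
    have hc0 : deriv u c ≠ 0 := ne_of_lt hcneg
    have hax : a - x ≠ 0 := sub_ne_zero.2 (ne_of_gt hWy.2)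
    have hxa : x - a ≠ 0 := sub_ne_zero.2 (ne_of_lt hWy.2)
    have h1 : y = deriv u c * (x - a) := by
      rw [hc_eq, hu_a, hux]
      field_simp
      ring
    have hkey : (x - a) / y = (deriv u c)⁻¹ := by
      rw [h1, mul_comm, ← div_div, div_self hxa, one_div]
    rw [hkey]
    simp only [dist_zero_right, Real.norm_eq_abs, abs_inv]
    have habs : ε⁻¹ + 1 < |deriv u c| := by
      rw [abs_of_neg hcneg]
      linarith
    have hinv : |deriv u c|⁻¹ < (ε⁻¹ + 1)⁻¹ := by
      apply inv_strictAnti₀ (by positivity) habs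
    calc |deriv u c|⁻¹ < (ε⁻¹ + 1)⁻¹ := hinv
      _ < ε⁻¹⁻¹ := by
          apply inv_strictAnti₀ (by positivity) (by linarith)
      _ = ε := inv_inv ε
  -- `W` has derivative `0` at `0` within `Ici 0`
  have hA : HasDerivWithinAt W 0 (Ici 0) 0 := by
    rw [hasDerivWithinAt_iff_tendsto_slope]
    have hset : Ici (0:ℝ) \ {0} = Ioi 0 := Ici_sdiff_left
    rw [hset]
    apply hslope.congr
    intro y
    simp [slope_def_field, hWa]
  have hg0 : derivWithin W (Ici 0) 0 = 0 :=
    hA.derivWithin (uniqueDiffOn_Ici 0 0 self_mem_Ici)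
  -- value of `derivWithin` at interior points
  have hgy : ∀ y ∈ Ioo 0 (u b), derivWithin W (Ici 0) y = (deriv u (W y))⁻¹ := by
    intro y hy
    rw [derivWithin_of_mem_nhds (Ici_mem_nhds hy.1)]
    exact (hWderiv y hy).deriv
  -- the main limit
  have hB : Tendsto (fun y => derivWithin W (Ici 0) y / y) (𝓝[>] (0:ℝ)) (𝓝 (1 / L)) := by
    have htarget : Tendsto (fun y => (u (W y) * deriv u (W y))⁻¹) (𝓝[>] (0:ℝ)) (𝓝 L⁻¹) :=
      (huu'.comp hWtendsto).inv₀ (ne_of_lt hL)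
    rw [one_div]
    apply htarget.congr'
    filter_upwards [Ioo_mem_nhdsGT_of_mem (α := ℝ) ⟨le_rfl, hub_pos⟩] with y hy
    have hy' : y ∈ Icc 0 (u b) := ⟨hy.1.le, hy.2.le⟩
    rw [hgy y hy, hWright y hy', mul_inv, div_eq_mul_inv, mul_comm]
  -- second derivative
  have hC : HasDerivWithinAt (derivWithin W (Ici 0)) (1 / L) (Ici 0) 0 := by
    rw [hasDerivWithinAt_iff_tendsto_slope]
    rw [Ici_sdiff_left]
    apply hB.congr
    intro y
    simp [slope_def_field, hg0]
  have hD : (1:ℝ) / L < 0 := one_div_neg.2 hL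
  -- conclusion
  filter_upwards [Ioo_mem_nhdsGT_of_mem (show (0:ℝ) ∈ Ico 0 (a - b) from ⟨le_rfl, by linarith⟩)]
    with ε hε
  have hεa : a - ε ∈ Ioo b a := ⟨by linarith [hε.2], by linarith [hε.1]⟩
  have hsub : Icc (a - ε) a ⊆ Icc b a := Icc_subset_Icc hεa.1.le le_rfl
  have huε : u (a - ε) ≤ u b := (hanti ⟨le_rfl, hba.le⟩ ⟨hεa.1.le, hεa.2.le⟩ hεa.1).le
  refine ⟨by linarith [hε.2, hb0], hinj.mono hsub, himg (a - ε) hεa.1.le hεa.2, W, ?_, ?_,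
    hA, hB, hC, hD⟩
  · intro x hx
    exact hWleft x (hsub hx)
  · intro y hy
    exact hWright y ⟨hy.1, le_trans hy.2 huε⟩
end

section
/- Let 0 < a and let u : [0,a] → ℝ be continuous, C² on [0,a), positive on [0,a) with u(a) = 0. Suppose for some ε > 0 the restriction u : [a-ε,a] → [0,u(a-ε)] is invertible with inverse w ∈ C²([0,u(a-ε)]) satisfying w'(0) = 0, w''(0) < 0, and w'(y) < 0 for y > 0. Then the function v := u²/2 extends to a C¹ function on [0,a] with v'(a) = 1/w''(0) < 0, and v(x)·v''(x) → 0 as x → a. -/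
open Set Filter Topology

/-- Lemma A.1 (ii) ⟹ (iii): if `u` has near `a` a C² inverse `w` with `w'(0) = 0`,
`w''(0) < 0` and `w' < 0` for `y > 0`, then `v := u²/2` is C¹ on `[0,a]` with
`v'(a) = 1/w''(0) < 0` and `v v'' → 0` as `x → a`. -/
theorem stmt1 (a : ℝ) (ha : 0 < a) (u : ℝ → ℝ)
    (hu_cont : ContinuousOn u (Icc 0 a))
    (hu_C2 : ContDiffOn ℝ 2 u (Ico 0 a))
    (hu_pos : ∀ x ∈ Ico (0:ℝ) a, 0 < u x)
    (hu_a : u a = 0)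
    (ε : ℝ) (hε : 0 < ε) (hεa : ε < a)
    (w : ℝ → ℝ)
    (hw_inv : ∀ x ∈ Icc (a - ε) a, w (u x) = x)
    (hw_inv' : ∀ y ∈ Icc (0:ℝ) (u (a - ε)), u (w y) = y)
    (hw_C2 : ContDiffOn ℝ 2 w (Icc 0 (u (a - ε))))
    (hw'0 : derivWithin w (Icc 0 (u (a - ε))) 0 = 0)
    (hw''0 : iteratedDerivWithin 2 w (Icc 0 (u (a - ε))) 0 < 0)
    (hw'neg : ∀ y ∈ Ioc (0:ℝ) (u (a - ε)), derivWithin w (Icc 0 (u (a - ε))) y < 0) :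
    ContDiffOn ℝ 1 (fun x => u x ^ 2 / 2) (Icc 0 a) ∧
    derivWithin (fun x => u x ^ 2 / 2) (Icc 0 a) a
      = 1 / iteratedDerivWithin 2 w (Icc 0 (u (a - ε))) 0 ∧
    derivWithin (fun x => u x ^ 2 / 2) (Icc 0 a) a < 0 ∧
    Tendsto (fun x => (u x ^ 2 / 2) * deriv (deriv (fun y => u y ^ 2 / 2)) x)
      (𝓝[<] a) (𝓝 0) := by
  have haε0 : (0:ℝ) < a - ε := by linarith
  have haεa : a - ε ∈ Ico (0:ℝ) a := ⟨haε0.le, by linarith⟩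
  set M := u (a - ε) with hMdef
  have hM : 0 < M := hu_pos _ haεa
  set s : Set ℝ := Icc (0:ℝ) M with hsdef
  have hsUD : UniqueDiffOn ℝ s := uniqueDiffOn_Icc hM
  set W : ℝ → ℝ := derivWithin w s with hWdef
  set W2 : ℝ → ℝ := derivWithin W s with hW2def
  set c := iteratedDerivWithin 2 w s 0 with hcdef
  have hc : c < 0 := hw''0
  have hcne : c ≠ 0 := hc.ne
  have h0s : (0:ℝ) ∈ s := left_mem_Icc.2 hM.le
  have hW0 : W 0 = 0 := hw'0
  -- second derivative at 0
  have hW2_0 : W2 0 = c := by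
    have h1 : ∀ y ∈ s, iteratedDerivWithin 1 w s y = W y := fun y hy =>
      congrFun iteratedDerivWithin_one y
    rw [hcdef, iteratedDerivWithin_succ, hW2def]
    exact (derivWithin_congr h1 (h1 0 h0s)).symm
  -- W is C¹ on s
  have two_ne : ((2:ℕ):WithTop ℕ∞) = (1:WithTop ℕ∞) + 1 := by norm_num
  have hWC1 : ContDiffOn ℝ 1 W s := hw_C2.derivWithin hsUD (by norm_num)
  have hWcont : ContinuousOn W s := hWC1.continuousOn
  have hW2cont : ContinuousOn W2 s := hWC1.continuousOn_derivWithin hsUD le_rfl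
  have hWdiff : DifferentiableOn ℝ W s := hWC1.differentiableOn one_ne_zero
  -- slope limit : W y / y → c
  have hWslope : Tendsto (fun y => W y / y) (𝓝[Ioc 0 M] 0) (𝓝 c) := by
    have h1 : HasDerivWithinAt W c s 0 := by
      have := (hWdiff 0 h0s).hasDerivWithinAt
      rwa [show derivWithin W s 0 = c from hW2_0] at this
    have h2 := hasDerivWithinAt_iff_tendsto_slope.1 h1
    rw [show s \ {(0:ℝ)} = Ioc 0 M by rw [hsdef]; exact Icc_diff_left] at h2
    refine h2.congr fun y => ?_
    simp [slope_def_field, hW0]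
  -- inverse slope limit : y / W y → 1/c
  have hLinv : Tendsto (fun y => y / W y) (𝓝[Ioc 0 M] 0) (𝓝 (1 / c)) := by
    have := hWslope.inv₀ hcne
    simpa [inv_div, one_div] using this
  -- u is strictly decreasing on [a-ε, a]
  have hIccsub : Icc (a - ε) a ⊆ Icc 0 a := Icc_subset_Icc haε0.le le_rfl
  have hinj : InjOn u (Icc (a - ε) a) := fun x hx y hy h => by
    have h1 := hw_inv x hx
    have h2 := hw_inv y hy
    rw [h] at h1; rw [h1] at h2; exact h2
  have hanti : StrictAntiOn u (Icc (a - ε) a) :=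
    ContinuousOn.strictAntiOn_of_injOn_Icc (by linarith)
      (by rw [hu_a]; exact hM.le) (hu_cont.mono hIccsub) hinj
  have hmem : ∀ x ∈ Ioo (a - ε) a, u x ∈ Ioo 0 M := by
    intro x hx
    refine ⟨hu_pos x ⟨by linarith [hx.1], hx.2⟩, ?_⟩
    exact hanti ⟨le_rfl, by linarith⟩ ⟨hx.1.le, hx.2.le⟩ hx.1
  -- u tends to 0 within Ioc 0 M
  have hu_t0 : Tendsto u (𝓝[<] a) (𝓝 0) := by
    have h1 : ContinuousWithinAt u (Icc 0 a) a := hu_cont a (right_mem_Icc.2 ha.le)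
    have h2 : Tendsto u (𝓝[Icc 0 a] a) (𝓝 0) := by
      have := h1.tendsto
      rwa [hu_a] at this
    have h3 : 𝓝[<] a ≤ 𝓝[Icc 0 a] a := by
      rw [← nhdsWithin_Ioo_eq_nhdsLT (show a - ε < a by linarith)]
      exact nhdsWithin_mono a (Ioo_subset_Icc_self.trans hIccsub)
    exact h2.mono_left h3
  have hu_tendsto : Tendsto u (𝓝[<] a) (𝓝[Ioc 0 M] 0) := by
    rw [tendsto_nhdsWithin_iff]
    refine ⟨hu_t0, ?_⟩
    filter_upwards [Ioo_mem_nhdsLT (show a - ε < a by linarith)] with x hx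
    exact Ioo_subset_Ioc_self (hmem x hx)
  -- derivative facts on the open interval
  have hIoosub : Ioo (a - ε) a ⊆ Ioo 0 a := Ioo_subset_Ioo (by linarith) le_rfl
  have hu_C2' : ContDiffOn ℝ 2 u (Ioo 0 a) := hu_C2.mono Ioo_subset_Ico_self
  have hud : DifferentiableOn ℝ u (Ioo 0 a) := hu_C2'.differentiableOn (by norm_num)
  have hu_hd : ∀ x ∈ Ioo (0:ℝ) a, HasDerivAt u (deriv u x) x := fun x hx =>
    ((hud x hx).differentiableAt (isOpen_Ioo.mem_nhds hx)).hasDerivAt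
  have hud2 : DifferentiableOn ℝ (deriv u) (Ioo 0 a) :=
    (hu_C2'.deriv_of_isOpen (m := 1) isOpen_Ioo (by norm_num)).differentiableOn one_ne_zero
  have hu_hd2 : ∀ x ∈ Ioo (0:ℝ) a, HasDerivAt (deriv u) (deriv (deriv u) x) x := fun x hx =>
    ((hud2 x hx).differentiableAt (isOpen_Ioo.mem_nhds hx)).hasDerivAt
  -- v and its derivative on the open interval
  have hv_hd : ∀ x ∈ Ioo (0:ℝ) a,
      HasDerivAt (fun z => u z ^ 2 / 2) (u x * deriv u x) x := by
    intro x hx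
    have := ((hu_hd x hx).pow 2).div_const 2
    refine this.congr_deriv ?_
    push_cast
    ring
  have hderiv_v : ∀ x ∈ Ioo (0:ℝ) a,
      deriv (fun z => u z ^ 2 / 2) x = u x * deriv u x := fun x hx => (hv_hd x hx).deriv
  -- W at interior points
  have hW_hd : ∀ y ∈ Ioo (0:ℝ) M, HasDerivAt w (W y) y := by
    intro y hy
    have hyn : s ∈ 𝓝 y := Icc_mem_nhds hy.1 hy.2
    have h1 := ((hw_C2.differentiableOn (by norm_num) y (Ioo_subset_Icc_self hy)).differentiableAt
      hyn).hasDerivAt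
    rwa [show deriv w y = W y from (derivWithin_of_mem_nhds hyn).symm] at h1
  have hW2_hd : ∀ y ∈ Ioo (0:ℝ) M, HasDerivAt W (W2 y) y := by
    intro y hy
    have hyn : s ∈ 𝓝 y := Icc_mem_nhds hy.1 hy.2
    have h1 := ((hWdiff y (Ioo_subset_Icc_self hy)).differentiableAt hyn).hasDerivAt
    rwa [show deriv W y = W2 y from (derivWithin_of_mem_nhds hyn).symm] at h1
  -- chain rule : W (u x) * u' x = 1
  have key1 : ∀ x ∈ Ioo (a - ε) a, W (u x) * deriv u x = 1 := by
    intro x hx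
    have hcomp : HasDerivAt (w ∘ u) (W (u x) * deriv u x) x :=
      (hW_hd (u x) (hmem x hx)).comp x (hu_hd x (hIoosub hx))
    have hid : HasDerivAt (w ∘ u) 1 x := by
      refine (hasDerivAt_id x).congr_of_eventuallyEq ?_
      filter_upwards [isOpen_Ioo.mem_nhds hx] with z hz
      exact hw_inv z (Ioo_subset_Icc_self hz)
    exact hcomp.unique hid
  have hWne : ∀ y ∈ Ioc (0:ℝ) M, W y ≠ 0 := fun y hy => (hw'neg y hy).ne
  -- v' tends to 1/c
  have hL1 : Tendsto (fun x => deriv (fun z => u z ^ 2 / 2) x) (𝓝[<] a) (𝓝 (1 / c)) := by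
    have h1 : Tendsto (fun x => u x / W (u x)) (𝓝[<] a) (𝓝 (1 / c)) :=
      hLinv.comp hu_tendsto
    refine h1.congr' ?_
    filter_upwards [Ioo_mem_nhdsLT (show a - ε < a by linarith)] with x hx
    have hne : W (u x) ≠ 0 := hWne (u x) (Ioo_subset_Ioc_self (hmem x hx))
    rw [hderiv_v x (hIoosub hx)]
    field_simp
    linear_combination (-(u x)) * key1 x hx
  -- the endpoint derivative
  have hsUD' : UniqueDiffOn ℝ (Icc (0:ℝ) a) := uniqueDiffOn_Icc ha
  have hvC2 : ContDiffOn ℝ 2 (fun z => u z ^ 2 / 2) (Ico 0 a) := (hu_C2.pow 2).div_const 2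
  have hv_cont : ContinuousOn (fun z => u z ^ 2 / 2) (Icc 0 a) := (hu_cont.pow 2).div_const 2
  have hIcoNhds : ∀ x ∈ Ico (0:ℝ) a, Ico (0:ℝ) a ∈ 𝓝[Icc 0 a] x := by
    intro x hx
    have hss : Icc (0:ℝ) a ∩ Iio a = Ico 0 a := by
      ext z
      simp only [mem_inter_iff, mem_Icc, mem_Iio, mem_Ico]
      constructor
      · rintro ⟨⟨h1, _⟩, h3⟩; exact ⟨h1, h3⟩
      · rintro ⟨h1, h2⟩; exact ⟨⟨h1, h2.le⟩, h2⟩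
    rw [← hss]
    exact inter_mem_nhdsWithin _ (Iio_mem_nhds hx.2)
  have hvA : HasDerivWithinAt (fun z => u z ^ 2 / 2) (1 / c) (Icc 0 a) a := by
    refine (hasDerivWithinAt_Iic_of_tendsto_deriv (s := Ioo (a - ε) a) ?_ ?_ ?_ hL1).mono
      Icc_subset_Iic_self
    · intro z hz
      exact ((hv_hd z (hIoosub hz)).differentiableAt).differentiableWithinAt
    · exact (hv_cont a (right_mem_Icc.2 ha.le)).mono
        (fun z hz => hIccsub (Ioo_subset_Icc_self hz))
    · exact Ioo_mem_nhdsLT (show a - ε < a by linarith)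
  have hderivWithin_a : derivWithin (fun z => u z ^ 2 / 2) (Icc 0 a) a = 1 / c :=
    hvA.derivWithin (hsUD' a (right_mem_Icc.2 ha.le))
  have hvdiff : DifferentiableOn ℝ (fun z => u z ^ 2 / 2) (Icc 0 a) := by
    intro x hx
    rcases eq_or_lt_of_le hx.2 with h | h
    · rw [h]; exact hvA.differentiableWithinAt
    · exact (hvC2.differentiableOn (by norm_num) x ⟨hx.1, h⟩).mono_of_mem_nhdsWithin
        (hIcoNhds x ⟨hx.1, h⟩)
  have hDW_eq : ∀ x ∈ Ioo (0:ℝ) a, derivWithin (fun z => u z ^ 2 / 2) (Icc 0 a) x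
      = deriv (fun z => u z ^ 2 / 2) x := fun x hx =>
    derivWithin_of_mem_nhds (Icc_mem_nhds hx.1 hx.2)
  have hDcont : ContinuousOn (derivWithin (fun z => u z ^ 2 / 2) (Icc 0 a)) (Icc 0 a) := by
    intro x hx
    rcases eq_or_lt_of_le hx.2 with h | h
    · subst h
      refine (continuousWithinAt_diff_singleton (y := x)).1 ?_
      rw [show Icc (0:ℝ) x \ {x} = Ico 0 x from Icc_sdiff_right]
      have hle : 𝓝[Ico (0:ℝ) x] x ≤ 𝓝[<] x := nhdsWithin_mono x (fun z hz => hz.2)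
      have ht : Tendsto (derivWithin (fun z => u z ^ 2 / 2) (Icc 0 x)) (𝓝[Ico 0 x] x)
          (𝓝 (1 / c)) := by
        refine (hL1.mono_left hle).congr' ?_
        filter_upwards [hle (Ioo_mem_nhdsLT ha)] with z hz
        exact (hDW_eq z hz).symm
      have : Tendsto (derivWithin (fun z => u z ^ 2 / 2) (Icc 0 x)) (𝓝[Ico 0 x] x)
          (𝓝 (derivWithin (fun z => u z ^ 2 / 2) (Icc 0 x) x)) := by
        rw [hderivWithin_a]; exact ht
      exact this
    · have hx' : x ∈ Ico (0:ℝ) a := ⟨hx.1, h⟩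
      have hsetz : ∀ z : ℝ, z < a → derivWithin (fun q => u q ^ 2 / 2) (Icc 0 a) z
          = derivWithin (fun q => u q ^ 2 / 2) (Ico 0 a) z := by
        intro z hz
        apply derivWithin_congr_set
        filter_upwards [Iio_mem_nhds hz] with p hp
        have hpa : p < a := hp
        have : p ∈ Icc 0 a ↔ p ∈ Ico 0 a := by
          simp [mem_Icc, mem_Ico, hpa, hpa.le]
        exact propext this
      have hcont' : ContinuousOn (derivWithin (fun z => u z ^ 2 / 2) (Ico 0 a)) (Ico 0 a) :=
        hvC2.continuousOn_derivWithin (uniqueDiffOn_Ico 0 a) (by norm_num)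
      have h1 : ContinuousWithinAt (derivWithin (fun z => u z ^ 2 / 2) (Ico 0 a)) (Icc 0 a) x :=
        (hcont' x hx').mono_of_mem_nhdsWithin (hIcoNhds x hx')
      refine h1.congr_of_eventuallyEq ?_ (hsetz x h)
      filter_upwards [mem_nhdsWithin_of_mem_nhds (Iio_mem_nhds h)] with z hz
      exact hsetz z hz
  have hfinal1 : ContDiffOn ℝ 1 (fun z => u z ^ 2 / 2) (Icc 0 a) := by
    rw [show (1 : WithTop ℕ∞) = 0 + 1 from rfl, contDiffOn_succ_iff_derivWithin hsUD']
    refine ⟨hvdiff, by simp, ?_⟩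
    rw [contDiffOn_zero]
    exact hDcont
  -- second derivative identity from the inverse function
  have key3 : ∀ x ∈ Ioo (a - ε) a,
      W2 (u x) * deriv u x * deriv u x + W (u x) * deriv (deriv u) x = 0 := by
    intro x hx
    have hy := hmem x hx
    have hprod : HasDerivAt (fun z => W (u z) * deriv u z)
        (W2 (u x) * deriv u x * deriv u x + W (u x) * deriv (deriv u) x) x := by
      have h1 : HasDerivAt (fun z => W (u z)) (W2 (u x) * deriv u x) x :=
        (hW2_hd (u x) hy).comp x (hu_hd x (hIoosub hx))
      exact h1.mul (hu_hd2 x (hIoosub hx))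
    have hone : HasDerivAt (fun z => W (u z) * deriv u z) 0 x := by
      refine (hasDerivAt_const x (1:ℝ)).congr_of_eventuallyEq ?_
      filter_upwards [isOpen_Ioo.mem_nhds hx] with z hz
      exact key1 z hz
    exact hprod.unique hone
  have key2 : ∀ x ∈ Ioo (0:ℝ) a,
      deriv (deriv (fun z => u z ^ 2 / 2)) x
        = deriv u x * deriv u x + u x * deriv (deriv u) x := by
    intro x hx
    have heq : deriv (fun z => u z ^ 2 / 2) =ᶠ[𝓝 x] fun z => u z * deriv u z := by
      filter_upwards [isOpen_Ioo.mem_nhds hx] with z hz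
      exact hderiv_v z hz
    rw [heq.deriv_eq]
    exact ((hu_hd x hx).mul (hu_hd2 x hx)).deriv
  -- the limit of v * v''
  have hW2t : Tendsto W2 (𝓝[Ioc 0 M] 0) (𝓝 c) := by
    have h1 := (hW2cont 0 h0s).tendsto
    rw [hW2_0] at h1
    exact h1.mono_left (nhdsWithin_mono 0 Ioc_subset_Icc_self)
  have hzero : (1/2 : ℝ) * ((1/c)^2 - (1/c)^3 * c) = 0 := by
    field_simp
    ring
  have hFt : Tendsto (fun y => (1/2 : ℝ) * ((y / W y)^2 - (y / W y)^3 * W2 y))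
      (𝓝[Ioc 0 M] 0) (𝓝 0) := by
    have h1 : Tendsto (fun y => (1/2 : ℝ) * ((y / W y)^2 - (y / W y)^3 * W2 y))
        (𝓝[Ioc 0 M] 0) (𝓝 ((1/2 : ℝ) * ((1/c)^2 - (1/c)^3 * c))) :=
      tendsto_const_nhds.mul (((hLinv.pow 2).sub ((hLinv.pow 3).mul hW2t)))
    rwa [hzero] at h1
  refine ⟨hfinal1, hderivWithin_a, by rw [hderivWithin_a]; exact one_div_neg.2 hc, ?_⟩
  have hcomp : Tendsto
      (fun x => (1/2 : ℝ) * ((u x / W (u x))^2 - (u x / W (u x))^3 * W2 (u x)))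
      (𝓝[<] a) (𝓝 0) := hFt.comp hu_tendsto
  refine Filter.Tendsto.congr' ?_ hcomp
  filter_upwards [Ioo_mem_nhdsLT (show a - ε < a by linarith)] with x hx
  have hx' := hIoosub hx
  have hy := hmem x hx
  have hA : W (u x) ≠ 0 := hWne (u x) (Ioo_subset_Ioc_self hy)
  have k1 := key1 x hx
  have k3 := key3 x hx
  rw [key2 x hx']
  have hd : deriv u x = (W (u x))⁻¹ := by
    field_simp
    linear_combination k1
  have hdd : deriv (deriv u) x = -(W2 (u x)) / (W (u x))^3 := by
    rw [hd] at k3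
    field_simp at k3 ⊢
    linear_combination k3
  rw [hd, hdd]
  field_simp
  ring
end

section
/- Let 0 < a and let u : [0,a] → ℝ be continuous, C² on [0,a), positive on [0,a) with u(a) = 0. Suppose v := u²/2 satisfies v ∈ C¹([0,a]), v'(a) < 0, and v(x)v''(x) → 0 as x → a. Then u'(x) → -∞ as x → a, lim_{x→a} u(x)u'(x) = v'(a) < 0, and lim_{x→a} u''(x)/u'(x)³ = -1/v'(a). -/
/-!
Near `a` the product `u u' = v'` tends to `v'(a) < 0` while `u ↓ 0`, so `u' → -∞`.
Writing `v'' = u'² + u u''` gives `u''/u'³ = 2 v v''/(u u')³ - 1/(u u')`, and the first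
term vanishes in the limit because `v v'' → 0`.
-/

open Set Filter Topology

section HalfSquare

variable {u : ℝ → ℝ} {x : ℝ}

theorem deriv_sq_div_two (hu : DifferentiableAt ℝ u x) :
    deriv (fun y => u y ^ 2 / 2) x = u x * deriv u x := by
  rw [((hu.hasDerivAt.fun_pow 2).div_const 2).deriv]
  push_cast
  ring

theorem deriv_deriv_sq_div_two {s : Set ℝ} (hs : IsOpen s) (hu : ContDiffOn ℝ 2 u s)
    (hx : x ∈ s) :
    deriv (deriv fun y => u y ^ 2 / 2) x = deriv u x ^ 2 + u x * deriv (deriv u) x := by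
  have hdiff : ∀ y ∈ s, DifferentiableAt ℝ u y := fun y hy =>
    (hu.contDiffAt (hs.mem_nhds hy)).differentiableAt two_ne_zero
  have hdiff' : DifferentiableAt ℝ (deriv u) x :=
    ((hu.deriv_of_isOpen hs (by norm_num)).contDiffAt (hs.mem_nhds hx)).differentiableAt
      one_ne_zero
  have hderiv : deriv (fun y => u y ^ 2 / 2) =ᶠ[𝓝 x] fun y => u y * deriv u y :=
    eventuallyEq_of_mem (hs.mem_nhds hx) fun y hy => deriv_sq_div_two (hdiff y hy)
  rw [hderiv.deriv_eq, ((hdiff x hx).hasDerivAt.fun_mul hdiff'.hasDerivAt).deriv]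
  ring

end HalfSquare

section Limits

variable {α : Type*} {l : Filter α} {c : ℝ}

theorem Filter.Tendsto.atBot_of_mul_tendsto_neg {f g : α → ℝ} (hc : c < 0)
    (hf : Tendsto f l (𝓝[>] 0)) (hfg : Tendsto (fun x => f x * g x) l (𝓝 c)) :
    Tendsto g l atBot := by
  refine (hfg.neg_mul_atTop hc hf.inv_tendsto_nhdsGT_zero).congr' ?_
  filter_upwards [hf self_mem_nhdsWithin] with x (hx : 0 < f x)
  simp [mul_comm (f x), hx.ne']

theorem div_cube_eq_of_half_sq {u u' u'' : ℝ} (hu : u ≠ 0) (hu' : u' ≠ 0) :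
    u'' / u' ^ 3 = 2 * (u ^ 2 / 2 * (u' ^ 2 + u * u'')) / (u * u') ^ 3 - 1 / (u * u') := by
  field_simp
  ring

theorem tendsto_div_cube_of_half_sq {u u' u'' : α → ℝ} (hc : c ≠ 0)
    (hprod : Tendsto (fun x => u x * u' x) l (𝓝 c))
    (hvv'' : Tendsto (fun x => u x ^ 2 / 2 * (u' x ^ 2 + u x * u'' x)) l (𝓝 0)) :
    Tendsto (fun x => u'' x / u' x ^ 3) l (𝓝 (-1 / c)) := by
  have hlim : Tendsto (fun x => 2 * (u x ^ 2 / 2 * (u' x ^ 2 + u x * u'' x)) / (u x * u' x) ^ 3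
      - 1 / (u x * u' x)) l (𝓝 (2 * 0 / c ^ 3 - 1 / c)) :=
    ((tendsto_const_nhds.mul hvv'').div (hprod.pow 3) (pow_ne_zero 3 hc)).sub
      (tendsto_const_nhds.div hprod hc)
  rw [mul_zero, zero_div, zero_sub, ← neg_div] at hlim
  refine hlim.congr' ?_
  filter_upwards [hprod.eventually_ne hc] with x hx
  exact (div_cube_eq_of_half_sq (left_ne_zero_of_mul hx) (right_ne_zero_of_mul hx)).symm

end Limits

/-- Lemma A.1 (iii) ⟹ (i): if `v := u²/2` is C¹ on `[0,a]` with `v'(a) < 0` and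
`v v'' → 0` at `a`, then `u' → -∞` at `a`, `u u' → v'(a) < 0`, and
`u''/u'³ → -1/v'(a)` as `x → a`. -/
theorem stmt2 (a : ℝ) (ha : 0 < a) (u : ℝ → ℝ)
    (hu_cont : ContinuousOn u (Icc 0 a))
    (hu_C2 : ContDiffOn ℝ 2 u (Ico 0 a))
    (hu_pos : ∀ x ∈ Ico (0:ℝ) a, 0 < u x)
    (hu_a : u a = 0)
    (hv_C1 : ContDiffOn ℝ 1 (fun x => u x ^ 2 / 2) (Icc 0 a))
    (hv'a : derivWithin (fun x => u x ^ 2 / 2) (Icc 0 a) a < 0)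
    (hvv'' : Tendsto (fun x => (u x ^ 2 / 2) * deriv (deriv (fun y => u y ^ 2 / 2)) x)
      (𝓝[<] a) (𝓝 0)) :
    Tendsto (deriv u) (𝓝[<] a) atBot ∧
    Tendsto (fun x => u x * deriv u x) (𝓝[<] a)
      (𝓝 (derivWithin (fun x => u x ^ 2 / 2) (Icc 0 a) a)) ∧
    Tendsto (fun x => deriv (deriv u) x / (deriv u x) ^ 3) (𝓝[<] a)
      (𝓝 (-1 / derivWithin (fun x => u x ^ 2 / 2) (Icc 0 a) a)) := by
  have haI : a ∈ Icc 0 a := ⟨ha.le, le_rfl⟩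
  have hIoo : ∀ᶠ x in 𝓝[<] a, x ∈ Ioo 0 a := Ioo_mem_nhdsLT_of_mem ⟨ha, le_rfl⟩
  have hle : 𝓝[<] a ≤ 𝓝[Icc 0 a] a :=
    (nhdsWithin_Icc_eq_nhdsLE ha).symm ▸ nhdsWithin_mono a Iio_subset_Iic_self
  have hC2 : ContDiffOn ℝ 2 u (Ioo 0 a) := hu_C2.mono Ioo_subset_Ico_self
  have hprod : Tendsto (fun x => u x * deriv u x) (𝓝[<] a)
      (𝓝 (derivWithin (fun x => u x ^ 2 / 2) (Icc 0 a) a)) := by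
    refine ((hv_C1.continuousOn_derivWithin (uniqueDiffOn_Icc ha) le_rfl a haI).mono_left
      hle).congr' (hIoo.mono fun x hx => ?_)
    rw [derivWithin_of_mem_nhds (Icc_mem_nhds hx.1 hx.2), deriv_sq_div_two
      ((hC2.contDiffAt (isOpen_Ioo.mem_nhds hx)).differentiableAt two_ne_zero)]
  have hu_zero : Tendsto u (𝓝[<] a) (𝓝[>] 0) := by
    refine tendsto_nhdsWithin_iff.2 ⟨?_, hIoo.mono fun x hx => hu_pos x ⟨hx.1.le, hx.2⟩⟩
    simpa [hu_a] using (hu_cont a haI).mono_left hle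
  refine ⟨hu_zero.atBot_of_mul_tendsto_neg hv'a hprod, hprod,
    tendsto_div_cube_of_half_sq hv'a.ne hprod (hvv''.congr' ?_)⟩
  filter_upwards [hIoo] with x hx
  rw [deriv_deriv_sq_div_two isOpen_Ioo hC2 hx]
end

section
/- Let α ∈ (0,1). There exist a 2π-periodic function a of Hölder class C^α and 2π-periodic Lipschitz functions b_n, b with b_n → b in the W^{1,∞} norm such that the Hölder seminorm [a∘b_n - a∘b]_α ≥ 2 for all n ≥ 1; hence the composition map b ↦ a∘b from W^{1,∞}(𝕊) to C^α(𝕊) is not continuous at b. Concretely one may take a the 2π-periodic extension of x ↦ |x|^α φ(x), b the extension of x ↦ x φ(x), and b_n the extension of x ↦ (x+1/n) φ(x), where φ ∈ C_0^∞(ℝ) equals 1 on [-1,1] and 0 outside [-2,2]. -/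
open Set Filter Topology

/-
Let `d x = ‖(x : AddCircle (2π))‖` be the distance from `x` to `2πℤ`. It is `1`-Lipschitz and
`t ↦ t ^ α` is `α`-Hölder on `[0, ∞)`, so `a = d ^ α` is `α`-Hölder; `b = -d` and
`bₙ = b + 1/n` are Lipschitz and `bₙ - b` is constant, so `bₙ → b` in `W^{1,∞}`.
At `x = 0`, `y = -1/n` the second difference of `a ∘ bₙ - a ∘ b` is
`a (1/n) - 2 a 0 + a (-1/n) = 2 (1/n) ^ α = 2 |x - y| ^ α`: the shift by `1/n` moves the
cusp of `a` at `0` from one sampling point to the other.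
-/

namespace Real

lemma rpow_sub_rpow_le_rpow_sub {p x y : ℝ} (hy : 0 ≤ y) (hyx : y ≤ x) (hp : 0 ≤ p)
    (hp1 : p ≤ 1) : x ^ p - y ^ p ≤ (x - y) ^ p := by
  have := rpow_add_le_add_rpow (sub_nonneg.2 hyx) hy hp hp1
  rw [sub_add_cancel] at this
  linarith

lemma abs_rpow_sub_rpow_le {p x y : ℝ} (hx : 0 ≤ x) (hy : 0 ≤ y) (hp : 0 ≤ p)
    (hp1 : p ≤ 1) : |x ^ p - y ^ p| ≤ |x - y| ^ p := by
  wlog hyx : y ≤ x generalizing x y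
  · rw [abs_sub_comm, abs_sub_comm x]
    exact this hy hx (le_of_not_ge hyx)
  rw [abs_of_nonneg (sub_nonneg.2 (rpow_le_rpow hy hyx hp)), abs_of_nonneg (sub_nonneg.2 hyx)]
  exact rpow_sub_rpow_le_rpow_sub hy hyx hp hp1

end Real

namespace AddCircle

variable {p : ℝ}

lemma abs_norm_coe_sub_norm_coe_le (x y : ℝ) :
    |‖(x : AddCircle p)‖ - ‖(y : AddCircle p)‖| ≤ |x - y| :=
  calc _ ≤ ‖((x - y : ℝ) : AddCircle p)‖ := by
        rw [coe_sub]; exact abs_norm_sub_norm_le _ _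
    _ ≤ |x - y| := QuotientAddGroup.norm_mk_le_norm

lemma lipschitzWith_norm_coe : LipschitzWith 1 fun x : ℝ => ‖(x : AddCircle p)‖ :=
  LipschitzWith.of_dist_le_mul fun x y => by
    simpa [Real.dist_eq] using abs_norm_coe_sub_norm_coe_le x y

lemma abs_norm_coe_rpow_sub_le {α : ℝ} (hα0 : 0 ≤ α) (hα1 : α ≤ 1) (x y : ℝ) :
    |‖(x : AddCircle p)‖ ^ α - ‖(y : AddCircle p)‖ ^ α| ≤ |x - y| ^ α :=
  (Real.abs_rpow_sub_rpow_le (norm_nonneg _) (norm_nonneg _) hα0 hα1).trans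
    (Real.rpow_le_rpow (abs_nonneg _) (abs_norm_coe_sub_norm_coe_le x y) hα0)

lemma norm_coe_eq_of_nonneg_of_le {x : ℝ} (hx0 : 0 ≤ x) (hxp : x ≤ |p| / 2) :
    ‖(x : AddCircle p)‖ = x := by
  rcases eq_or_ne p 0 with rfl | hp
  · simp [abs_of_nonneg hx0]
  · rw [(norm_coe_eq_abs_iff p hp).2 (by rwa [abs_of_nonneg hx0]), abs_of_nonneg hx0]

end AddCircle

/-- Lemma A.2 (i): for `α ∈ (0,1)` there are a `2π`-periodic `α`-Hölder function `a`
and `2π`-periodic Lipschitz functions `b_n → b` in `W^{1,∞}` such that the Hölder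
seminorm of `a∘b_n - a∘b` is at least `2` for every `n ≥ 1`; in particular the
composition map `b ↦ a∘b` from `W^{1,∞}(𝕊)` to `C^α(𝕊)` is not continuous at `b`. -/
theorem stmt3 (α : ℝ) (hα : α ∈ Ioo (0:ℝ) 1) :
    ∃ (a b : ℝ → ℝ) (bn : ℕ → ℝ → ℝ) (C : ℝ),
      Function.Periodic a (2 * Real.pi) ∧
      (∀ x y : ℝ, |a x - a y| ≤ C * |x - y| ^ α) ∧
      Function.Periodic b (2 * Real.pi) ∧ (∃ L : NNReal, LipschitzWith L b) ∧
      (∀ n, Function.Periodic (bn n) (2 * Real.pi) ∧ ∃ L : NNReal, LipschitzWith L (bn n)) ∧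
      (∀ δ > (0:ℝ), ∃ N : ℕ, ∀ n ≥ N,
        (∀ x, |bn n x - b x| ≤ δ) ∧
        LipschitzWith δ.toNNReal (fun x => bn n x - b x)) ∧
      (∀ n ≥ 1, ∃ x y : ℝ, x ≠ y ∧
        2 * |x - y| ^ α ≤ |(a (bn n x) - a (b x)) - (a (bn n y) - a (b y))|) := by
  obtain ⟨hα0, hα1⟩ := hα
  let d : ℝ → ℝ := fun x => ‖(x : AddCircle (2 * Real.pi))‖
  have hd : LipschitzWith 1 d := AddCircle.lipschitzWith_norm_coe
  refine ⟨fun x => d x ^ α, fun x => -d x, fun n x => -d x + (n : ℝ)⁻¹, 1, fun x => by simp [d],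
    fun x y => by simpa using AddCircle.abs_norm_coe_rpow_sub_le hα0.le hα1.le x y,
    fun x => by simp [d], ⟨1, hd.neg⟩,
    fun n => ⟨fun x => by simp [d], ⟨1, by simpa using hd.neg.add (.const (n : ℝ)⁻¹)⟩⟩,
    fun δ hδ => ?_, fun n hn => ?_⟩
  · obtain ⟨N, hN⟩ := eventually_atTop.1 <|
      tendsto_inv_atTop_nhds_zero_nat.eventually (ge_mem_nhds hδ)
    refine ⟨N, fun n hn => ⟨fun x => by simpa using hN n hn, ?_⟩⟩
    simpa using (LipschitzWith.const (α := ℝ) (n : ℝ)⁻¹).weaken bot_le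
  · have hc0 : 0 < (n : ℝ)⁻¹ := by positivity
    have hcπ : (n : ℝ)⁻¹ ≤ |2 * Real.pi| / 2 := by
      rw [abs_of_pos Real.two_pi_pos, mul_div_cancel_left₀ _ two_ne_zero]
      exact (inv_le_one_of_one_le₀ (by exact_mod_cast hn)).trans (by linarith [Real.pi_gt_three])
    beta_reduce
    generalize (n : ℝ)⁻¹ = c at hc0 hcπ ⊢
    have hdc : d c = c := AddCircle.norm_coe_eq_of_nonneg_of_le hc0.le hcπ
    have hdnc : d (-c) = c := by simpa [d, AddCircle.coe_neg] using hdc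
    refine ⟨0, -c, by simpa using hc0.ne', ?_⟩
    simp only [sub_neg_eq_add, zero_add, abs_of_pos hc0, QuotientAddGroup.mk_zero, norm_zero,
      neg_zero, hdc, Real.zero_rpow hα0.ne', sub_zero, hdnc, neg_add_cancel, zero_sub, d]
    rw [← two_mul, abs_of_nonneg (by positivity)]
end

section
/- Let α ∈ (0,1), let a, a_m be 2π-periodic α-Hölder functions and b, b_n periodic Lipschitz functions. Then the following composition estimates hold: ‖a∘b_n - a_m∘b_n‖_α ≤ (1 + ‖b_n'‖_∞^α)‖a_m - a‖_α, and if a_m is C^{1,α} then ‖a_m∘b_n - a_m∘b‖_α ≤ ‖a_m‖_α‖b_n - b‖_∞^α + ‖a_m'‖_α‖b_n - b‖_α(1 + ‖b'‖_∞^α + ‖b_n'‖_∞^α). -/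
open Set Filter Topology

/-- sup-norm of a real function on ℝ. -/
noncomputable def supN (f : ℝ → ℝ) : ℝ := sSup (Set.range fun x => |f x|)

/-- `α`-Hölder seminorm of a real function on ℝ. -/
noncomputable def hSemi (α : ℝ) (f : ℝ → ℝ) : ℝ :=
  sSup {r : ℝ | ∃ x y : ℝ, x ≠ y ∧ r = |f x - f y| / |x - y| ^ α}

/-- `α`-Hölder norm `‖f‖_α = ‖f‖_∞ + [f]_α`. -/
noncomputable def hNorm (α : ℝ) (f : ℝ → ℝ) : ℝ := supN f + hSemi α f

section Aux

private lemma supN_ub {f : ℝ → ℝ} {M : ℝ} (h : ∀ x, |f x| ≤ M) (x : ℝ) :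
    |f x| ≤ supN f :=
  le_csSup ⟨M, by rintro r ⟨y, rfl⟩; exact h y⟩ ⟨x, rfl⟩

private lemma supN_nn {f : ℝ → ℝ} {M : ℝ} (h : ∀ x, |f x| ≤ M) : 0 ≤ supN f :=
  (abs_nonneg _).trans (supN_ub h 0)

private lemma supN_le {f : ℝ → ℝ} {M : ℝ} (h : ∀ x, |f x| ≤ M) : supN f ≤ M :=
  csSup_le (Set.range_nonempty _) (by rintro r ⟨y, rfl⟩; exact h y)

private lemma holder_const_nn {α : ℝ} {f : ℝ → ℝ} {C : ℝ}
    (h : ∀ x y, |f x - f y| ≤ C * |x - y| ^ α) : 0 ≤ C := by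
  have h' := (abs_nonneg _).trans (h 0 1)
  rwa [show |(0:ℝ) - 1| = 1 by norm_num, Real.one_rpow, mul_one] at h'

private lemma hSemi_le {α : ℝ} {f : ℝ → ℝ} {C : ℝ} (hα : 0 < α)
    (h : ∀ x y, |f x - f y| ≤ C * |x - y| ^ α) : hSemi α f ≤ C := by
  refine csSup_le ⟨_, 0, 1, by norm_num, rfl⟩ ?_
  rintro r ⟨x, y, hxy, rfl⟩
  have hpos : (0:ℝ) < |x - y| ^ α :=
    Real.rpow_pos_of_pos (abs_pos.2 (sub_ne_zero.2 hxy)) α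
  rw [div_le_iff₀ hpos]
  exact h x y

private lemma hSemi_nn {α : ℝ} {f : ℝ → ℝ} {C : ℝ} (hα : 0 < α)
    (h : ∀ x y, |f x - f y| ≤ C * |x - y| ^ α) : 0 ≤ hSemi α f := by
  have hle : |f 0 - f 1| / |(0:ℝ) - 1| ^ α ≤ hSemi α f := by
    refine le_csSup ⟨C, ?_⟩ ⟨0, 1, by norm_num, rfl⟩
    rintro r ⟨x, y, hxy, rfl⟩
    have hpos : (0:ℝ) < |x - y| ^ α :=
      Real.rpow_pos_of_pos (abs_pos.2 (sub_ne_zero.2 hxy)) α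
    rw [div_le_iff₀ hpos]
    exact h x y
  exact le_trans (by positivity) hle

private lemma hSemi_spec {α : ℝ} {f : ℝ → ℝ} {C : ℝ} (hα : 0 < α)
    (h : ∀ x y, |f x - f y| ≤ C * |x - y| ^ α) (x y : ℝ) :
    |f x - f y| ≤ hSemi α f * |x - y| ^ α := by
  rcases eq_or_ne x y with rfl | hxy
  · simp [Real.zero_rpow hα.ne']
  · have hpos : (0:ℝ) < |x - y| ^ α :=
      Real.rpow_pos_of_pos (abs_pos.2 (sub_ne_zero.2 hxy)) α
    have hle : |f x - f y| / |x - y| ^ α ≤ hSemi α f := by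
      refine le_csSup ⟨C, ?_⟩ ⟨x, y, hxy, rfl⟩
      rintro r ⟨u, v, huv, rfl⟩
      have hpos' : (0:ℝ) < |u - v| ^ α :=
        Real.rpow_pos_of_pos (abs_pos.2 (sub_ne_zero.2 huv)) α
      rw [div_le_iff₀ hpos']
      exact h u v
    calc |f x - f y| = |f x - f y| / |x - y| ^ α * |x - y| ^ α := by
          field_simp
      _ ≤ hSemi α f * |x - y| ^ α := by
          exact mul_le_mul_of_nonneg_right hle hpos.le

private lemma per_bdd {f : ℝ → ℝ} {M : ℝ} (hper : Function.Periodic f (2 * Real.pi))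
    (h : ∀ x ∈ Set.Ico (0:ℝ) (2 * Real.pi), |f x| ≤ M) : ∀ x, |f x| ≤ M := by
  intro x
  obtain ⟨y, hy, hxy⟩ := hper.exists_mem_Ico₀ (by positivity) x
  rw [hxy]; exact h y hy

private lemma holder_per_bdd {α : ℝ} (hα : 0 < α) {f : ℝ → ℝ} {C : ℝ}
    (hper : Function.Periodic f (2 * Real.pi))
    (h : ∀ x y, |f x - f y| ≤ C * |x - y| ^ α) :
    ∀ x, |f x| ≤ |f 0| + C * (2 * Real.pi) ^ α := by
  have hC : 0 ≤ C := holder_const_nn h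
  refine per_bdd hper ?_
  intro x hx
  have h1 : |f x - f 0| ≤ C * |x - 0| ^ α := h x 0
  have h2 : |x - 0| ^ α ≤ (2 * Real.pi) ^ α := by
    apply Real.rpow_le_rpow (abs_nonneg _) _ hα.le
    rw [sub_zero, abs_of_nonneg hx.1]
    exact hx.2.le
  have h3 : |f x| ≤ |f 0| + |f x - f 0| := by
    have := abs_add_le (f 0) (f x - f 0); simpa using this
  nlinarith [mul_le_mul_of_nonneg_left h2 hC]

private lemma lip_per_bdd {f : ℝ → ℝ} {L : ℝ} (hL : 0 ≤ L)
    (hper : Function.Periodic f (2 * Real.pi))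
    (h : ∀ x y, |f x - f y| ≤ L * |x - y|) :
    ∀ x, |f x| ≤ |f 0| + L * (2 * Real.pi) := by
  refine per_bdd hper ?_
  intro x hx
  have h1 : |f x - f 0| ≤ L * |x - 0| := h x 0
  have h2 : |x - 0| ≤ 2 * Real.pi := by
    rw [sub_zero, abs_of_nonneg hx.1]; exact hx.2.le
  have h3 : |f x| ≤ |f 0| + |f x - f 0| := by
    have := abs_add_le (f 0) (f x - f 0); simpa using this
  nlinarith [mul_le_mul_of_nonneg_left h2 hL]

private lemma lip_holder {α : ℝ} (hα0 : 0 < α) (hα1 : α ≤ 1) {f : ℝ → ℝ} {L B : ℝ}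
    (hL : 0 ≤ L) (hB : 0 ≤ B)
    (hlip : ∀ x y, |f x - f y| ≤ L * |x - y|) (hbd : ∀ x, |f x| ≤ B) :
    ∀ x y, |f x - f y| ≤ (L + 2 * B) * |x - y| ^ α := by
  intro x y
  rcases eq_or_ne x y with rfl | hxy
  · simp [Real.zero_rpow hα0.ne']
  have ht : (0:ℝ) < |x - y| := abs_pos.2 (sub_ne_zero.2 hxy)
  have htα : (0:ℝ) < |x - y| ^ α := Real.rpow_pos_of_pos ht α
  rcases le_or_gt (|x - y|) 1 with h1 | h1
  · have h2 : |x - y| ≤ |x - y| ^ α := by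
      calc |x - y| = |x - y| ^ (1:ℝ) := (Real.rpow_one _).symm
        _ ≤ |x - y| ^ α := Real.rpow_le_rpow_of_exponent_ge ht h1 hα1
    calc |f x - f y| ≤ L * |x - y| := hlip x y
      _ ≤ L * |x - y| ^ α := mul_le_mul_of_nonneg_left h2 hL
      _ ≤ (L + 2 * B) * |x - y| ^ α := by nlinarith
  · have h2 : (1:ℝ) ≤ |x - y| ^ α := Real.one_le_rpow h1.le hα0.le
    have h3 : |f x - f y| ≤ 2 * B := by
      calc |f x - f y| ≤ |f x| + |f y| := abs_sub _ _
        _ ≤ B + B := add_le_add (hbd x) (hbd y)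
        _ = 2 * B := by ring
    calc |f x - f y| ≤ 2 * B := h3
      _ = 2 * B * 1 := (mul_one _).symm
      _ ≤ 2 * B * |x - y| ^ α := by nlinarith
      _ ≤ (L + 2 * B) * |x - y| ^ α := by nlinarith

private lemma rpow_subadd {α u v : ℝ} (hu : 0 ≤ u) (hv : 0 ≤ v)
    (hα0 : 0 ≤ α) (hα1 : α ≤ 1) : (u + v) ^ α ≤ u ^ α + v ^ α := by
  lift u to NNReal using hu
  lift v to NNReal using hv
  have h := NNReal.rpow_add_le_add_rpow u v hα0 hα1
  have := (NNReal.coe_le_coe).2 h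
  push_cast [NNReal.coe_rpow] at this
  exact_mod_cast this

private lemma periodic_deriv' {f : ℝ → ℝ} (h : Function.Periodic f (2 * Real.pi)) :
    Function.Periodic (deriv f) (2 * Real.pi) := by
  intro x
  have : (fun y => f (y + 2 * Real.pi)) = f := funext fun y => h y
  calc deriv f (x + 2 * Real.pi) = deriv (fun y => f (y + 2 * Real.pi)) x :=
        (deriv_comp_add_const f (2 * Real.pi) x).symm
    _ = deriv f x := by rw [this]

end Aux

/-- Composition estimates for Hölder norms of periodic functions:
`‖a∘b_n − a_m∘b_n‖_α ≤ (1+‖b_n'‖_∞^α)‖a_m − a‖_α`, and for `a_m ∈ C^{1,α}`,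
`‖a_m∘b_n − a_m∘b‖_α ≤ ‖a_m‖_α‖b_n−b‖_∞^α + ‖a_m'‖_α‖b_n−b‖_α(1+‖b'‖_∞^α+‖b_n'‖_∞^α)`. -/
theorem stmt4 (α : ℝ) (hα : α ∈ Ioo (0:ℝ) 1)
    (a am b bn : ℝ → ℝ) (Lb Ln : NNReal)
    (ha_per : Function.Periodic a (2 * Real.pi))
    (ham_per : Function.Periodic am (2 * Real.pi))
    (hb_per : Function.Periodic b (2 * Real.pi))
    (hbn_per : Function.Periodic bn (2 * Real.pi))
    (ha_hold : ∃ C : ℝ, ∀ x y, |a x - a y| ≤ C * |x - y| ^ α)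
    (ham_hold : ∃ C : ℝ, ∀ x y, |am x - am y| ≤ C * |x - y| ^ α)
    (hb_lip : LipschitzWith Lb b) (hbn_lip : LipschitzWith Ln bn) :
    hNorm α (fun x => a (bn x) - am (bn x)) ≤
      (1 + (Ln : ℝ) ^ α) * hNorm α (fun x => am x - a x) ∧
    (ContDiff ℝ 1 am →
      (∃ C : ℝ, ∀ x y, |deriv am x - deriv am y| ≤ C * |x - y| ^ α) →
      hNorm α (fun x => am (bn x) - am (b x)) ≤
        hNorm α am * supN (fun x => bn x - b x) ^ α
          + hNorm α (deriv am) * hNorm α (fun x => bn x - b x)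
            * (1 + (Lb : ℝ) ^ α + (Ln : ℝ) ^ α)) := by
  obtain ⟨hα0, hα1⟩ := hα
  obtain ⟨Ca, hCa⟩ := ha_hold
  obtain ⟨Cm, hCm⟩ := ham_hold
  have hLb0 : (0:ℝ) ≤ (Lb : ℝ) := Lb.coe_nonneg
  have hLn0 : (0:ℝ) ≤ (Ln : ℝ) := Ln.coe_nonneg
  have hLnα : (0:ℝ) ≤ (Ln : ℝ) ^ α := Real.rpow_nonneg hLn0 α
  have hLbα : (0:ℝ) ≤ (Lb : ℝ) ^ α := Real.rpow_nonneg hLb0 α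
  have hbn : ∀ x y, |bn x - bn y| ≤ (Ln : ℝ) * |x - y| := fun x y => by
    have := hbn_lip.dist_le_mul x y
    simpa [Real.dist_eq] using this
  have hb : ∀ x y, |b x - b y| ≤ (Lb : ℝ) * |x - y| := fun x y => by
    have := hb_lip.dist_le_mul x y
    simpa [Real.dist_eq] using this
  constructor
  · -- Part 1
    set g : ℝ → ℝ := fun x => am x - a x with hg
    have hg_hold : ∀ x y, |g x - g y| ≤ (Cm + Ca) * |x - y| ^ α := by
      intro x y
      calc |g x - g y| = |(am x - am y) - (a x - a y)| := by simp only [hg]; congr 1; ring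
        _ ≤ |am x - am y| + |a x - a y| := abs_sub _ _
        _ ≤ Cm * |x - y| ^ α + Ca * |x - y| ^ α := add_le_add (hCm x y) (hCa x y)
        _ = (Cm + Ca) * |x - y| ^ α := by ring
    have hg_per : Function.Periodic g (2 * Real.pi) := fun x => by
      simp [hg, ham_per x, ha_per x]
    have hg_bd := holder_per_bdd hα0 hg_per hg_hold
    have hSg : 0 ≤ supN g := supN_nn hg_bd
    have hHg : 0 ≤ hSemi α g := hSemi_nn hα0 hg_hold
    have hg_spec := hSemi_spec hα0 hg_hold
    set f1 : ℝ → ℝ := fun x => a (bn x) - am (bn x) with hf1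
    have hf1_bd : ∀ x, |f1 x| ≤ supN g := fun x => by
      have : |f1 x| = |g (bn x)| := by rw [hf1, hg]; exact abs_sub_comm _ _
      rw [this]; exact supN_ub hg_bd (bn x)
    have hf1_hold : ∀ x y, |f1 x - f1 y| ≤ hSemi α g * (Ln : ℝ) ^ α * |x - y| ^ α := by
      intro x y
      have e : f1 x - f1 y = -(g (bn x) - g (bn y)) := by simp [hf1, hg]; ring
      rw [e, abs_neg]
      have h1 : |g (bn x) - g (bn y)| ≤ hSemi α g * |bn x - bn y| ^ α := hg_spec _ _
      have h2 : |bn x - bn y| ^ α ≤ ((Ln : ℝ) * |x - y|) ^ α :=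
        Real.rpow_le_rpow (abs_nonneg _) (hbn x y) hα0.le
      have h3 : ((Ln : ℝ) * |x - y|) ^ α = (Ln : ℝ) ^ α * |x - y| ^ α :=
        Real.mul_rpow hLn0 (abs_nonneg _)
      calc |g (bn x) - g (bn y)| ≤ hSemi α g * |bn x - bn y| ^ α := h1
        _ ≤ hSemi α g * ((Ln : ℝ) ^ α * |x - y| ^ α) := by
            rw [← h3]; exact mul_le_mul_of_nonneg_left h2 hHg
        _ = hSemi α g * (Ln : ℝ) ^ α * |x - y| ^ α := by ring
    have h1 : supN f1 ≤ supN g := supN_le hf1_bd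
    have h2 : hSemi α f1 ≤ hSemi α g * (Ln : ℝ) ^ α := hSemi_le hα0 hf1_hold
    show supN f1 + hSemi α f1 ≤ (1 + (Ln : ℝ) ^ α) * (supN g + hSemi α g)
    nlinarith
  · -- Part 2
    intro hC1 hm'_hold'
    obtain ⟨Cd', hCd'⟩ := hm'_hold'
    set d : ℝ → ℝ := fun x => bn x - b x with hd
    have hd_lip : ∀ x y, |d x - d y| ≤ ((Lb : ℝ) + (Ln : ℝ)) * |x - y| := by
      intro x y
      calc |d x - d y| = |(bn x - bn y) - (b x - b y)| := by simp only [hd]; congr 1; ring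
        _ ≤ |bn x - bn y| + |b x - b y| := abs_sub _ _
        _ ≤ (Ln : ℝ) * |x - y| + (Lb : ℝ) * |x - y| := add_le_add (hbn x y) (hb x y)
        _ = ((Lb : ℝ) + (Ln : ℝ)) * |x - y| := by ring
    have hd_per : Function.Periodic d (2 * Real.pi) := fun x => by
      simp [hd, hbn_per x, hb_per x]
    have hd_bd := lip_per_bdd (by positivity) hd_per hd_lip
    have hBd : (0:ℝ) ≤ |d 0| + ((Lb : ℝ) + (Ln : ℝ)) * (2 * Real.pi) := by positivity
    have hd_hold := lip_holder hα0 hα1.le (by positivity) hBd hd_lip hd_bd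
    have hSd : 0 ≤ supN d := supN_nn hd_bd
    have hd_sup : ∀ x, |d x| ≤ supN d := supN_ub hd_bd
    have hHd : 0 ≤ hSemi α d := hSemi_nn hα0 hd_hold
    have hd_spec := hSemi_spec hα0 hd_hold
    -- am and deriv am facts
    have hm_bd := holder_per_bdd hα0 ham_per hCm
    have hSm : 0 ≤ supN am := supN_nn hm_bd
    have hHm : 0 ≤ hSemi α am := hSemi_nn hα0 hCm
    have hm_spec := hSemi_spec hα0 hCm
    have hm'per : Function.Periodic (deriv am) (2 * Real.pi) := periodic_deriv' ham_per
    have hm'_bd := holder_per_bdd hα0 hm'per hCd'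
    have hSm' : 0 ≤ supN (deriv am) := supN_nn hm'_bd
    have hm'_sup : ∀ x, |deriv am x| ≤ supN (deriv am) := supN_ub hm'_bd
    have hHm' : 0 ≤ hSemi α (deriv am) := hSemi_nn hα0 hCd'
    have hm'_spec := hSemi_spec hα0 hCd'
    set f2 : ℝ → ℝ := fun x => am (bn x) - am (b x) with hf2
    have hSdα : (0:ℝ) ≤ supN d ^ α := Real.rpow_nonneg hSd α
    have hf2_bd : ∀ x, |f2 x| ≤ hSemi α am * supN d ^ α := by
      intro x
      have h1 : |am (bn x) - am (b x)| ≤ hSemi α am * |bn x - b x| ^ α := hm_spec _ _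
      have h2 : |bn x - b x| ^ α ≤ supN d ^ α :=
        Real.rpow_le_rpow (abs_nonneg _) (hd_sup x) hα0.le
      calc |f2 x| ≤ hSemi α am * |bn x - b x| ^ α := h1
        _ ≤ hSemi α am * supN d ^ α := mul_le_mul_of_nonneg_left h2 hHm
    have hsup2 : supN f2 ≤ hSemi α am * supN d ^ α := supN_le hf2_bd
    -- the key Hölder estimate via MVT
    set K : ℝ := supN (deriv am) * hSemi α d
        + hSemi α (deriv am) * ((Lb : ℝ) ^ α + (Ln : ℝ) ^ α) * supN d with hK
    have hdiff : Differentiable ℝ am := hC1.differentiable one_ne_zero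
    have hf2_hold : ∀ x y, |f2 x - f2 y| ≤ K * |x - y| ^ α := by
      intro x y
      set φ : ℝ → ℝ := fun t => am (b x + t * d x) - am (b y + t * d y) with hφ
      set φ' : ℝ → ℝ := fun t =>
        deriv am (b x + t * d x) * d x - deriv am (b y + t * d y) * d y with hφ'
      have hder : ∀ t : ℝ, HasDerivAt φ (φ' t) t := by
        intro t
        have hx1 : HasDerivAt (fun t : ℝ => b x + t * d x) (d x) t := by
          simpa using ((hasDerivAt_id t).mul_const (d x)).const_add (b x)
        have hy1 : HasDerivAt (fun t : ℝ => b y + t * d y) (d y) t := by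
          simpa using ((hasDerivAt_id t).mul_const (d y)).const_add (b y)
        have hx2 := ((hdiff (b x + t * d x)).hasDerivAt).comp t hx1
        have hy2 := ((hdiff (b y + t * d y)).hasDerivAt).comp t hy1
        exact hx2.sub hy2
      set M : ℝ := supN (deriv am) * (hSemi α d * |x - y| ^ α)
          + hSemi α (deriv am) * (((Lb:ℝ) ^ α + (Ln:ℝ) ^ α) * |x - y| ^ α) * supN d with hM
      have hbound : ∀ t ∈ Set.Ico (0:ℝ) 1, ‖φ' t‖ ≤ M := by
        intro t ht
        have ht0 : (0:ℝ) ≤ t := ht.1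
        have ht1 : t ≤ 1 := ht.2.le
        set px := b x + t * d x with hpx
        set py := b y + t * d y with hpy
        have e : φ' t = deriv am px * (d x - d y) + (deriv am px - deriv am py) * d y := by
          rw [hφ']; ring
        have hdxy : |d x - d y| ≤ hSemi α d * |x - y| ^ α := hd_spec x y
        -- bound |px - py|^α
        have hp : |px - py| ≤ (Lb : ℝ) * |x - y| + (Ln : ℝ) * |x - y| := by
          have e2 : px - py = (1 - t) * (b x - b y) + t * (bn x - bn y) := by
            rw [hpx, hpy, hd]; ring
          calc |px - py| ≤ |(1 - t) * (b x - b y)| + |t * (bn x - bn y)| := by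
                rw [e2]; exact abs_add_le _ _
            _ = (1 - t) * |b x - b y| + t * |bn x - bn y| := by
                rw [abs_mul, abs_mul, abs_of_nonneg (by linarith : (0:ℝ) ≤ 1 - t),
                  abs_of_nonneg ht0]
            _ ≤ 1 * ((Lb : ℝ) * |x - y|) + 1 * ((Ln : ℝ) * |x - y|) := by
                have h1 := hb x y
                have h2 := hbn x y
                have hb0 : 0 ≤ |b x - b y| := abs_nonneg _
                have hbn0 : 0 ≤ |bn x - bn y| := abs_nonneg _
                nlinarith
            _ = (Lb : ℝ) * |x - y| + (Ln : ℝ) * |x - y| := by ring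
        have hpα : |px - py| ^ α ≤ ((Lb:ℝ) ^ α + (Ln:ℝ) ^ α) * |x - y| ^ α := by
          calc |px - py| ^ α ≤ ((Lb : ℝ) * |x - y| + (Ln : ℝ) * |x - y|) ^ α :=
                Real.rpow_le_rpow (abs_nonneg _) hp hα0.le
            _ ≤ ((Lb : ℝ) * |x - y|) ^ α + ((Ln : ℝ) * |x - y|) ^ α :=
                rpow_subadd (by positivity) (by positivity) hα0.le hα1.le
            _ = ((Lb:ℝ) ^ α + (Ln:ℝ) ^ α) * |x - y| ^ α := by
                rw [Real.mul_rpow hLb0 (abs_nonneg _), Real.mul_rpow hLn0 (abs_nonneg _)]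
                ring
        have hterm1 : |deriv am px * (d x - d y)| ≤
            supN (deriv am) * (hSemi α d * |x - y| ^ α) := by
          rw [abs_mul]
          exact mul_le_mul (hm'_sup px) hdxy (abs_nonneg _) hSm'
        have hterm2 : |(deriv am px - deriv am py) * d y| ≤
            hSemi α (deriv am) * (((Lb:ℝ) ^ α + (Ln:ℝ) ^ α) * |x - y| ^ α) * supN d := by
          rw [abs_mul]
          have hA : |deriv am px - deriv am py| ≤
              hSemi α (deriv am) * (((Lb:ℝ) ^ α + (Ln:ℝ) ^ α) * |x - y| ^ α) := by
            calc |deriv am px - deriv am py| ≤ hSemi α (deriv am) * |px - py| ^ α :=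
                  hm'_spec px py
              _ ≤ hSemi α (deriv am) * (((Lb:ℝ) ^ α + (Ln:ℝ) ^ α) * |x - y| ^ α) :=
                  mul_le_mul_of_nonneg_left hpα hHm'
          exact mul_le_mul hA (hd_sup y) (abs_nonneg _) (by positivity)
        calc ‖φ' t‖ = |φ' t| := rfl
          _ ≤ |deriv am px * (d x - d y)| + |(deriv am px - deriv am py) * d y| := by
              rw [e]; exact abs_add_le _ _
          _ ≤ M := by rw [hM]; exact add_le_add hterm1 hterm2
      have hmvt : ‖φ 1 - φ 0‖ ≤ M :=
        norm_image_sub_le_of_norm_deriv_le_segment_01'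
          (fun t _ => (hder t).hasDerivWithinAt) hbound
      have e0 : φ 0 = am (b x) - am (b y) := by simp [hφ]
      have e1 : φ 1 = am (bn x) - am (bn y) := by
        have ex : b x + 1 * d x = bn x := by rw [hd]; ring
        have ey : b y + 1 * d y = bn y := by rw [hd]; ring
        rw [hφ]; simp only []; rw [ex, ey]
      have ef : f2 x - f2 y = φ 1 - φ 0 := by rw [e0, e1, hf2]; ring
      have : |f2 x - f2 y| ≤ M := by rw [ef]; exact hmvt
      calc |f2 x - f2 y| ≤ M := this
        _ = K * |x - y| ^ α := by rw [hM, hK]; ring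
    have hsemi2 : hSemi α f2 ≤ K := hSemi_le hα0 hf2_hold
    show supN f2 + hSemi α f2 ≤ hNorm α am * supN d ^ α
        + hNorm α (deriv am) * hNorm α d * (1 + (Lb : ℝ) ^ α + (Ln : ℝ) ^ α)
    have expand : hNorm α am = supN am + hSemi α am := rfl
    have expand2 : hNorm α (deriv am) = supN (deriv am) + hSemi α (deriv am) := rfl
    have expand3 : hNorm α d = supN d + hSemi α d := rfl
    rw [expand, expand2, expand3]
    nlinarith [mul_nonneg hSm' hSd, mul_nonneg hHm' hHd, mul_nonneg hSm' hHd,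
      mul_nonneg hHm' hSd, mul_nonneg hSm hSdα,
      mul_nonneg (mul_nonneg hSm' hSd) (add_nonneg hLbα hLnα),
      mul_nonneg (mul_nonneg hHm' hHd) (add_nonneg hLbα hLnα),
      mul_nonneg (mul_nonneg hSm' hHd) (add_nonneg hLbα hLnα)]
end

section
/- Let α ∈ (0,1) and let h be a 2π-periodic, even, C² function with α-Hölder second derivative such that h(0) = h(π) = 0. Then the functions x ↦ h(x)/sin²(x) and x ↦ h'(x)/sin(x) extend to α-Hölder continuous 2π-periodic even functions, and there exists a constant C (depending only on α) with ‖h/sin²‖_{C^α} + ‖h'/sin‖_{C^α} ≤ C‖h‖_{C^{2+α}}. -/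
open Set Filter Topology

noncomputable def supOn (f : ℝ → ℝ) (S : Set ℝ) : ℝ := sSup ((fun x => |f x|) '' S)

noncomputable def hSemiOn (α : ℝ) (f : ℝ → ℝ) (S : Set ℝ) : ℝ :=
  sSup {r : ℝ | ∃ x ∈ S, ∃ y ∈ S, x ≠ y ∧ r = |f x - f y| / |x - y| ^ α}

noncomputable def hNormOn (k : ℕ) (α : ℝ) (f : ℝ → ℝ) (S : Set ℝ) : ℝ :=
  (∑ j ∈ Finset.range (k + 1), supOn (iteratedDeriv j f) S)
    + hSemiOn α (iteratedDeriv k f) S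

namespace Stmt7A
open intervalIntegral MeasureTheory
noncomputable def S (x : ℝ) : ℝ := ∫ σ in (0:ℝ)..1, Real.cos (σ*x)
noncomputable def U (φ : ℝ → ℝ) (x : ℝ) : ℝ := ∫ σ in (0:ℝ)..1, deriv (deriv φ) (σ*x)
noncomputable def W (φ : ℝ → ℝ) (x : ℝ) : ℝ := ∫ σ in (0:ℝ)..1, (1-σ) * deriv (deriv φ) (σ*x)



lemma cos_lip (a b : ℝ) : |Real.cos a - Real.cos b| ≤ |a - b| := by
  rw [Real.cos_sub_cos]
  calc |(-2) * Real.sin ((a+b)/2) * Real.sin ((a-b)/2)|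
      = 2 * |Real.sin ((a+b)/2)| * |Real.sin ((a-b)/2)| := by
        rw [abs_mul, abs_mul]; norm_num
    _ ≤ 2 * 1 * |(a-b)/2| := by
        have h1 := Real.abs_sin_le_one ((a+b)/2)
        have h2 : |Real.sin ((a-b)/2)| ≤ |(a-b)/2| := Real.abs_sin_le_abs
        have h3 : (0:ℝ) ≤ |Real.sin ((a-b)/2)| := abs_nonneg _
        nlinarith [abs_nonneg (Real.sin ((a+b)/2)), abs_nonneg ((a-b)/2)]
    _ = |a - b| := by rw [abs_div, abs_two]; ring

lemma S_id (x : ℝ) : x * S x = Real.sin x := by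
  have hd : ∀ σ ∈ uIcc (0:ℝ) 1, HasDerivAt (fun σ => Real.sin (σ*x)) (Real.cos (σ*x) * x) σ :=
    fun σ _ => (Real.hasDerivAt_sin (σ*x)).comp (h₂ := Real.sin) σ (hasDerivAt_mul_const x)
  have hint : IntervalIntegrable (fun σ => Real.cos (σ*x) * x) MeasureTheory.volume 0 1 :=
    (Continuous.mul (Real.continuous_cos.comp (continuous_id.mul continuous_const)) continuous_const).intervalIntegrable _ _
  have := integral_eq_sub_of_hasDerivAt hd hint
  simp only [one_mul, zero_mul, Real.sin_zero, sub_zero] at this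
  rw [← this, S, mul_comm, ← intervalIntegral.integral_mul_const]





lemma facts (φ : ℝ → ℝ) (hφ : ContDiff ℝ 2 φ) :
    Differentiable ℝ φ ∧ Differentiable ℝ (deriv φ) ∧ Continuous (deriv (deriv φ)) := by
  have h2 : ContDiff ℝ (1+1) φ := by norm_num at hφ ⊢; exact hφ
  obtain ⟨hdiff, -, hd⟩ := contDiff_succ_iff_deriv.mp h2
  obtain ⟨hd1, hc⟩ := contDiff_one_iff_deriv.mp hd
  exact ⟨hdiff, hd1, hc⟩

lemma U_id (φ : ℝ → ℝ) (hφ : ContDiff ℝ 2 φ) (h0' : deriv φ 0 = 0) (x : ℝ) :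
    x * U φ x = deriv φ x := by
  obtain ⟨hd0, hd1, hc2⟩ := facts φ hφ
  have hd : ∀ σ ∈ uIcc (0:ℝ) 1, HasDerivAt (fun σ => deriv φ (σ*x)) (deriv (deriv φ) (σ*x) * x) σ :=
    fun σ _ => ((hd1 (σ*x)).hasDerivAt).comp (h₂ := deriv φ) σ (hasDerivAt_mul_const x)
  have hint : IntervalIntegrable (fun σ => deriv (deriv φ) (σ*x) * x) volume 0 1 :=
    ((hc2.comp (continuous_id.mul continuous_const)).mul continuous_const).intervalIntegrable _ _
  have := integral_eq_sub_of_hasDerivAt hd hint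
  simp only [one_mul, zero_mul, h0', sub_zero] at this
  rw [← this, U, mul_comm, ← intervalIntegral.integral_mul_const]

lemma step1 (φ : ℝ → ℝ) (hφ : ContDiff ℝ 2 φ) (h0 : φ 0 = 0) (x : ℝ) :
    ∫ σ in (0:ℝ)..1, deriv φ (σ*x) * x = φ x := by
  obtain ⟨hd0, hd1, hc2⟩ := facts φ hφ
  have hd : ∀ σ ∈ uIcc (0:ℝ) 1, HasDerivAt (fun σ => φ (σ*x)) (deriv φ (σ*x) * x) σ :=
    fun σ _ => ((hd0 (σ*x)).hasDerivAt).comp σ (hasDerivAt_mul_const x)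
  have hint : IntervalIntegrable (fun σ => deriv φ (σ*x) * x) volume 0 1 :=
    (((hd1.continuous).comp (continuous_id.mul continuous_const)).mul continuous_const).intervalIntegrable _ _
  have := integral_eq_sub_of_hasDerivAt hd hint
  simpa only [one_mul, zero_mul, h0, sub_zero] using this

lemma W_id (φ : ℝ → ℝ) (hφ : ContDiff ℝ 2 φ) (h0 : φ 0 = 0) (h0' : deriv φ 0 = 0) (x : ℝ) :
    x^2 * W φ x = φ x := by
  obtain ⟨hd0, hd1, hc2⟩ := facts φ hφ
  have hv : ∀ σ ∈ uIcc (0:ℝ) 1, HasDerivAt (fun σ => x * deriv φ (σ*x)) (x * (deriv (deriv φ) (σ*x) * x)) σ :=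
    fun σ _ => (((hd1 (σ*x)).hasDerivAt).comp (h₂ := deriv φ) σ (hasDerivAt_mul_const x)).const_mul x
  have hu : ∀ σ ∈ uIcc (0:ℝ) 1, HasDerivAt (fun σ : ℝ => 1 - σ) (-1) σ := by
    intro σ _
    simpa using ((hasDerivAt_id σ).const_sub 1)
  have hu' : IntervalIntegrable (fun _ : ℝ => (-1:ℝ)) volume 0 1 :=
    intervalIntegrable_const
  have hv' : IntervalIntegrable (fun σ => x * (deriv (deriv φ) (σ*x) * x)) volume 0 1 :=
    (continuous_const.mul ((hc2.comp (continuous_id.mul continuous_const)).mul continuous_const)).intervalIntegrable _ _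
  have hparts := integral_mul_deriv_eq_deriv_mul hu hv hu' hv'
  have hrhs : ∫ σ in (0:ℝ)..1, (-1) * (x * deriv φ (σ*x)) = -(φ x) := by
    have : (fun σ => (-1:ℝ) * (x * deriv φ (σ*x))) = fun σ => -(deriv φ (σ*x) * x) := by
      funext σ; ring
    rw [this, intervalIntegral.integral_neg, step1 φ hφ h0 x]
  rw [hrhs] at hparts
  simp only [one_mul, zero_mul, sub_zero, sub_self, h0'] at hparts
  have hl : x^2 * W φ x = ∫ σ in (0:ℝ)..1, (1-σ) * (x * (deriv (deriv φ) (σ*x) * x)) := by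
    rw [W, ← intervalIntegral.integral_const_mul]
    congr 1; funext σ; ring
  rw [hl, hparts]
  ring_nf




lemma S0 : S 0 = 1 := by simp [S]

lemma U0 (φ : ℝ → ℝ) : U φ 0 = deriv (deriv φ) 0 := by simp [U]

lemma W0 (φ : ℝ → ℝ) : W φ 0 = deriv (deriv φ) 0 / 2 := by
  rw [W]
  have : (fun σ : ℝ => (1-σ) * deriv (deriv φ) (σ*0)) = fun σ : ℝ => deriv (deriv φ) 0 - deriv (deriv φ) 0 * σ := by
    funext σ; simp [mul_comm]; ring
  rw [this, integral_sub (f := fun _ : ℝ => deriv (deriv φ) 0) (g := fun σ : ℝ => deriv (deriv φ) 0 * σ) intervalIntegrable_const ((continuous_const.mul continuous_id).intervalIntegrable _ _)]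
  rw [intervalIntegral.integral_const_mul, integral_id]
  simp
  ring

lemma absS_le (x : ℝ) : |S x| ≤ 1 := by
  have := intervalIntegral.norm_integral_le_of_norm_le_const
    (C := 1) (f := fun σ => Real.cos (σ*x)) (a := (0:ℝ)) (b := 1)
    (fun σ _ => by simpa [Real.norm_eq_abs] using Real.abs_cos_le_one (σ*x))
  simpa [Real.norm_eq_abs, S] using this

lemma S_ge (x : ℝ) (hx : |x| ≤ Real.pi/2) : 1/2 ≤ S x := by
  have hmono : ∫ σ in (0:ℝ)..1, (1 - σ^2 * (x^2/2)) ≤ S x := by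
    apply intervalIntegral.integral_mono_on (by norm_num)
    · exact (continuous_const.sub ((continuous_pow 2).mul continuous_const)).intervalIntegrable _ _
    · exact (Real.continuous_cos.comp (continuous_id.mul continuous_const)).intervalIntegrable _ _
    · intro σ _
      have := Real.one_sub_sq_div_two_le_cos (x := σ*x)
      calc 1 - σ^2 * (x^2/2) = 1 - (σ*x)^2/2 := by ring
        _ ≤ Real.cos (σ*x) := this
  have hval : ∫ σ in (0:ℝ)..1, (1 - σ^2 * (x^2/2)) = 1 - x^2/6 := by
    rw [integral_sub (f := fun _ : ℝ => (1:ℝ)) (g := fun σ : ℝ => σ^2 * (x^2/2)) intervalIntegrable_const (((continuous_pow 2).mul continuous_const).intervalIntegrable _ _)]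
    rw [intervalIntegral.integral_mul_const, integral_pow]
    norm_num
    ring
  rw [hval] at hmono
  have hx2 : x^2 ≤ 3 := by
    have h1 : |x| ≤ Real.pi / 2 := hx
    have h2 : Real.pi < 3.15 := Real.pi_lt_d2
    nlinarith [sq_abs x, abs_nonneg x]
  linarith

lemma S_lip (x y : ℝ) : |S x - S y| ≤ |x - y| := by
  rw [S, S, ← integral_sub (f := fun σ : ℝ => Real.cos (σ*x)) (g := fun σ : ℝ => Real.cos (σ*y))
    ((Real.continuous_cos.comp (continuous_id.mul continuous_const)).intervalIntegrable _ _)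
    ((Real.continuous_cos.comp (continuous_id.mul continuous_const)).intervalIntegrable _ _)]
  have := intervalIntegral.norm_integral_le_of_norm_le_const
    (C := |x - y|) (f := fun σ => Real.cos (σ*x) - Real.cos (σ*y)) (a := (0:ℝ)) (b := 1)
    (fun σ hσ => by
      rw [Real.norm_eq_abs]
      calc |Real.cos (σ*x) - Real.cos (σ*y)| ≤ |σ*x - σ*y| := cos_lip _ _
        _ = σ * |x - y| := by
            have hσ' : σ ∈ Set.Ioc (0:ℝ) 1 := (Set.uIoc_of_le (by norm_num : (0:ℝ) ≤ 1)) ▸ hσ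
            rw [← mul_sub, abs_mul, abs_of_nonneg hσ'.1.le]
        _ ≤ 1 * |x - y| := by
            have hσ' : σ ∈ Set.Ioc (0:ℝ) 1 := (Set.uIoc_of_le (by norm_num : (0:ℝ) ≤ 1)) ▸ hσ
            exact mul_le_mul_of_nonneg_right hσ'.2 (abs_nonneg _)
        _ = |x - y| := one_mul _)
  simpa [Real.norm_eq_abs] using this




variable {φ : ℝ → ℝ} {K α : ℝ}

lemma U_le (hb : ∀ t, |deriv (deriv φ) t| ≤ K) (x : ℝ) : |U φ x| ≤ K := by
  have := intervalIntegral.norm_integral_le_of_norm_le_const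
    (C := K) (f := fun σ => deriv (deriv φ) (σ*x)) (a := (0:ℝ)) (b := 1)
    (fun σ _ => by simpa [Real.norm_eq_abs] using hb (σ*x))
  simpa [Real.norm_eq_abs, U] using this

lemma W_le (hb : ∀ t, |deriv (deriv φ) t| ≤ K) (x : ℝ) : |W φ x| ≤ K := by
  have := intervalIntegral.norm_integral_le_of_norm_le_const
    (C := K) (f := fun σ => (1-σ) * deriv (deriv φ) (σ*x)) (a := (0:ℝ)) (b := 1)
    (fun σ hσ => by
      have hσ' : σ ∈ Set.Ioc (0:ℝ) 1 := (Set.uIoc_of_le (by norm_num : (0:ℝ) ≤ 1)) ▸ hσ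
      rw [Real.norm_eq_abs, abs_mul]
      calc |1-σ| * |deriv (deriv φ) (σ*x)| ≤ 1 * K := by
            apply mul_le_mul _ (hb _) (abs_nonneg _) zero_le_one
            rw [abs_of_nonneg (by linarith [hσ'.2])]
            linarith [hσ'.1]
        _ = K := one_mul K)
  simpa [Real.norm_eq_abs, W] using this

lemma hold_aux (hα : 0 < α) (hc2 : Continuous (deriv (deriv φ)))
    (hb : ∀ t, |deriv (deriv φ) t| ≤ K)
    (hh : ∀ s t, |deriv (deriv φ) s - deriv (deriv φ) t| ≤ K * |s-t|^α)
    (σ x y : ℝ) (hσ1 : 0 < σ) (hσ2 : σ ≤ 1) :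
    |deriv (deriv φ) (σ*x) - deriv (deriv φ) (σ*y)| ≤ K * |x-y|^α := by
  have hK : 0 ≤ K := le_trans (abs_nonneg _) (hb 0)
  calc |deriv (deriv φ) (σ*x) - deriv (deriv φ) (σ*y)| ≤ K * |σ*x - σ*y|^α := hh _ _
    _ = K * (σ^α * |x-y|^α) := by
        rw [← mul_sub, abs_mul, abs_of_nonneg hσ1.le,
          Real.mul_rpow hσ1.le (abs_nonneg _)]
    _ ≤ K * (1 * |x-y|^α) := by
        apply mul_le_mul_of_nonneg_left _ hK
        apply mul_le_mul_of_nonneg_right _ (Real.rpow_nonneg (abs_nonneg _) _)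
        exact Real.rpow_le_one hσ1.le hσ2 hα.le
    _ = K * |x-y|^α := by rw [one_mul]

lemma U_hold (hα : 0 < α) (hc2 : Continuous (deriv (deriv φ)))
    (hb : ∀ t, |deriv (deriv φ) t| ≤ K)
    (hh : ∀ s t, |deriv (deriv φ) s - deriv (deriv φ) t| ≤ K * |s-t|^α)
    (x y : ℝ) : |U φ x - U φ y| ≤ K * |x-y|^α := by
  rw [U, U, ← integral_sub (f := fun σ : ℝ => deriv (deriv φ) (σ*x)) (g := fun σ : ℝ => deriv (deriv φ) (σ*y))
    ((hc2.comp (continuous_id.mul continuous_const)).intervalIntegrable _ _)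
    ((hc2.comp (continuous_id.mul continuous_const)).intervalIntegrable _ _)]
  have := intervalIntegral.norm_integral_le_of_norm_le_const
    (C := K * |x-y|^α) (f := fun σ => deriv (deriv φ) (σ*x) - deriv (deriv φ) (σ*y)) (a := (0:ℝ)) (b := 1)
    (fun σ hσ => by
      have hσ' : σ ∈ Set.Ioc (0:ℝ) 1 := (Set.uIoc_of_le (by norm_num : (0:ℝ) ≤ 1)) ▸ hσ
      simpa [Real.norm_eq_abs] using hold_aux hα hc2 hb hh σ x y hσ'.1 hσ'.2)
  simpa [Real.norm_eq_abs] using this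

lemma W_hold (hα : 0 < α) (hc2 : Continuous (deriv (deriv φ)))
    (hb : ∀ t, |deriv (deriv φ) t| ≤ K)
    (hh : ∀ s t, |deriv (deriv φ) s - deriv (deriv φ) t| ≤ K * |s-t|^α)
    (x y : ℝ) : |W φ x - W φ y| ≤ K * |x-y|^α := by
  rw [W, W, ← integral_sub (f := fun σ : ℝ => (1-σ) * deriv (deriv φ) (σ*x)) (g := fun σ : ℝ => (1-σ) * deriv (deriv φ) (σ*y))
    (((continuous_const.sub continuous_id).mul (hc2.comp (continuous_id.mul continuous_const))).intervalIntegrable _ _)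
    (((continuous_const.sub continuous_id).mul (hc2.comp (continuous_id.mul continuous_const))).intervalIntegrable _ _)]
  have := intervalIntegral.norm_integral_le_of_norm_le_const
    (C := K * |x-y|^α) (f := fun σ => (1-σ) * deriv (deriv φ) (σ*x) - (1-σ) * deriv (deriv φ) (σ*y)) (a := (0:ℝ)) (b := 1)
    (fun σ hσ => by
      have hσ' : σ ∈ Set.Ioc (0:ℝ) 1 := (Set.uIoc_of_le (by norm_num : (0:ℝ) ≤ 1)) ▸ hσ
      simp only [Real.norm_eq_abs]
      rw [← mul_sub, abs_mul]
      calc |1-σ| * |deriv (deriv φ) (σ*x) - deriv (deriv φ) (σ*y)|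
          ≤ 1 * (K * |x-y|^α) := by
            apply mul_le_mul _ (hold_aux hα hc2 hb hh σ x y hσ'.1 hσ'.2) (abs_nonneg _) zero_le_one
            rw [abs_of_nonneg (by linarith [hσ'.2])]
            linarith [hσ'.1]
        _ = K * |x-y|^α := one_mul _)
  simpa [Real.norm_eq_abs] using this


noncomputable def FF (φ : ℝ → ℝ) (x : ℝ) : ℝ := W φ x / S x ^ 2
noncomputable def GG (φ : ℝ → ℝ) (x : ℝ) : ℝ := U φ x / S x

lemma one_le_pi : (1:ℝ) ≤ Real.pi := by linarith [Real.pi_gt_three]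

lemma d_le_pi_rpow {α : ℝ} (hα : 0 < α) (hα1 : α ≤ 1) (d : ℝ) (h0 : 0 ≤ d)
    (h1 : d ≤ Real.pi) : d ≤ Real.pi * d ^ α := by
  rcases eq_or_lt_of_le h0 with h|h
  · rw [← h]; positivity
  · have hd : d = d ^ α * d ^ (1-α) := by
      rw [← Real.rpow_add h]
      norm_num
    calc d = d ^ α * d ^ (1-α) := hd
      _ ≤ d ^ α * Real.pi ^ (1-α) := by
          apply mul_le_mul_of_nonneg_left _ (Real.rpow_nonneg h0 _)
          exact Real.rpow_le_rpow h0 h1 (by linarith)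
      _ ≤ d ^ α * Real.pi := by
          apply mul_le_mul_of_nonneg_left _ (Real.rpow_nonneg h0 _)
          have := Real.rpow_le_rpow_of_exponent_le one_le_pi (show (1-α : ℝ) ≤ 1 by linarith)
          simpa [Real.rpow_one] using this
      _ = Real.pi * d ^ α := mul_comm _ _

section core
variable {φ : ℝ → ℝ} {K α : ℝ}

lemma FF_le (hb : ∀ t, |deriv (deriv φ) t| ≤ K) {x : ℝ} (hx : |x| ≤ Real.pi/2) :
    |FF φ x| ≤ 4*K := by
  have hK : 0 ≤ K := le_trans (abs_nonneg _) (hb 0)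
  have hs := S_ge x hx
  rw [FF, abs_div, div_le_iff₀ (by positivity)]
  have h2 : (1:ℝ)/4 ≤ |S x ^ 2| := by
    rw [abs_of_nonneg (by positivity)]; nlinarith
  nlinarith [W_le hb x, abs_nonneg (W φ x)]

lemma GG_le (hb : ∀ t, |deriv (deriv φ) t| ≤ K) {x : ℝ} (hx : |x| ≤ Real.pi/2) :
    |GG φ x| ≤ 2*K := by
  have hK : 0 ≤ K := le_trans (abs_nonneg _) (hb 0)
  have hs := S_ge x hx
  rw [GG, abs_div, div_le_iff₀ (by positivity)]
  have h2 : (1:ℝ)/2 ≤ |S x| := by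
    rw [abs_of_nonneg (by linarith)]; linarith
  nlinarith [U_le hb x, abs_nonneg (U φ x)]

lemma FF_hold (hα : 0 < α) (hα1 : α ≤ 1) (hc2 : Continuous (deriv (deriv φ)))
    (hb : ∀ t, |deriv (deriv φ) t| ≤ K)
    (hh : ∀ s t, |deriv (deriv φ) s - deriv (deriv φ) t| ≤ K * |s-t|^α)
    {x y : ℝ} (hx : |x| ≤ Real.pi/2) (hy : |y| ≤ Real.pi/2) :
    |FF φ x - FF φ y| ≤ 150*K*|x-y|^α := by
  have hK : 0 ≤ K := le_trans (abs_nonneg _) (hb 0)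
  have hs := S_ge x hx
  have ht := S_ge y hy
  have hs1 : S x ≤ 1 := le_trans (le_abs_self _) (absS_le x)
  have ht1 : S y ≤ 1 := le_trans (le_abs_self _) (absS_le y)
  have hsne : S x ≠ 0 := by linarith
  have htne : S y ≠ 0 := by linarith
  have hr : (0:ℝ) ≤ |x-y|^α := Real.rpow_nonneg (abs_nonneg _) _
  have hdxy : |x - y| ≤ Real.pi := by
    calc |x - y| ≤ |x| + |y| := abs_sub _ _
      _ ≤ Real.pi := by linarith
  have hdle : |x - y| ≤ Real.pi * |x-y|^α := d_le_pi_rpow hα hα1 _ (abs_nonneg _) hdxy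
  have key : FF φ x - FF φ y = (W φ x * S y^2 - W φ y * S x^2)/(S x^2 * S y^2) := by
    rw [FF, FF]; field_simp
  rw [key, abs_div, div_le_iff₀ (by positivity)]
  have hnum : |W φ x * S y^2 - W φ y * S x^2| ≤ 8*K*|x-y|^α := by
    have e : W φ x * S y^2 - W φ y * S x^2
        = (W φ x - W φ y) * S y^2 + W φ y * ((S y - S x)*(S y + S x)) := by ring
    rw [e]
    calc |(W φ x - W φ y) * S y^2 + W φ y * ((S y - S x)*(S y + S x))|
        ≤ |(W φ x - W φ y) * S y^2| + |W φ y * ((S y - S x)*(S y + S x))| := abs_add_le _ _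
      _ ≤ K*|x-y|^α * 1 + K * (|x-y| * 2) := by
          apply add_le_add
          · rw [abs_mul]
            apply mul_le_mul (W_hold hα hc2 hb hh x y) _ (abs_nonneg _) (by positivity)
            rw [abs_of_nonneg (by positivity)]; nlinarith
          · rw [abs_mul, abs_mul]
            have h1 : |S y - S x| ≤ |x - y| := by
              calc |S y - S x| ≤ |y - x| := S_lip y x
                _ = |x - y| := abs_sub_comm _ _
            have h2 : |S y + S x| ≤ 2 := by rw [abs_of_nonneg (by linarith)]; linarith
            have h3 : |S y - S x| * |S y + S x| ≤ |x - y| * 2 :=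
              mul_le_mul h1 h2 (abs_nonneg _) (abs_nonneg _)
            exact mul_le_mul (W_le hb y) h3 (by positivity) hK
      _ ≤ K*|x-y|^α + 2*K*(Real.pi * |x-y|^α) := by nlinarith
      _ ≤ 8*K*|x-y|^α := by nlinarith [Real.pi_lt_d2, mul_nonneg hK hr]
  have hx2 : (1:ℝ)/4 ≤ S x^2 := by nlinarith
  have hy2 : (1:ℝ)/4 ≤ S y^2 := by nlinarith
  have hden : (1:ℝ)/16 ≤ |S x^2 * S y^2| := by
    rw [abs_of_nonneg (by positivity)]
    nlinarith [mul_nonneg (sub_nonneg.2 hx2) (sub_nonneg.2 hy2)]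
  have hfin : 8*K*|x-y|^α ≤ 150*K*|x-y|^α * (1/16) := by nlinarith [mul_nonneg hK hr]
  have hfin2 : 150*K*|x-y|^α * (1/16) ≤ 150*K*|x-y|^α * |S x^2*S y^2| :=
    mul_le_mul_of_nonneg_left hden (by positivity)
  linarith

lemma GG_hold (hα : 0 < α) (hα1 : α ≤ 1) (hc2 : Continuous (deriv (deriv φ)))
    (hb : ∀ t, |deriv (deriv φ) t| ≤ K)
    (hh : ∀ s t, |deriv (deriv φ) s - deriv (deriv φ) t| ≤ K * |s-t|^α)
    {x y : ℝ} (hx : |x| ≤ Real.pi/2) (hy : |y| ≤ Real.pi/2) :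
    |GG φ x - GG φ y| ≤ 150*K*|x-y|^α := by
  have hK : 0 ≤ K := le_trans (abs_nonneg _) (hb 0)
  have hs := S_ge x hx
  have ht := S_ge y hy
  have hs1 : S x ≤ 1 := le_trans (le_abs_self _) (absS_le x)
  have ht1 : S y ≤ 1 := le_trans (le_abs_self _) (absS_le y)
  have hsne : S x ≠ 0 := by linarith
  have htne : S y ≠ 0 := by linarith
  have hr : (0:ℝ) ≤ |x-y|^α := Real.rpow_nonneg (abs_nonneg _) _
  have hdxy : |x - y| ≤ Real.pi := by
    calc |x - y| ≤ |x| + |y| := abs_sub _ _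
      _ ≤ Real.pi := by linarith
  have hdle : |x - y| ≤ Real.pi * |x-y|^α := d_le_pi_rpow hα hα1 _ (abs_nonneg _) hdxy
  have key : GG φ x - GG φ y = (U φ x * S y - U φ y * S x)/(S x * S y) := by
    rw [GG, GG]; field_simp
  rw [key, abs_div, div_le_iff₀ (by positivity)]
  have hnum : |U φ x * S y - U φ y * S x| ≤ 8*K*|x-y|^α := by
    have e : U φ x * S y - U φ y * S x
        = (U φ x - U φ y) * S y + U φ y * (S y - S x) := by ring
    rw [e]
    calc |(U φ x - U φ y) * S y + U φ y * (S y - S x)|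
        ≤ |(U φ x - U φ y) * S y| + |U φ y * (S y - S x)| := abs_add_le _ _
      _ ≤ K*|x-y|^α * 1 + K * |x-y| := by
          apply add_le_add
          · rw [abs_mul]
            apply mul_le_mul (U_hold hα hc2 hb hh x y) _ (abs_nonneg _) (by positivity)
            rw [abs_of_nonneg (by linarith)]; linarith
          · rw [abs_mul]
            have h1 : |S y - S x| ≤ |x - y| := by
              calc |S y - S x| ≤ |y - x| := S_lip y x
                _ = |x - y| := abs_sub_comm _ _
            exact mul_le_mul (U_le hb y) h1 (abs_nonneg _) hK
      _ ≤ K*|x-y|^α + K*(Real.pi * |x-y|^α) := by nlinarith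
      _ ≤ 8*K*|x-y|^α := by nlinarith [Real.pi_lt_d2, mul_nonneg hK hr]
  have hden : (1:ℝ)/4 ≤ |S x * S y| := by
    rw [abs_of_nonneg (by positivity)]
    nlinarith [mul_nonneg (sub_nonneg.2 hs) (sub_nonneg.2 ht)]
  have hfin : 8*K*|x-y|^α ≤ 150*K*|x-y|^α * (1/4) := by nlinarith [mul_nonneg hK hr]
  have hfin2 : 150*K*|x-y|^α * (1/4) ≤ 150*K*|x-y|^α * |S x*S y| :=
    mul_le_mul_of_nonneg_left hden (by positivity)
  linarith

end core

lemma FF_eq {φ : ℝ → ℝ} (hφ : ContDiff ℝ 2 φ) (h0 : φ 0 = 0) (h0' : deriv φ 0 = 0) {x : ℝ}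
    (hx0 : x ≠ 0) (hS : S x ≠ 0) : φ x / Real.sin x ^ 2 = FF φ x := by
  rw [← W_id φ hφ h0 h0' x, ← S_id x, FF]
  field_simp

lemma GG_eq {φ : ℝ → ℝ} (hφ : ContDiff ℝ 2 φ) (h0' : deriv φ 0 = 0) {x : ℝ}
    (hx0 : x ≠ 0) (hS : S x ≠ 0) : deriv φ x / Real.sin x = GG φ x := by
  rw [← U_id φ hφ h0' x, ← S_id x, GG]
  field_simp

lemma FF_zero (φ : ℝ → ℝ) : FF φ 0 = deriv (deriv φ) 0 / 2 := by
  rw [FF, W0, S0]; norm_num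

lemma GG_zero (φ : ℝ → ℝ) : GG φ 0 = deriv (deriv φ) 0 := by
  rw [GG, U0, S0]; norm_num

lemma periodic_deriv (f : ℝ → ℝ) (hf : Differentiable ℝ f) {c : ℝ}
    (hp : Function.Periodic f c) : Function.Periodic (deriv f) c := by
  intro x
  have d1 : HasDerivAt (fun y => f (y + c)) (deriv f (x + c) * 1) x :=
    ((hf (x+c)).hasDerivAt).comp x ((hasDerivAt_id x).add_const c)
  rw [hp.funext] at d1
  simpa using d1.deriv.symm

noncomputable def pfold (x : ℝ) : ℝ := |x - 2*Real.pi*(round (x/(2*Real.pi)) : ℤ)|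

lemma pfold_nonneg (x : ℝ) : 0 ≤ pfold x := abs_nonneg _

lemma pfold_le_pi (x : ℝ) : pfold x ≤ Real.pi := by
  have h2π : (0:ℝ) < 2*Real.pi := by positivity
  have h := abs_sub_round (x/(2*Real.pi))
  have e : x - 2*Real.pi*(round (x/(2*Real.pi)) : ℤ) = (2*Real.pi) * (x/(2*Real.pi) - (round (x/(2*Real.pi)) : ℤ)) := by
    field_simp
  rw [pfold, e, abs_mul, abs_of_pos h2π]
  nlinarith [abs_nonneg (x/(2*Real.pi) - (round (x/(2*Real.pi)) : ℤ))]

lemma pfold_min (x : ℝ) (k : ℤ) : pfold x ≤ |x - 2*Real.pi*(k:ℝ)| := by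
  set k0 : ℤ := round (x/(2*Real.pi)) with hk0
  rcases eq_or_ne k k0 with rfl|hne
  · exact le_refl _
  · have h1 : (1:ℝ) ≤ |(k:ℝ) - (k0:ℝ)| := by
      have : (1:ℤ) ≤ |k - k0| := Int.one_le_abs (sub_ne_zero.2 hne)
      calc (1:ℝ) = ((1:ℤ):ℝ) := by norm_num
        _ ≤ ((|k - k0|:ℤ):ℝ) := by exact_mod_cast this
        _ = |(k:ℝ) - (k0:ℝ)| := by rw [Int.cast_abs]; push_cast; ring_nf
    have h2π : (0:ℝ) < 2*Real.pi := by positivity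
    have h2 : 2*Real.pi ≤ |2*Real.pi*(k0:ℝ) - 2*Real.pi*(k:ℝ)| := by
      rw [← mul_sub, abs_mul, abs_of_pos h2π]
      nlinarith [abs_sub_comm ((k:ℝ)) ((k0:ℝ))]
    have h3 : |2*Real.pi*(k0:ℝ) - 2*Real.pi*(k:ℝ)| ≤ |2*Real.pi*(k0:ℝ) - x| + |x - 2*Real.pi*(k:ℝ)| := by
      have := abs_sub_le (2*Real.pi*(k0:ℝ)) x (2*Real.pi*(k:ℝ))
      linarith
    have h4 : |2*Real.pi*(k0:ℝ) - x| = pfold x := by rw [abs_sub_comm, pfold]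
    have h5 := pfold_le_pi x
    have hπ : 0 < Real.pi := Real.pi_pos
    rw [h4] at h3
    linarith

lemma pfold_eq (f : ℝ → ℝ) (hp : Function.Periodic f (2*Real.pi)) (he : ∀ x, f (-x) = f x)
    (x : ℝ) : f (pfold x) = f x := by
  have key : ∀ z : ℝ, ∀ n : ℤ, f (z - (n:ℝ)*(2*Real.pi)) = f z := fun z n => hp.sub_int_mul_eq n
  rcases abs_cases (x - 2*Real.pi*((round (x/(2*Real.pi)) : ℤ):ℝ)) with ⟨h1,-⟩|⟨h1,-⟩
  · rw [pfold, h1, show x - 2*Real.pi*((round (x/(2*Real.pi)) : ℤ):ℝ)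
        = x - ((round (x/(2*Real.pi)) : ℤ):ℝ)*(2*Real.pi) by ring]
    exact key x _
  · rw [pfold, h1, show -(x - 2*Real.pi*((round (x/(2*Real.pi)) : ℤ):ℝ))
        = -(x - ((round (x/(2*Real.pi)) : ℤ):ℝ)*(2*Real.pi)) by ring, he]
    exact key x _

lemma pfold_lip (x y : ℝ) : |pfold x - pfold y| ≤ |x - y| := by
  rw [abs_sub_le_iff]
  constructor
  · have h1 : pfold x ≤ |x - 2*Real.pi*((round (y/(2*Real.pi)) : ℤ):ℝ)| := pfold_min x _
    have h2 := abs_sub_le x y (2*Real.pi*((round (y/(2*Real.pi)) : ℤ):ℝ))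
    have h3 : |y - 2*Real.pi*((round (y/(2*Real.pi)) : ℤ):ℝ)| = pfold y := rfl
    linarith
  · have h1 : pfold y ≤ |y - 2*Real.pi*((round (x/(2*Real.pi)) : ℤ):ℝ)| := pfold_min y _
    have h2 := abs_sub_le y x (2*Real.pi*((round (x/(2*Real.pi)) : ℤ):ℝ))
    have h3 : |x - 2*Real.pi*((round (x/(2*Real.pi)) : ℤ):ℝ)| = pfold x := rfl
    have h4 : |y - x| = |x - y| := abs_sub_comm _ _
    linarith

end Stmt7A

/-- Lemma 2.1: for `h` even, `2π`-periodic, of class `C^{2+α}` with `h(0)=h(π)=0`,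
the functions `h/sin²` and `h'/sin` extend to `α`-Hölder continuous periodic even
functions, with `‖h/sin²‖_α + ‖h'/sin‖_α ≤ C‖h‖_{C^{2+α}}` for a constant `C = C(α)`. -/
theorem stmt7 (α : ℝ) (hα : α ∈ Ioo (0:ℝ) 1) :
    ∃ C > (0:ℝ), ∀ h : ℝ → ℝ,
      Function.Periodic h (2 * Real.pi) →
      (∀ x, h (-x) = h x) →
      ContDiff ℝ 2 h →
      (∃ C2 : ℝ, ∀ x y, |iteratedDeriv 2 h x - iteratedDeriv 2 h y| ≤ C2 * |x - y| ^ α) →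
      h 0 = 0 → h Real.pi = 0 →
      ∃ f g : ℝ → ℝ,
        (∀ x, Real.sin x ≠ 0 → f x = h x / Real.sin x ^ 2) ∧
        (∀ x, Real.sin x ≠ 0 → g x = deriv h x / Real.sin x) ∧
        Continuous f ∧ Continuous g ∧
        Function.Periodic f (2 * Real.pi) ∧ Function.Periodic g (2 * Real.pi) ∧
        (∀ x, f (-x) = f x) ∧ (∀ x, g (-x) = g x) ∧
        (∃ Cf : ℝ, ∀ x y, |f x - f y| ≤ Cf * |x - y| ^ α) ∧
        (∃ Cg : ℝ, ∀ x y, |g x - g y| ≤ Cg * |x - y| ^ α) ∧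
        hNormOn 0 α f univ + hNormOn 0 α g univ ≤ C * hNormOn 2 α h univ := by
  
  obtain ⟨hα0, hα1⟩ := hα
  have hπ : (0:ℝ) < Real.pi := Real.pi_pos
  refine ⟨1000, by norm_num, ?_⟩
  intro h hper heven hC2 hhold h0 hπ0
  obtain ⟨hd0, hd1, hc2⟩ := Stmt7A.facts h hC2
  have hit2 : iteratedDeriv 2 h = deriv (deriv h) := by
    rw [iteratedDeriv_succ, iteratedDeriv_one]
  -- oddness/evenness of derivatives
  have hodd : ∀ x, deriv h (-x) = - deriv h x := by
    intro x
    have d1 : HasDerivAt (fun y => h (-y)) (deriv h (-x) * (-1)) x :=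
      ((hd0 (-x)).hasDerivAt).comp x (hasDerivAt_neg x)
    rw [funext heven] at d1
    have := d1.deriv
    linarith
  have heven2 : ∀ x, deriv (deriv h) (-x) = deriv (deriv h) x := by
    intro x
    have e : (fun y => - deriv h (-y)) = deriv h := funext (fun y => by rw [hodd y]; ring)
    have d1 : HasDerivAt (fun y => - deriv h (-y)) (-(deriv (deriv h) (-x) * (-1))) x :=
      (((hd1 (-x)).hasDerivAt).comp x (hasDerivAt_neg x)).neg
    rw [e] at d1
    have := d1.deriv
    linarith
  have h0' : deriv h 0 = 0 := by have := hodd 0; rw [neg_zero] at this; linarith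
  have hperd : Function.Periodic (deriv h) (2*Real.pi) := by
    have := Stmt7A.periodic_deriv h hd0 (by exact_mod_cast hper)
    exact this
  have hperd2 : Function.Periodic (deriv (deriv h)) (2*Real.pi) :=
    Stmt7A.periodic_deriv (deriv h) hd1 hperd
  have hπ' : deriv h Real.pi = 0 := by
    have e1 : deriv h (-Real.pi + 2*Real.pi) = deriv h (-Real.pi) := hperd (-Real.pi)
    rw [show -Real.pi + 2*Real.pi = Real.pi by ring, hodd Real.pi] at e1
    linarith
  -- the norm K and pointwise bounds
  set K := hNormOn 2 α h univ with hKdef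
  have hKsum : K = supOn (iteratedDeriv 0 h) univ + supOn (iteratedDeriv 1 h) univ
      + supOn (iteratedDeriv 2 h) univ + hSemiOn α (iteratedDeriv 2 h) univ := by
    rw [hKdef, hNormOn, Finset.sum_range_succ, Finset.sum_range_succ, Finset.sum_range_one]
  have n0 : 0 ≤ supOn (iteratedDeriv 0 h) univ :=
    Real.sSup_nonneg (by rintro r ⟨u,-,rfl⟩; exact abs_nonneg _)
  have n1 : 0 ≤ supOn (iteratedDeriv 1 h) univ :=
    Real.sSup_nonneg (by rintro r ⟨u,-,rfl⟩; exact abs_nonneg _)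
  have n2 : 0 ≤ supOn (iteratedDeriv 2 h) univ :=
    Real.sSup_nonneg (by rintro r ⟨u,-,rfl⟩; exact abs_nonneg _)
  have n3 : 0 ≤ hSemiOn α (iteratedDeriv 2 h) univ := by
    apply Real.sSup_nonneg
    rintro r ⟨u,-,v,-,huv,rfl⟩
    positivity
  have hK0 : 0 ≤ K := by rw [hKsum]; linarith
  have hbdd2 : ∃ M, ∀ t, |deriv (deriv h) t| ≤ M := by
    obtain ⟨M, hM⟩ :=
      (isCompact_Icc (a := (0:ℝ)) (b := Real.pi)).exists_bound_of_continuousOn hc2.continuousOn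
    refine ⟨M, fun t => ?_⟩
    rw [← Stmt7A.pfold_eq _ hperd2 heven2 t]
    simpa [Real.norm_eq_abs] using hM _ ⟨Stmt7A.pfold_nonneg t, Stmt7A.pfold_le_pi t⟩
  have hKb : ∀ t, |deriv (deriv h) t| ≤ K := by
    intro t
    have hsub : |deriv (deriv h) t| ≤ supOn (iteratedDeriv 2 h) univ := by
      apply le_csSup
      · obtain ⟨M, hM⟩ := hbdd2
        exact ⟨M, by rintro r ⟨u, -, rfl⟩; rw [hit2]; exact hM u⟩
      · exact ⟨t, mem_univ t, by rw [hit2]⟩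
    rw [hKsum]; linarith
  have hKh : ∀ s t, |deriv (deriv h) s - deriv (deriv h) t| ≤ K * |s - t|^α := by
    intro s t
    rcases eq_or_ne s t with rfl|hst
    · simp only [sub_self, abs_zero]
      positivity
    · obtain ⟨C2, hC2'⟩ := hhold
      have hpos : 0 < |s - t|^α := Real.rpow_pos_of_pos (abs_pos.2 (sub_ne_zero.2 hst)) _
      have hsemile : |iteratedDeriv 2 h s - iteratedDeriv 2 h t| / |s-t|^α
          ≤ hSemiOn α (iteratedDeriv 2 h) univ := by
        apply le_csSup
        · refine ⟨max C2 0, ?_⟩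
          rintro r ⟨x,-,y,-,hxy,rfl⟩
          have hpos2 : 0 < |x - y|^α := Real.rpow_pos_of_pos (abs_pos.2 (sub_ne_zero.2 hxy)) _
          rw [div_le_iff₀ hpos2]
          exact le_trans (hC2' x y)
            (mul_le_mul_of_nonneg_right (le_max_left _ _) (Real.rpow_nonneg (abs_nonneg _) _))
        · exact ⟨s, mem_univ s, t, mem_univ t, hst, rfl⟩
      have : |iteratedDeriv 2 h s - iteratedDeriv 2 h t| / |s-t|^α ≤ K := by
        rw [hKsum]; linarith
      rw [div_le_iff₀ hpos] at this
      rw [← hit2]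
      exact this
  -- define f and g
  set f : ℝ → ℝ := fun x => if Real.sin x = 0 then deriv (deriv h) x / 2 else h x / Real.sin x ^ 2 with hfdef
  set g : ℝ → ℝ := fun x => if Real.sin x = 0 then deriv (deriv h) x * Real.cos x else deriv h x / Real.sin x with hgdef
  set H : ℝ → ℝ := fun t => h (Real.pi - t) with hHdef
  have hHcd : ContDiff ℝ 2 H := hC2.comp (contDiff_const.sub contDiff_id)
  have hHd : deriv H = fun t => -deriv h (Real.pi - t) := by
    funext t
    have d1 : HasDerivAt H (deriv h (Real.pi - t) * (-1)) t :=
      ((hd0 (Real.pi - t)).hasDerivAt).comp t ((hasDerivAt_id t).const_sub Real.pi)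
    rw [d1.deriv]; ring
  have hHdd : deriv (deriv H) = fun t => deriv (deriv h) (Real.pi - t) := by
    rw [hHd]; funext t
    have d1 : HasDerivAt (fun t => -deriv h (Real.pi - t)) (-(deriv (deriv h) (Real.pi - t) * (-1))) t :=
      (((hd1 (Real.pi - t)).hasDerivAt).comp t ((hasDerivAt_id t).const_sub Real.pi)).neg
    rw [d1.deriv]; ring
  have hH0 : H 0 = 0 := by rw [hHdef]; simp [hπ0]
  have hH0' : deriv H 0 = 0 := by rw [hHd]; simp [hπ']
  have hHb : ∀ t, |deriv (deriv H) t| ≤ K := by rw [hHdd]; intro t; exact hKb _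
  have hHh : ∀ s t, |deriv (deriv H) s - deriv (deriv H) t| ≤ K * |s - t|^α := by
    rw [hHdd]; intro s t
    have h1 := hKh (Real.pi - s) (Real.pi - t)
    have e : Real.pi - s - (Real.pi - t) = -(s - t) := by ring
    rw [e, abs_neg] at h1
    exact h1
  have hHc2 : Continuous (deriv (deriv H)) := by
    rw [hHdd]; exact hc2.comp (continuous_const.sub continuous_id)
  -- piecewise identities
  have hfFF : ∀ x ∈ Icc (0:ℝ) (Real.pi/2), f x = Stmt7A.FF h x := by
    rintro x ⟨hx0, hx2⟩
    rcases eq_or_ne x 0 with rfl|hxne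
    · simp only [hfdef]
      rw [if_pos Real.sin_zero, Stmt7A.FF_zero]
    · have hxpos : 0 < x := lt_of_le_of_ne hx0 (Ne.symm hxne)
      have hxlt : x < Real.pi := lt_of_le_of_lt hx2 (by linarith)
      have hsin : Real.sin x ≠ 0 := ne_of_gt (Real.sin_pos_of_pos_of_lt_pi hxpos hxlt)
      have hS : Stmt7A.S x ≠ 0 := by
        have := Stmt7A.S_ge x (by rw [abs_of_nonneg hx0]; exact hx2); linarith
      simp only [hfdef, if_neg hsin]
      exact Stmt7A.FF_eq hC2 h0 h0' hxne hS
  have hgGG : ∀ x ∈ Icc (0:ℝ) (Real.pi/2), g x = Stmt7A.GG h x := by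
    rintro x ⟨hx0, hx2⟩
    rcases eq_or_ne x 0 with rfl|hxne
    · simp only [hgdef]
      rw [if_pos Real.sin_zero, Stmt7A.GG_zero, Real.cos_zero, mul_one]
    · have hxpos : 0 < x := lt_of_le_of_ne hx0 (Ne.symm hxne)
      have hxlt : x < Real.pi := lt_of_le_of_lt hx2 (by linarith)
      have hsin : Real.sin x ≠ 0 := ne_of_gt (Real.sin_pos_of_pos_of_lt_pi hxpos hxlt)
      have hS : Stmt7A.S x ≠ 0 := by
        have := Stmt7A.S_ge x (by rw [abs_of_nonneg hx0]; exact hx2); linarith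
      simp only [hgdef, if_neg hsin]
      exact Stmt7A.GG_eq hC2 h0' hxne hS
  have hfH : ∀ x ∈ Icc (Real.pi/2) Real.pi, f x = Stmt7A.FF H (Real.pi - x) := by
    rintro x ⟨hx1, hx2⟩
    rcases eq_or_ne x Real.pi with rfl|hxne
    · simp only [hfdef, Real.sin_pi, if_pos rfl, sub_self]
      rw [Stmt7A.FF_zero, hHdd]
      norm_num
    · have hxlt : x < Real.pi := lt_of_le_of_ne hx2 hxne
      have hxpos : 0 < x := by linarith
      have hsin : Real.sin x ≠ 0 := ne_of_gt (Real.sin_pos_of_pos_of_lt_pi hxpos hxlt)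
      have htpos : Real.pi - x ≠ 0 := sub_ne_zero.mpr (Ne.symm hxne)
      have htmem : |Real.pi - x| ≤ Real.pi/2 := by rw [abs_of_nonneg (by linarith)]; linarith
      have hS : Stmt7A.S (Real.pi - x) ≠ 0 := by
        have := Stmt7A.S_ge _ htmem; linarith
      have hsin_t : Real.sin (Real.pi - x) = Real.sin x := Real.sin_pi_sub x
      have hHt : H (Real.pi - x) = h x := by
        simp only [hHdef]
        rw [show Real.pi - (Real.pi - x) = x by ring]
      simp only [hfdef, if_neg hsin]
      rw [← hHt, ← hsin_t]
      exact Stmt7A.FF_eq hHcd hH0 hH0' htpos hS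
  have hgH : ∀ x ∈ Icc (Real.pi/2) Real.pi, g x = -(Stmt7A.GG H (Real.pi - x)) := by
    rintro x ⟨hx1, hx2⟩
    rcases eq_or_ne x Real.pi with rfl|hxne
    · simp only [hgdef, Real.sin_pi, if_pos rfl, sub_self, Real.cos_pi]
      rw [Stmt7A.GG_zero, hHdd]
      norm_num
    · have hxlt : x < Real.pi := lt_of_le_of_ne hx2 hxne
      have hxpos : 0 < x := by linarith
      have hsin : Real.sin x ≠ 0 := ne_of_gt (Real.sin_pos_of_pos_of_lt_pi hxpos hxlt)
      have htpos : Real.pi - x ≠ 0 := sub_ne_zero.mpr (Ne.symm hxne)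
      have htmem : |Real.pi - x| ≤ Real.pi/2 := by rw [abs_of_nonneg (by linarith)]; linarith
      have hS : Stmt7A.S (Real.pi - x) ≠ 0 := by
        have := Stmt7A.S_ge _ htmem; linarith
      have hsin_t : Real.sin (Real.pi - x) = Real.sin x := Real.sin_pi_sub x
      have hHt : deriv H (Real.pi - x) = - deriv h x := by
        rw [hHd]
        simp only []
        rw [show Real.pi - (Real.pi - x) = x by ring]
      simp only [hgdef, if_neg hsin]
      rw [← Stmt7A.GG_eq hHcd hH0' htpos hS, hHt, hsin_t]
      field_simp
  -- periodicity and evenness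
  have hfper : Function.Periodic f (2*Real.pi) := by
    intro x
    simp only [hfdef]
    rw [Real.sin_add_two_pi, hper x, hperd2 x]
  have hgper : Function.Periodic g (2*Real.pi) := by
    intro x
    simp only [hgdef]
    rw [Real.sin_add_two_pi, Real.cos_add_two_pi, hperd x, hperd2 x]
  have hfeven : ∀ x, f (-x) = f x := by
    intro x
    simp only [hfdef, Real.sin_neg, neg_eq_zero, heven x, heven2 x, neg_sq]
  have hgeven : ∀ x, g (-x) = g x := by
    intro x
    simp only [hgdef, Real.sin_neg, neg_eq_zero, hodd x, heven2 x, Real.cos_neg, neg_div_neg_eq]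
  -- piecewise bounds
  have habs1 : ∀ x ∈ Icc (0:ℝ) (Real.pi/2), |x| ≤ Real.pi/2 := fun x hx => by
    rw [abs_of_nonneg hx.1]; exact hx.2
  have habs2 : ∀ x ∈ Icc (Real.pi/2) Real.pi, |Real.pi - x| ≤ Real.pi/2 := fun x hx => by
    rw [abs_of_nonneg (by linarith [hx.2])]; linarith [hx.1]
  have hfsupP : ∀ x ∈ Icc (0:ℝ) Real.pi, |f x| ≤ 4*K := by
    rintro x ⟨hx0, hx1⟩
    rcases le_total x (Real.pi/2) with hc|hc
    · rw [hfFF x ⟨hx0, hc⟩]; exact Stmt7A.FF_le hKb (habs1 x ⟨hx0, hc⟩)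
    · rw [hfH x ⟨hc, hx1⟩]; exact Stmt7A.FF_le hHb (habs2 x ⟨hc, hx1⟩)
  have hgsupP : ∀ x ∈ Icc (0:ℝ) Real.pi, |g x| ≤ 4*K := by
    rintro x ⟨hx0, hx1⟩
    rcases le_total x (Real.pi/2) with hc|hc
    · calc |g x| = |Stmt7A.GG h x| := by rw [hgGG x ⟨hx0, hc⟩]
        _ ≤ 2*K := Stmt7A.GG_le hKb (habs1 x ⟨hx0, hc⟩)
        _ ≤ 4*K := by linarith
    · calc |g x| = |-(Stmt7A.GG H (Real.pi - x))| := by rw [hgH x ⟨hc, hx1⟩]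
        _ = |Stmt7A.GG H (Real.pi - x)| := abs_neg _
        _ ≤ 2*K := Stmt7A.GG_le hHb (habs2 x ⟨hc, hx1⟩)
        _ ≤ 4*K := by linarith
  have hfhA : ∀ x ∈ Icc (0:ℝ) (Real.pi/2), ∀ y ∈ Icc (0:ℝ) (Real.pi/2),
      |f x - f y| ≤ 150*K*|x-y|^α := by
    intro x hx y hy
    rw [hfFF x hx, hfFF y hy]
    exact Stmt7A.FF_hold hα0 hα1.le hc2 hKb hKh (habs1 x hx) (habs1 y hy)
  have hfhB : ∀ x ∈ Icc (Real.pi/2) Real.pi, ∀ y ∈ Icc (Real.pi/2) Real.pi,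
      |f x - f y| ≤ 150*K*|x-y|^α := by
    intro x hx y hy
    rw [hfH x hx, hfH y hy]
    have t := Stmt7A.FF_hold (φ := H) hα0 hα1.le hHc2 hHb hHh (habs2 x hx) (habs2 y hy)
    rw [show Real.pi - x - (Real.pi - y) = -(x - y) by ring, abs_neg] at t
    exact t
  have hghA : ∀ x ∈ Icc (0:ℝ) (Real.pi/2), ∀ y ∈ Icc (0:ℝ) (Real.pi/2),
      |g x - g y| ≤ 150*K*|x-y|^α := by
    intro x hx y hy
    rw [hgGG x hx, hgGG y hy]
    exact Stmt7A.GG_hold hα0 hα1.le hc2 hKb hKh (habs1 x hx) (habs1 y hy)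
  have hghB : ∀ x ∈ Icc (Real.pi/2) Real.pi, ∀ y ∈ Icc (Real.pi/2) Real.pi,
      |g x - g y| ≤ 150*K*|x-y|^α := by
    intro x hx y hy
    rw [hgH x hx, hgH y hy,
      show -(Stmt7A.GG H (Real.pi - x)) - -(Stmt7A.GG H (Real.pi - y))
        = -(Stmt7A.GG H (Real.pi - x) - Stmt7A.GG H (Real.pi - y)) by ring, abs_neg]
    have t := Stmt7A.GG_hold (φ := H) hα0 hα1.le hHc2 hHb hHh (habs2 x hx) (habs2 y hy)
    rw [show Real.pi - x - (Real.pi - y) = -(x - y) by ring, abs_neg] at t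
    exact t
  -- glue on [0, π]
  have hmid : Real.pi/2 ∈ Icc (0:ℝ) (Real.pi/2) := ⟨by linarith, le_refl _⟩
  have hmid2 : Real.pi/2 ∈ Icc (Real.pi/2) Real.pi := ⟨le_refl _, by linarith⟩
  have glue : ∀ F : ℝ → ℝ,
      (∀ x ∈ Icc (0:ℝ) (Real.pi/2), ∀ y ∈ Icc (0:ℝ) (Real.pi/2), |F x - F y| ≤ 150*K*|x-y|^α) →
      (∀ x ∈ Icc (Real.pi/2) Real.pi, ∀ y ∈ Icc (Real.pi/2) Real.pi, |F x - F y| ≤ 150*K*|x-y|^α) →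
      ∀ x ∈ Icc (0:ℝ) Real.pi, ∀ y ∈ Icc (0:ℝ) Real.pi, |F x - F y| ≤ 300*K*|x-y|^α := by
    intro F hA hB
    have main : ∀ x ∈ Icc (0:ℝ) Real.pi, ∀ y ∈ Icc (0:ℝ) Real.pi, x ≤ y →
        |F x - F y| ≤ 300*K*|x-y|^α := by
      rintro x ⟨hx0,hx1⟩ y ⟨hy0,hy1⟩ hxy
      have hrpow : (0:ℝ) ≤ |x-y|^α := Real.rpow_nonneg (abs_nonneg _) _
      have hnn : (0:ℝ) ≤ 150*K*|x-y|^α := by positivity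
      rcases le_total y (Real.pi/2) with hc|hc
      · have := hA x ⟨hx0, by linarith⟩ y ⟨hy0, hc⟩
        linarith
      · rcases le_total (Real.pi/2) x with hc2'|hc2'
        · have := hB x ⟨hc2', hx1⟩ y ⟨hc, hy1⟩
          linarith
        · have t1 := hA x ⟨hx0, hc2'⟩ (Real.pi/2) hmid
          have t2 := hB (Real.pi/2) hmid2 y ⟨hc, hy1⟩
          have e1 : |x - Real.pi/2| ≤ |x - y| := by
            rw [abs_of_nonpos (by linarith), abs_of_nonpos (by linarith)]; linarith
          have e2 : |Real.pi/2 - y| ≤ |x - y| := by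
            rw [abs_of_nonpos (by linarith), abs_of_nonpos (by linarith)]; linarith
          have r1 : |x - Real.pi/2|^α ≤ |x-y|^α := Real.rpow_le_rpow (abs_nonneg _) e1 hα0.le
          have r2 : |Real.pi/2 - y|^α ≤ |x-y|^α := Real.rpow_le_rpow (abs_nonneg _) e2 hα0.le
          have tri : |F x - F y| ≤ |F x - F (Real.pi/2)| + |F (Real.pi/2) - F y| := abs_sub_le _ _ _
          have m1 : 150*K*|x - Real.pi/2|^α ≤ 150*K*|x-y|^α :=
            mul_le_mul_of_nonneg_left r1 (by positivity)
          have m2 : 150*K*|Real.pi/2 - y|^α ≤ 150*K*|x-y|^α :=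
            mul_le_mul_of_nonneg_left r2 (by positivity)
          linarith
    intro x hx y hy
    rcases le_total x y with hxy|hxy
    · exact main x hx y hy hxy
    · rw [abs_sub_comm, abs_sub_comm x y]
      exact main y hy x hx hxy
  have hfPi := glue f hfhA hfhB
  have hgPi := glue g hghA hghB
  -- global bounds
  have hpfoldmem : ∀ x, Stmt7A.pfold x ∈ Icc (0:ℝ) Real.pi :=
    fun x => ⟨Stmt7A.pfold_nonneg x, Stmt7A.pfold_le_pi x⟩
  have hfglobal : ∀ x y, |f x - f y| ≤ 300*K*|x-y|^α := by
    intro x y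
    rw [← Stmt7A.pfold_eq f hfper hfeven x, ← Stmt7A.pfold_eq f hfper hfeven y]
    refine le_trans (hfPi _ (hpfoldmem x) _ (hpfoldmem y)) ?_
    exact mul_le_mul_of_nonneg_left
      (Real.rpow_le_rpow (abs_nonneg _) (Stmt7A.pfold_lip x y) hα0.le) (by positivity)
  have hgglobal : ∀ x y, |g x - g y| ≤ 300*K*|x-y|^α := by
    intro x y
    rw [← Stmt7A.pfold_eq g hgper hgeven x, ← Stmt7A.pfold_eq g hgper hgeven y]
    refine le_trans (hgPi _ (hpfoldmem x) _ (hpfoldmem y)) ?_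
    exact mul_le_mul_of_nonneg_left
      (Real.rpow_le_rpow (abs_nonneg _) (Stmt7A.pfold_lip x y) hα0.le) (by positivity)
  have hfsup : ∀ x, |f x| ≤ 4*K := fun x => by
    rw [← Stmt7A.pfold_eq f hfper hfeven x]; exact hfsupP _ (hpfoldmem x)
  have hgsup : ∀ x, |g x| ≤ 4*K := fun x => by
    rw [← Stmt7A.pfold_eq g hgper hgeven x]; exact hgsupP _ (hpfoldmem x)
  -- continuity
  have contaux : ∀ F : ℝ → ℝ, (∀ x y, |F x - F y| ≤ 300*K*|x-y|^α) → Continuous F := by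
    intro F hF
    rw [continuous_iff_continuousAt]
    intro x₀
    have hb : Tendsto (fun x => 300*K*|x - x₀|^α) (𝓝 x₀) (𝓝 0) := by
      have h1 : Tendsto (fun x : ℝ => |x - x₀|) (𝓝 x₀) (𝓝 0) := by
        have := ((continuous_id.sub (continuous_const (y := x₀))).abs).tendsto x₀
        simpa using this
      have h2 : ContinuousAt (fun d : ℝ => d^α) 0 := Real.continuousAt_rpow_const 0 α (Or.inr hα0.le)
      have h3 := h2.tendsto.comp h1
      rw [Real.zero_rpow (ne_of_gt hα0)] at h3
      have h4 := h3.const_mul (300*K)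
      simpa using h4
    have hd : Tendsto (fun x => dist (F x) (F x₀)) (𝓝 x₀) (𝓝 0) :=
      squeeze_zero (fun x => dist_nonneg) (fun x => by rw [Real.dist_eq]; exact hF x x₀) hb
    exact tendsto_iff_dist_tendsto_zero.mpr hd
  have hcontf : Continuous f := contaux f hfglobal
  have hcontg : Continuous g := contaux g hgglobal
  -- norm bounds
  have norm_le : ∀ F : ℝ → ℝ, (∀ x, |F x| ≤ 4*K) → (∀ x y, |F x - F y| ≤ 300*K*|x-y|^α) →
      hNormOn 0 α F univ ≤ 304*K := by
    intro F hsup hhold'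
    rw [hNormOn, Finset.sum_range_one, iteratedDeriv_zero]
    have s1 : supOn F univ ≤ 4*K := by
      apply Real.sSup_le _ (by positivity)
      rintro r ⟨u,-,rfl⟩
      exact hsup u
    have s2 : hSemiOn α F univ ≤ 300*K := by
      apply Real.sSup_le _ (by positivity)
      rintro r ⟨x,-,y,-,hxy,rfl⟩
      have hpos : 0 < |x-y|^α := Real.rpow_pos_of_pos (abs_pos.2 (sub_ne_zero.2 hxy)) _
      rw [div_le_iff₀ hpos]
      exact hhold' x y
    linarith
  have nf := norm_le f hfsup hfglobal
  have ng := norm_le g hgsup hgglobal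
  refine ⟨f, g, fun x hs => by simp only [hfdef, if_neg hs],
    fun x hs => by simp only [hgdef, if_neg hs],
    hcontf, hcontg, hfper, hgper, hfeven, hgeven,
    ⟨300*K, hfglobal⟩, ⟨300*K, hgglobal⟩, ?_⟩
  have e1000 : (1000:ℝ) * hNormOn 2 α h univ = 1000 * K := by rw [hKdef]
  linarith
end

section
/- Let A₁ be a positive continuous 2π-periodic even function and let f be a continuous 2π-periodic even function with ∫_0^π f(x) sin(x)/A₁(x) dx = 0. Define h(x) = ∫_0^x (1/sin t) ∫_0^t f(s) sin(s)/A₁(s) ds dt for x ∈ (0,2π). Then h extends to a 2π-periodic C² function with h(0) = h(2π) = 0, h'(0) = h'(2π) = 0, h''(0) = h''(2π), and A₁·(h'' + h'/tan) = f on ℝ. -/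
open Set Filter Topology intervalIntegral MeasureTheory


lemma sinNe_aux {x₀ : ℝ} (h : Real.sin x₀ = 0) : ∀ᶠ x in 𝓝[≠] x₀, Real.sin x ≠ 0 := by
  have hball : Metric.ball x₀ Real.pi ∈ 𝓝 x₀ := Metric.ball_mem_nhds _ Real.pi_pos
  filter_upwards [nhdsWithin_le_nhds hball, self_mem_nhdsWithin] with x hx hne hcontra
  obtain ⟨m, hm⟩ := Real.sin_eq_zero_iff.mp hcontra
  obtain ⟨n, hn⟩ := Real.sin_eq_zero_iff.mp h
  have hd : |x - x₀| < Real.pi := by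
    have := Metric.mem_ball.mp hx
    rwa [Real.dist_eq] at this
  rw [← hm, ← hn] at hd
  rw [show |(m:ℝ) * Real.pi - (n:ℝ) * Real.pi| = |(m:ℝ) - (n:ℝ)| * Real.pi from by
    rw [← sub_mul, abs_mul, abs_of_pos Real.pi_pos]] at hd
  have h2 : |(m:ℝ) - (n:ℝ)| < 1 := by
    by_contra hc
    push_neg at hc
    nlinarith [Real.pi_pos]
  have h4 : |m - n| < 1 := by
    have : |((m - n : ℤ) : ℝ)| < 1 := by push_cast; exact h2
    exact_mod_cast this
  have hmn : m = n := by rcases abs_cases (m - n) with ⟨he, _⟩ | ⟨he, _⟩ <;> omega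
  exact hne (mem_singleton_iff.mpr (by rw [← hm, ← hn, hmn]))


lemma quad_aux {q : ℝ → ℝ} (hq : Continuous q) {x₀ c : ℝ}
    (hslope : Tendsto (fun s => q s / (s - x₀)) (𝓝[≠] x₀) (𝓝 c)) :
    Tendsto (fun x => (∫ s in x₀..x, q s) / (x - x₀) ^ 2) (𝓝[≠] x₀) (𝓝 (c / 2)) := by
  have hq0 : q x₀ = 0 := by
    have h1 : Tendsto q (𝓝[≠] x₀) (𝓝 0) := by
      have h2 : Tendsto (fun s => q s / (s - x₀) * (s - x₀)) (𝓝[≠] x₀) (𝓝 (c * 0)) :=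
        hslope.mul (by
          have : Tendsto (fun s : ℝ => s - x₀) (𝓝 x₀) (𝓝 (x₀ - x₀)) :=
            (continuous_id.sub continuous_const).continuousAt
          rw [sub_self] at this
          exact this.mono_left nhdsWithin_le_nhds)
      rw [mul_zero] at h2
      refine h2.congr' ?_
      filter_upwards [self_mem_nhdsWithin] with s hs
      have : s - x₀ ≠ 0 := sub_ne_zero.mpr hs
      field_simp
    have h3 : Tendsto q (𝓝[≠] x₀) (𝓝 (q x₀)) :=
      hq.continuousAt.continuousWithinAt.tendsto
    exact tendsto_nhds_unique h3 h1
  rw [Metric.tendsto_nhdsWithin_nhds]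
  intro ε hε
  obtain ⟨δ, hδ, hδ'⟩ := Metric.tendsto_nhdsWithin_nhds.mp hslope (ε / 2) (by linarith)
  refine ⟨δ, hδ, ?_⟩
  intro x hxne hxd
  rw [mem_compl_singleton_iff] at hxne
  rw [Real.dist_eq] at hxd
  have hbound : ∀ s, |s - x₀| < δ → |q s - c * (s - x₀)| ≤ ε / 2 * |s - x₀| := by
    intro s hs
    by_cases hsx : s = x₀
    · simp [hsx, hq0]
    · have h1 := hδ' (mem_compl_singleton_iff.mpr hsx) (by rwa [Real.dist_eq])
      rw [Real.dist_eq] at h1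
      have hne : s - x₀ ≠ 0 := sub_ne_zero.mpr hsx
      have heq : q s - c * (s - x₀) = (q s / (s - x₀) - c) * (s - x₀) := by
        rw [sub_mul, div_mul_cancel₀ _ hne]
      rw [heq, abs_mul]
      exact mul_le_mul_of_nonneg_right h1.le (abs_nonneg _)
  have habs : ∀ s ∈ Set.uIoc x₀ x, |s - x₀| ≤ |x - x₀| := by
    intro s hs
    rcases le_total x₀ x with h | h
    · rw [uIoc_of_le h] at hs
      rw [abs_of_nonneg (by linarith [hs.1.le]), abs_of_nonneg (by linarith [hs.1.le, hs.2])]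
      linarith [hs.2]
    · rw [uIoc_comm, uIoc_of_le h] at hs
      rw [abs_of_nonpos (by linarith [hs.2]), abs_of_nonpos (by linarith [hs.1.le, hs.2])]
      linarith [hs.1.le]
  have hcont2 : Continuous fun s => c * (s - x₀) := by continuity
  have hIsplit : (∫ s in x₀..x, q s) - c * (x - x₀) ^ 2 / 2
      = ∫ s in x₀..x, (q s - c * (s - x₀)) := by
    rw [intervalIntegral.integral_sub (hq.intervalIntegrable _ _)
      (hcont2.intervalIntegrable _ _)]
    congr 1
    rw [intervalIntegral.integral_const_mul]
    rw [intervalIntegral.integral_comp_sub_right (fun u => u) x₀, integral_id]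
    ring
  have hnorm : ‖∫ s in x₀..x, (q s - c * (s - x₀))‖ ≤ ε / 2 * |x - x₀| * |x - x₀| :=
    intervalIntegral.norm_integral_le_of_norm_le_const (by
      intro s hs
      rw [Real.norm_eq_abs]
      calc |q s - c * (s - x₀)| ≤ ε / 2 * |s - x₀| :=
            hbound s (lt_of_le_of_lt (habs s hs) hxd)
        _ ≤ ε / 2 * |x - x₀| := by
            have := habs s hs
            nlinarith)
  rw [Real.dist_eq]
  have hne : x - x₀ ≠ 0 := sub_ne_zero.mpr hxne
  have hd : (0:ℝ) < (x - x₀) ^ 2 := by positivity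
  have key : (∫ s in x₀..x, q s) / (x - x₀) ^ 2 - c / 2
      = ((∫ s in x₀..x, q s) - c * (x - x₀) ^ 2 / 2) / (x - x₀) ^ 2 := by
    field_simp
  rw [key, abs_div, abs_of_pos hd, hIsplit]
  have hx2 : |x - x₀| * |x - x₀| = (x - x₀) ^ 2 := by
    rw [← abs_mul, ← sq, abs_of_pos hd]
  calc |∫ s in x₀..x, (q s - c * (s - x₀))| / (x - x₀) ^ 2
      ≤ ε / 2 * |x - x₀| * |x - x₀| / (x - x₀) ^ 2 := by
        gcongr
        rw [← Real.norm_eq_abs]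
        exact hnorm
    _ = ε / 2 := by rw [mul_assoc, hx2, mul_div_assoc, div_self hd.ne', mul_one]
    _ < ε := by linarith

/-- Lemma 3.4 (surjectivity part): for `A₁ > 0` continuous, even, periodic and `f`
continuous, even, periodic with `∫_0^π f sin/A₁ = 0`, the function
`h(x) = ∫_0^x (1/sin t) ∫_0^t f sin/A₁ ds dt` extends to a `2π`-periodic C² function
`H` with `H(0) = 0`, `H'(0) = 0`, `H''(0) = H''(2π)`, solving `A₁(H'' + H'/tan) = f`. -/
theorem stmt10 (A1 f : ℝ → ℝ)
    (hA1_cont : Continuous A1) (hA1_pos : ∀ x, 0 < A1 x)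
    (hA1_per : Function.Periodic A1 (2 * Real.pi)) (hA1_even : ∀ x, A1 (-x) = A1 x)
    (hf_cont : Continuous f)
    (hf_per : Function.Periodic f (2 * Real.pi)) (hf_even : ∀ x, f (-x) = f x)
    (hint : ∫ x in (0:ℝ)..Real.pi, f x * Real.sin x / A1 x = 0) :
    ∃ H : ℝ → ℝ,
      Function.Periodic H (2 * Real.pi) ∧
      ContDiff ℝ 2 H ∧
      (∀ x ∈ Ioo (0:ℝ) (2 * Real.pi),
        H x = ∫ t in (0:ℝ)..x,
          (Real.sin t)⁻¹ * ∫ s in (0:ℝ)..t, f s * Real.sin s / A1 s) ∧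
      H 0 = 0 ∧ H (2 * Real.pi) = 0 ∧
      deriv H 0 = 0 ∧ deriv H (2 * Real.pi) = 0 ∧
      deriv (deriv H) 0 = deriv (deriv H) (2 * Real.pi) ∧
      (∀ x, Real.sin x ≠ 0 →
        A1 x * (deriv (deriv H) x + deriv H x * Real.cos x / Real.sin x) = f x) := by
  have hA1ne : ∀ x, A1 x ≠ 0 := fun x => (hA1_pos x).ne'
  set q : ℝ → ℝ := fun s => f s * Real.sin s / A1 s with hq_def
  have hq_cont : Continuous q := (hf_cont.mul Real.continuous_sin).div hA1_cont hA1ne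
  have hq_odd : ∀ x, q (-x) = - q x := by
    intro x
    simp only [hq_def, hf_even, hA1_even, Real.sin_neg]
    ring
  have hq_per : Function.Periodic q (2 * Real.pi) := by
    intro x
    simp only [hq_def, hf_per x, hA1_per x, Real.sin_add_two_pi]
  have hq_int : ∀ a b : ℝ, IntervalIntegrable q volume a b :=
    fun a b => hq_cont.intervalIntegrable a b
  set g : ℝ → ℝ := fun x => ∫ s in (0:ℝ)..x, q s with hg_def
  have hg_hasDeriv : ∀ x, HasDerivAt g (q x) x := fun x =>
    intervalIntegral.integral_hasDerivAt_right (hq_int 0 x)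
      (hq_cont.stronglyMeasurableAtFilter _ _) hq_cont.continuousAt
  have hg0 : g 0 = 0 := intervalIntegral.integral_same
  have hgpi : g Real.pi = 0 := hint
  have hg_even : ∀ x, g (-x) = g x := by
    intro x
    have h1 : (∫ s in (0:ℝ)..x, q (-s)) = ∫ s in (-x)..(0:ℝ), q s := by
      simpa using intervalIntegral.integral_comp_neg (a := 0) (b := x) q
    have h2 : (∫ s in (0:ℝ)..x, q (-s)) = - g x := by
      simp only [hq_odd]
      rw [intervalIntegral.integral_neg]
    have h3 : (∫ s in (-x)..(0:ℝ), q s) = - g (-x) := by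
      rw [intervalIntegral.integral_symm]
    rw [h2, h3] at h1
    linarith
  have hg_per : Function.Periodic g (2 * Real.pi) := by
    intro x
    have hadd := intervalIntegral.integral_add_adjacent_intervals (hq_int 0 x)
      (hq_int x (x + 2 * Real.pi))
    have hshift := hq_per.intervalIntegral_add_eq x (-Real.pi)
    have hsym : (∫ s in (-Real.pi)..(-Real.pi + 2 * Real.pi), q s) = 0 := by
      have e1 : -Real.pi + 2 * Real.pi = Real.pi := by ring
      rw [e1]
      have h4 := intervalIntegral.integral_add_adjacent_intervals
        (hq_int (-Real.pi) 0) (hq_int 0 Real.pi)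
      have h5 : (∫ s in (-Real.pi)..(0:ℝ), q s) = - g Real.pi := by
        have h6 : (∫ s in (0:ℝ)..Real.pi, q (-s)) = ∫ s in (-Real.pi)..(0:ℝ), q s := by
          simpa using intervalIntegral.integral_comp_neg (a := 0) (b := Real.pi) q
        rw [← h6]
        simp only [hq_odd]
        rw [intervalIntegral.integral_neg]
      rw [← h4, h5, hgpi]
      simpa using hgpi
    rw [hshift, hsym, add_zero] at hadd
    exact hadd.symm
  have hg_sin0 : ∀ x, Real.sin x = 0 → g x = 0 := by
    intro x hx
    obtain ⟨n, hn⟩ := Real.sin_eq_zero_iff.mp hx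
    obtain ⟨m, hm | hm⟩ := Int.even_or_odd' n
    · have hx' : x = 0 + (m : ℝ) * (2 * Real.pi) := by rw [← hn, hm]; push_cast; ring
      rw [hx', (hg_per.int_mul m) 0, hg0]
    · have hx' : x = Real.pi + (m : ℝ) * (2 * Real.pi) := by rw [← hn, hm]; push_cast; ring
      rw [hx', (hg_per.int_mul m) Real.pi, hgpi]
  set φ : ℝ → ℝ := fun x => g x / Real.sin x with hφ_def
  set ψ : ℝ → ℝ := fun x => if Real.sin x = 0 then f x / (2 * A1 x)
      else f x / A1 x - φ x * Real.cos x / Real.sin x with hψ_def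
  have hφ0 : ∀ x, Real.sin x = 0 → φ x = 0 := by
    intro x hx
    simp [hφ_def, hg_sin0 x hx]
  have hφ_per : Function.Periodic φ (2 * Real.pi) := by
    intro x
    simp only [hφ_def, hg_per x, Real.sin_add_two_pi]
  have hφ_odd : ∀ x, φ (-x) = - φ x := by
    intro x
    simp only [hφ_def, hg_even, Real.sin_neg, div_neg]
  have hψ_per : Function.Periodic ψ (2 * Real.pi) := by
    intro x
    simp only [hψ_def, hφ_per x, Real.sin_add_two_pi, Real.cos_add_two_pi, hf_per x, hA1_per x]
  -- derivative at regular points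
  have hD_reg : ∀ x, Real.sin x ≠ 0 → HasDerivAt φ (ψ x) x := by
    intro x hx
    have h : HasDerivAt φ ((q x * Real.sin x - g x * Real.cos x) / Real.sin x ^ 2) x :=
      (hg_hasDeriv x).div (Real.hasDerivAt_sin x) hx
    convert h using 1
    rw [hψ_def]
    simp only [if_neg hx, hφ_def, hq_def]
    field_simp
  -- derivative at singular points
  have hD_sing : ∀ x₀, Real.sin x₀ = 0 →
      HasDerivAt φ (ψ x₀) x₀ ∧ Tendsto ψ (𝓝[≠] x₀) (𝓝 (ψ x₀)) := by
    intro x₀ hx₀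
    have hcos : Real.cos x₀ ≠ 0 := by
      rcases Real.sin_eq_zero_iff_cos_eq.mp hx₀ with h | h <;> rw [h] <;> norm_num
    have hiso := sinNe_aux hx₀
    set c : ℝ := f x₀ * Real.cos x₀ / A1 x₀ with hc_def
    -- slope of q at x₀
    have hs : Tendsto (fun s => Real.sin s / (s - x₀)) (𝓝[≠] x₀) (𝓝 (Real.cos x₀)) := by
      have h1 := hasDerivAt_iff_tendsto_slope.mp (Real.hasDerivAt_sin x₀)
      refine h1.congr fun y => ?_
      rw [slope_def_field, hx₀, sub_zero]
    have hq_slope : Tendsto (fun s => q s / (s - x₀)) (𝓝[≠] x₀) (𝓝 c) := by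
      have hfA : Tendsto (fun s => f s / A1 s) (𝓝[≠] x₀) (𝓝 (f x₀ / A1 x₀)) :=
        ((hf_cont.continuousAt.div hA1_cont.continuousAt (hA1ne x₀)).tendsto).mono_left
          nhdsWithin_le_nhds
      have h2 := hfA.mul hs
      have hceq : c = f x₀ / A1 x₀ * Real.cos x₀ := by rw [hc_def]; ring
      rw [← hceq] at h2
      refine h2.congr fun s => ?_
      rw [hq_def]
      simp only [div_eq_mul_inv]
      ring
    -- quadratic asymptotics for g
    have hg_quad : Tendsto (fun x => g x / (x - x₀) ^ 2) (𝓝[≠] x₀) (𝓝 (c / 2)) := by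
      have h3 := quad_aux hq_cont hq_slope
      refine h3.congr fun x => ?_
      congr 1
      have h4 := intervalIntegral.integral_add_adjacent_intervals (hq_int 0 x₀) (hq_int x₀ x)
      have h5 : g x₀ = 0 := hg_sin0 x₀ hx₀
      rw [hg_def]
      simp only
      rw [← h4]
      rw [hg_def] at h5
      simp only at h5
      rw [h5, zero_add]
    have hinv : Tendsto (fun x => (x - x₀) / Real.sin x) (𝓝[≠] x₀) (𝓝 (Real.cos x₀)⁻¹) := by
      have := hs.inv₀ hcos
      refine this.congr fun x => ?_
      rw [inv_div]
    have hψx₀ : ψ x₀ = f x₀ / (2 * A1 x₀) := by rw [hψ_def]; simp only [if_pos hx₀]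
    have hlim_eq : c / 2 * (Real.cos x₀)⁻¹ = f x₀ / (2 * A1 x₀) := by
      have e : c / 2 * (Real.cos x₀)⁻¹
          = f x₀ * (Real.cos x₀ * (Real.cos x₀)⁻¹) / (2 * A1 x₀) := by
        rw [hc_def]; ring
      rw [e, mul_inv_cancel₀ hcos, mul_one]
    constructor
    · rw [hasDerivAt_iff_tendsto_slope]
      have h6 := hg_quad.mul hinv
      rw [hlim_eq, ← hψx₀] at h6
      refine h6.congr' ?_
      filter_upwards [hiso, self_mem_nhdsWithin] with x hsin hx
      have hne : x - x₀ ≠ 0 := sub_ne_zero.mpr hx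
      rw [slope_def_field, hφ0 x₀ hx₀, hφ_def]
      simp only
      field_simp
      ring
    · rw [hψx₀]
      have h7 : Tendsto (fun x => f x / A1 x) (𝓝[≠] x₀) (𝓝 (f x₀ / A1 x₀)) :=
        ((hf_cont.continuousAt.div hA1_cont.continuousAt (hA1ne x₀)).tendsto).mono_left
          nhdsWithin_le_nhds
      have h8 : Tendsto (fun x => g x / (x - x₀) ^ 2 * ((x - x₀) / Real.sin x) ^ 2 * Real.cos x)
          (𝓝[≠] x₀) (𝓝 (c / 2 * ((Real.cos x₀)⁻¹) ^ 2 * Real.cos x₀)) :=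
        (hg_quad.mul (hinv.pow 2)).mul
          (Real.continuous_cos.continuousAt.tendsto.mono_left nhdsWithin_le_nhds)
      have h9 := h7.sub h8
      have hval : f x₀ / A1 x₀ - c / 2 * ((Real.cos x₀)⁻¹) ^ 2 * Real.cos x₀
          = f x₀ / (2 * A1 x₀) := by
        have e : c / 2 * ((Real.cos x₀)⁻¹) ^ 2 * Real.cos x₀
            = f x₀ * (Real.cos x₀ * (Real.cos x₀)⁻¹) ^ 2 / (2 * A1 x₀) := by
          rw [hc_def]; ring
        rw [e, mul_inv_cancel₀ hcos, one_pow, mul_one]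
        field_simp [hA1ne x₀]
        ring
      rw [hval] at h9
      refine h9.congr' ?_
      filter_upwards [hiso, self_mem_nhdsWithin] with x hsin hx
      have hne : x - x₀ ≠ 0 := sub_ne_zero.mpr hx
      rw [hψ_def]
      simp only [if_neg hsin, hφ_def]
      field_simp
  have hφ_deriv : ∀ x, HasDerivAt φ (ψ x) x := by
    intro x
    by_cases hx : Real.sin x = 0
    · exact (hD_sing x hx).1
    · exact hD_reg x hx
  have hφ_cont : Continuous φ :=
    continuous_iff_continuousAt.mpr fun x => (hφ_deriv x).continuousAt
  have hψ_cont : Continuous ψ := by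
    rw [continuous_iff_continuousAt]
    intro x
    by_cases hx : Real.sin x = 0
    · rw [ContinuousAt, ← nhdsNE_sup_pure x, tendsto_sup]
      exact ⟨(hD_sing x hx).2, tendsto_pure_nhds ψ x⟩
    · have hopen : IsOpen {y : ℝ | Real.sin y ≠ 0} :=
        isOpen_compl_singleton.preimage Real.continuous_sin
      have hmem : {y : ℝ | Real.sin y ≠ 0} ∈ 𝓝 x := hopen.mem_nhds hx
      have hca : ContinuousAt (fun y => f y / A1 y - φ y * Real.cos y / Real.sin y) x := by
        apply ContinuousAt.sub
        · exact hf_cont.continuousAt.div hA1_cont.continuousAt (hA1ne x)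
        · exact (hφ_cont.continuousAt.mul Real.continuous_cos.continuousAt).div
            Real.continuous_sin.continuousAt hx
      refine hca.congr ?_
      filter_upwards [hmem] with y hy
      rw [hψ_def]
      simp only [if_neg hy]
  have hφ_int : ∀ a b : ℝ, IntervalIntegrable φ volume a b :=
    fun a b => hφ_cont.intervalIntegrable a b
  set H : ℝ → ℝ := fun x => ∫ t in (0:ℝ)..x, φ t with hH_def
  have hH_hasDeriv : ∀ x, HasDerivAt H (φ x) x := fun x =>
    intervalIntegral.integral_hasDerivAt_right (hφ_int 0 x)
      (hφ_cont.stronglyMeasurableAtFilter _ _) hφ_cont.continuousAt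
  have hderivH : deriv H = φ := funext fun x => (hH_hasDeriv x).deriv
  have hderivφ : deriv φ = ψ := funext fun x => (hφ_deriv x).deriv
  have hint2π : (∫ t in (0:ℝ)..2 * Real.pi, φ t) = 0 := by
    have hshift := hφ_per.intervalIntegral_add_eq 0 (-Real.pi)
    have e1 : (0:ℝ) + 2 * Real.pi = 2 * Real.pi := by ring
    have e2 : -Real.pi + 2 * Real.pi = Real.pi := by ring
    rw [e1, e2] at hshift
    rw [hshift]
    have h4 := intervalIntegral.integral_add_adjacent_intervals
      (hφ_int (-Real.pi) 0) (hφ_int 0 Real.pi)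
    have h5 : (∫ s in (-Real.pi)..(0:ℝ), φ s) = - ∫ s in (0:ℝ)..Real.pi, φ s := by
      have h6 : (∫ s in (0:ℝ)..Real.pi, φ (-s)) = ∫ s in (-Real.pi)..(0:ℝ), φ s := by
        simpa using intervalIntegral.integral_comp_neg (a := 0) (b := Real.pi) φ
      rw [← h6]
      simp only [hφ_odd]
      rw [intervalIntegral.integral_neg]
    rw [← h4, h5]
    ring
  have hH_per : Function.Periodic H (2 * Real.pi) := by
    intro x
    have hadd := intervalIntegral.integral_add_adjacent_intervals (hφ_int 0 x)
      (hφ_int x (x + 2 * Real.pi))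
    have hshift := hφ_per.intervalIntegral_add_eq x 0
    rw [hshift, zero_add, hint2π, add_zero] at hadd
    exact hadd.symm
  have hH_cd : ContDiff ℝ 2 H := by
    rw [show (2 : WithTop ℕ∞) = 1 + 1 from rfl, contDiff_succ_iff_deriv]
    refine ⟨fun x => (hH_hasDeriv x).differentiableAt, ?_, ?_⟩
    · intro h
      exact absurd h (by norm_num)
    · rw [hderivH, contDiff_one_iff_deriv]
      exact ⟨fun x => (hφ_deriv x).differentiableAt, by rw [hderivφ]; exact hψ_cont⟩
  refine ⟨H, hH_per, hH_cd, ?_, ?_, ?_, ?_, ?_, ?_, ?_⟩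
  · intro x hx
    rw [hH_def]
    simp only
    apply intervalIntegral.integral_congr
    intro t ht
    rw [hφ_def, hg_def, hq_def]
    simp only
    rw [div_eq_inv_mul]
  · exact intervalIntegral.integral_same
  · exact hint2π
  · rw [hderivH]
    exact hφ0 0 Real.sin_zero
  · rw [hderivH]
    exact hφ0 _ (by rw [Real.sin_two_pi])
  · rw [hderivH, hderivφ]
    have := hψ_per 0
    rw [zero_add] at this
    exact this.symm
  · intro x hx
    rw [hderivH, hderivφ, hψ_def]
    simp only [if_neg hx, hφ_def]
    field_simp
    rw [sub_add_cancel]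
    field_simp [hA1ne x]
end

section
/- Let b₀ = -a₀ = 1 and v₀(x) = 1 - x² + (1-x²)^{3/2} for x ∈ [-1,1]. Then v₀ is positive on (-1,1), vanishes at ±1, v₀'(-1) = 2 > 0 > -2 = v₀'(1), the composed function v₀(-cos(·)) belongs to the Sobolev space W^{3,∞}(𝕊) of 2π-periodic functions, but v₀ is not twice continuously differentiable at x = ±1 (its second derivative is unbounded near ±1). -/
open Set Filter Topology

/-- The initial datum of Remark 1.3 (iii). -/
noncomputable def v0 : ℝ → ℝ := fun x => 1 - x ^ 2 + (1 - x ^ 2) * Real.sqrt (1 - x ^ 2)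

noncomputable def psi : ℝ → ℝ := fun t => t * |t|

lemma hasDerivAt_psi (t : ℝ) : HasDerivAt psi (2 * |t|) t := by
  rcases eq_or_ne t 0 with rfl | ht
  · rw [hasDerivAt_iff_tendsto_slope]
    have h : ∀ x ∈ ({(0:ℝ)}ᶜ : Set ℝ), |x| = slope psi 0 x := by
      intro x hx
      simp only [mem_compl_iff, mem_singleton_iff] at hx
      simp only [slope, psi, vsub_eq_sub, sub_zero, zero_mul, smul_eq_mul]
      field_simp
    have : Filter.Tendsto (fun x : ℝ => |x|) (𝓝[≠] (0:ℝ)) (𝓝 (2 * |(0:ℝ)|)) := by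
      simpa using (continuous_abs.tendsto (0:ℝ)).mono_left nhdsWithin_le_nhds
    exact this.congr' (eventually_nhdsWithin_of_forall h)
  · have h1 : HasDerivAt (fun x : ℝ => |x|) (SignType.sign t : ℝ) t := hasDerivAt_abs ht
    have h2 : HasDerivAt psi (1 * |t| + t * (SignType.sign t : ℝ)) t :=
      (hasDerivAt_id t).mul h1
    convert h2 using 1
    rcases lt_or_gt_of_ne ht with h | h
    · simp [abs_of_neg h, sign_neg h]; ring
    · simp [abs_of_pos h, sign_pos h]; ring

noncomputable def Fc : ℝ → ℝ := fun x => Real.sin x ^ 2 + Real.sin x ^ 2 * |Real.sin x|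

noncomputable def Gc : ℝ → ℝ := fun x => 2 * Real.sin x * Real.cos x + 3 * psi (Real.sin x) * Real.cos x

noncomputable def Hc : ℝ → ℝ := fun x =>
  2 * (Real.cos x ^ 2 - Real.sin x ^ 2) + 6 * |Real.sin x| * Real.cos x ^ 2
    - 3 * Real.sin x * psi (Real.sin x)

lemma hasDerivAt_phi (t : ℝ) : HasDerivAt (fun t : ℝ => t ^ 2 * |t|) (3 * psi t) t := by
  have h : HasDerivAt (fun t : ℝ => t * psi t) (1 * psi t + t * (2 * |t|)) t :=
    (hasDerivAt_id t).mul (hasDerivAt_psi t)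
  have he : (fun t : ℝ => t * psi t) = fun t : ℝ => t ^ 2 * |t| := by
    funext t; simp [psi]; ring
  rw [he] at h
  convert h using 1
  simp [psi]; ring

lemma hasDerivAt_Fc (x : ℝ) : HasDerivAt Fc (Gc x) x := by
  have h1 : HasDerivAt (fun x => Real.sin x ^ 2) (2 * Real.sin x * Real.cos x) x := by
    have := ((Real.hasDerivAt_sin x).pow 2)
    exact this.congr_deriv (by ring)
  have h2 : HasDerivAt (fun x => Real.sin x ^ 2 * |Real.sin x|)
      (3 * psi (Real.sin x) * Real.cos x) x := by
    have := (hasDerivAt_phi (Real.sin x)).comp x (Real.hasDerivAt_sin x)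
    exact this
  exact (h1.add h2)

lemma hasDerivAt_Gc (x : ℝ) : HasDerivAt Gc (Hc x) x := by
  have h1 : HasDerivAt (fun x => 2 * Real.sin x * Real.cos x)
      (2 * (Real.cos x ^ 2 - Real.sin x ^ 2)) x := by
    have := (((Real.hasDerivAt_sin x).const_mul 2).mul (Real.hasDerivAt_cos x))
    exact this.congr_deriv (by ring)
  have h2 : HasDerivAt (fun x => 3 * psi (Real.sin x) * Real.cos x)
      (6 * |Real.sin x| * Real.cos x ^ 2 - 3 * Real.sin x * psi (Real.sin x)) x := by
    have hp : HasDerivAt (fun x => psi (Real.sin x)) (2 * |Real.sin x| * Real.cos x) x := by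
      have := (hasDerivAt_psi (Real.sin x)).comp x (Real.hasDerivAt_sin x)
      exact this.congr_deriv (by ring)
    have := ((hp.const_mul 3).mul (Real.hasDerivAt_cos x))
    exact this.congr_deriv (by ring)
  have := h1.add h2
  exact this.congr_deriv (by unfold Hc; ring)

lemma deriv_Fc : deriv Fc = Gc := funext fun x => (hasDerivAt_Fc x).deriv

lemma deriv_Gc : deriv Gc = Hc := funext fun x => (hasDerivAt_Gc x).deriv

lemma contDiff_Fc : ContDiff ℝ 2 Fc := by
  rw [show (2 : WithTop ℕ∞) = 1 + 1 by norm_num, contDiff_succ_iff_deriv]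
  refine ⟨fun x => (hasDerivAt_Fc x).differentiableAt, by simp, ?_⟩
  rw [deriv_Fc, contDiff_one_iff_deriv, deriv_Gc]
  exact ⟨fun x => (hasDerivAt_Gc x).differentiableAt, by
    unfold Hc psi
    fun_prop⟩

lemma lip_helper {f g : ℝ → ℝ} {K1 K2 : NNReal} (hf : LipschitzWith K1 f)
    (hg : LipschitzWith K2 g) (hfb : ∀ x, |f x| ≤ 1) (hgb : ∀ x, |g x| ≤ 1) :
    LipschitzWith (K1 + K2) (fun x => f x * g x) := by
  apply LipschitzWith.of_dist_le_mul
  intro x y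
  have h1 := hf.dist_le_mul x y
  have h2 := hg.dist_le_mul x y
  simp only [Real.dist_eq] at *
  have e : f x * g x - f y * g y = f x * (g x - g y) + (f x - f y) * g y := by ring
  rw [e]
  calc |f x * (g x - g y) + (f x - f y) * g y|
      ≤ |f x * (g x - g y)| + |(f x - f y) * g y| := abs_add_le _ _
    _ = |f x| * |g x - g y| + |f x - f y| * |g y| := by rw [abs_mul, abs_mul]
    _ ≤ 1 * (K2 * |x - y|) + (K1 * |x - y|) * 1 := by
        have a1 : |f x| * |g x - g y| ≤ 1 * (K2 * |x - y|) :=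
          mul_le_mul (hfb x) h2 (abs_nonneg _) zero_le_one
        have a2 : |f x - f y| * |g y| ≤ (K1 * |x - y|) * 1 :=
          mul_le_mul h1 (hgb y) (abs_nonneg _) (by positivity)
        linarith
    _ = (↑(K1 + K2)) * |x - y| := by push_cast; ring

lemma lip_sin : LipschitzWith 1 Real.sin := by
  apply lipschitzWith_of_nnnorm_deriv_le Real.differentiable_sin
  intro x
  rw [Real.deriv_sin]
  simpa using NNReal.coe_le_coe.mp (by simpa using Real.abs_cos_le_one x)

lemma lip_cos : LipschitzWith 1 Real.cos := by
  apply lipschitzWith_of_nnnorm_deriv_le Real.differentiable_cos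
  intro x
  rw [Real.deriv_cos']
  simpa using NNReal.coe_le_coe.mp (by simpa using Real.abs_sin_le_one x)

lemma lip_abs_sin : LipschitzWith 1 (fun x => |Real.sin x|) := by
  have := (lipschitzWith_one_norm (E := ℝ)).comp lip_sin
  rw [mul_one] at this
  exact this

lemma lip_smul (c : ℝ) {K : NNReal} {f : ℝ → ℝ} (h : LipschitzWith K f) :
    LipschitzWith (Real.nnabs c * K) (fun x => c * f x) := by
  apply LipschitzWith.of_dist_le_mul
  intro x y
  have := h.dist_le_mul x y
  simp only [Real.dist_eq] at *
  calc |c * f x - c * f y| = |c| * |f x - f y| := by rw [← abs_mul]; ring_nf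
    _ ≤ |c| * (K * |x - y|) := by gcongr
    _ = (↑(Real.nnabs c * K)) * |x - y| := by
        push_cast [Real.coe_nnabs]; ring

lemma lip_Hc : ∃ L : NNReal, LipschitzWith L Hc := by
  have hsb : ∀ x, |Real.sin x| ≤ 1 := fun x => Real.abs_sin_le_one x
  have hcb : ∀ x, |Real.cos x| ≤ 1 := fun x => Real.abs_cos_le_one x
  have hab : ∀ x, |(|Real.sin x|)| ≤ 1 := fun x => by rw [abs_abs]; exact hsb x
  have hsin2 : LipschitzWith (1 + 1) (fun x => Real.sin x ^ 2) := by
    have := lip_helper lip_sin lip_sin hsb hsb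
    simpa [pow_two] using this
  have hcos2 : LipschitzWith (1 + 1) (fun x => Real.cos x ^ 2) := by
    have := lip_helper lip_cos lip_cos hcb hcb
    simpa [pow_two] using this
  have hs2b : ∀ x, |Real.sin x ^ 2| ≤ 1 := fun x => by
    rw [abs_pow]; exact pow_le_one₀ (abs_nonneg _) (hsb x)
  have hc2b : ∀ x, |Real.cos x ^ 2| ≤ 1 := fun x => by
    rw [abs_pow]; exact pow_le_one₀ (abs_nonneg _) (hcb x)
  have h1 := lip_smul 2 (hcos2.sub hsin2)
  have h2 := lip_smul 6 (lip_helper lip_abs_sin hcos2 hab hc2b)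
  have h3 := lip_smul 3 (lip_helper hsin2 lip_abs_sin hs2b hab)
  have key := (h1.add h2).sub h3
  have he : Hc = fun x => (2 * (Real.cos x ^ 2 - Real.sin x ^ 2)
      + 6 * (|Real.sin x| * Real.cos x ^ 2)) - 3 * (Real.sin x ^ 2 * |Real.sin x|) := by
    funext x; unfold Hc psi; ring
  exact ⟨_, he ▸ key⟩

lemma v0_comp_eq : (fun x => v0 (-Real.cos x)) = Fc := by
  funext x
  have h1 : 1 - (-Real.cos x) ^ 2 = Real.sin x ^ 2 := by
    have := Real.sin_sq_add_cos_sq x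
    ring_nf
    linarith
  simp only [v0, Fc, h1, Real.sqrt_sq_eq_abs]

-- derivative facts for v0 in the interior
lemma hasDerivAt_v0 {y : ℝ} (hy : y ∈ Ioo (-1:ℝ) 1) :
    HasDerivAt v0 (-2*y - 3*y*Real.sqrt (1 - y^2)) y := by
  have hu : (0:ℝ) < 1 - y^2 := by nlinarith [hy.1, hy.2]
  have hsq : HasDerivAt (fun y : ℝ => 1 - y^2) (-2*y) y := by
    simpa using ((hasDerivAt_pow 2 y).const_sub 1)
  have hs : HasDerivAt (fun y : ℝ => Real.sqrt (1 - y^2))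
      (1 / (2 * Real.sqrt (1 - y^2)) * (-2*y)) y :=
    (Real.hasDerivAt_sqrt (ne_of_gt hu)).comp y hsq
  have hp : HasDerivAt v0 ((-2*y) + ((-2*y) * Real.sqrt (1 - y^2)
      + (1 - y^2) * (1 / (2 * Real.sqrt (1 - y^2)) * (-2*y)))) y := by
    exact hsq.add (hsq.mul hs)
  convert hp using 1
  have hsp : 0 < Real.sqrt (1 - y^2) := Real.sqrt_pos.mpr hu
  have hss : Real.sqrt (1 - y^2) ^ 2 = 1 - y^2 := Real.sq_sqrt hu.le
  rw [show (1 - y^2) = Real.sqrt (1 - y^2) ^ 2 by rw [hss]]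
  field_simp
  rw [Real.sqrt_sq hsp.le]
  linear_combination

noncomputable def g0 : ℝ → ℝ := fun y => -2*y - 3*y*Real.sqrt (1 - y^2)

lemma hasDerivAt_g0 {y : ℝ} (hy : y ∈ Ioo (-1:ℝ) 1) :
    HasDerivAt g0 (-2 - 3*Real.sqrt (1 - y^2) + 3*y^2/Real.sqrt (1 - y^2)) y := by
  have hu : (0:ℝ) < 1 - y^2 := by nlinarith [hy.1, hy.2]
  have hsp : 0 < Real.sqrt (1 - y^2) := Real.sqrt_pos.mpr hu
  have hsq : HasDerivAt (fun y : ℝ => 1 - y^2) (-2*y) y := by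
    simpa using ((hasDerivAt_pow 2 y).const_sub 1)
  have hs : HasDerivAt (fun y : ℝ => Real.sqrt (1 - y^2))
      (1 / (2 * Real.sqrt (1 - y^2)) * (-2*y)) y :=
    (Real.hasDerivAt_sqrt (ne_of_gt hu)).comp y hsq
  have hyd : HasDerivAt (fun y : ℝ => y * Real.sqrt (1 - y^2))
      (1 * Real.sqrt (1 - y^2) + y * (1 / (2 * Real.sqrt (1 - y^2)) * (-2*y))) y :=
    (hasDerivAt_id y).mul hs
  have h : HasDerivAt g0 (-2 + (-3) * (1 * Real.sqrt (1 - y^2)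
      + y * (1 / (2 * Real.sqrt (1 - y^2)) * (-2*y)))) y := by
    have := ((hasDerivAt_id y).const_mul (-2:ℝ)).add (hyd.const_mul (-3:ℝ))
    have he : g0 = fun z : ℝ => -2 * id z + -3 * (z * Real.sqrt (1 - z^2)) := by
      funext z; simp only [g0, id]; ring
    rw [he]
    exact this.congr_deriv (by ring)
  convert h using 1
  field_simp
  ring

lemma v0_second_unbounded : ∀ C : ℝ, ∃ x ∈ Ioo (-1:ℝ) 1, C < |deriv (deriv v0) x| := by
  intro C
  set c : ℝ := |C| + 4 with hc
  have hc4 : (4:ℝ) ≤ c := by simp [hc, abs_nonneg]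
  have hcpos : 0 < c := by linarith
  set δ : ℝ := min (1/2) (1/c) with hδ
  have hδpos : 0 < δ := lt_min (by norm_num) (by positivity)
  have hδhalf : δ ≤ 1/2 := min_le_left _ _
  have hδc : δ ≤ 1/c := min_le_right _ _
  have hδsq : δ^2 ≤ 1/4 := by nlinarith
  set x : ℝ := Real.sqrt (1 - δ^2) with hx
  have hx2 : x^2 = 1 - δ^2 := Real.sq_sqrt (by nlinarith)
  have hxmem : x ∈ Ioo (-1:ℝ) 1 := by
    constructor
    · have : (0:ℝ) ≤ x := Real.sqrt_nonneg _
      linarith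
    · nlinarith [Real.sqrt_nonneg (1 - δ^2), hx2]
  have hsx : Real.sqrt (1 - x^2) = δ := by
    rw [hx2]
    simpa using Real.sqrt_sq hδpos.le
  have hev : deriv v0 =ᶠ[𝓝 x] g0 := by
    filter_upwards [isOpen_Ioo.mem_nhds hxmem] with y hy
    exact (hasDerivAt_v0 hy).deriv
  have hdd : deriv (deriv v0) x = -2 - 3*Real.sqrt (1 - x^2) + 3*x^2/Real.sqrt (1 - x^2) := by
    rw [hev.deriv_eq]
    exact (hasDerivAt_g0 hxmem).deriv
  refine ⟨x, hxmem, ?_⟩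
  rw [hdd, hsx]
  have h1 : 3 * x^2 / δ ≥ 3 * (3/4) * c := by
    rw [hx2, ge_iff_le, le_div_iff₀ hδpos]
    have hδle : δ * c ≤ 1 := by
      calc δ * c ≤ (1/c) * c := by nlinarith
        _ = 1 := by field_simp
    nlinarith
  have : C < -2 - 3*δ + 3*x^2/δ := by
    have habs : |C| < c := by simp only [hc]; linarith [abs_nonneg C]
    nlinarith [le_abs_self C]
  calc C < -2 - 3*δ + 3*x^2/δ := this
    _ ≤ |-2 - 3*δ + 3*x^2/δ| := le_abs_self _

lemma hdw_neg1 : HasDerivWithinAt v0 2 (Ici (-1:ℝ)) (-1) := by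
  have hsq : HasDerivAt (fun y : ℝ => 1 - y^2) (2:ℝ) (-1) := by
    have := ((hasDerivAt_pow 2 (-1:ℝ)).const_sub 1)
    exact this.congr_deriv (by norm_num)
  have hh : HasDerivWithinAt (fun y : ℝ => (1 - y^2) * Real.sqrt (1 - y^2)) 0
      (Ici (-1:ℝ)) (-1) := by
    rw [hasDerivWithinAt_iff_tendsto_slope]
    have hcont : Tendsto (fun x : ℝ => (1 - x) * Real.sqrt (1 - x^2)) (𝓝 (-1)) (𝓝 0) := by
      have hcc : Continuous (fun x : ℝ => (1 - x) * Real.sqrt (1 - x^2)) := by fun_prop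
      simpa using hcc.tendsto (-1)
    refine Tendsto.congr' ?_ (hcont.mono_left nhdsWithin_le_nhds)
    filter_upwards [self_mem_nhdsWithin] with x hx
    have hx' : x ≠ -1 := hx.2
    have hne : x - (-1) ≠ 0 := fun h => hx' (by linarith)
    rw [slope_def_field, eq_div_iff hne]
    norm_num
    ring
  have := hsq.hasDerivWithinAt.add hh
  exact this.congr_deriv (by norm_num)

lemma hdw_pos1 : HasDerivWithinAt v0 (-2) (Iic (1:ℝ)) 1 := by
  have hsq : HasDerivAt (fun y : ℝ => 1 - y^2) (-2:ℝ) 1 := by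
    have := ((hasDerivAt_pow 2 (1:ℝ)).const_sub 1)
    exact this.congr_deriv (by norm_num)
  have hh : HasDerivWithinAt (fun y : ℝ => (1 - y^2) * Real.sqrt (1 - y^2)) 0
      (Iic (1:ℝ)) 1 := by
    rw [hasDerivWithinAt_iff_tendsto_slope]
    have hcont : Tendsto (fun x : ℝ => -(1 + x) * Real.sqrt (1 - x^2)) (𝓝 1) (𝓝 0) := by
      have hcc : Continuous (fun x : ℝ => -(1 + x) * Real.sqrt (1 - x^2)) := by fun_prop
      simpa using hcc.tendsto 1
    refine Tendsto.congr' ?_ (hcont.mono_left nhdsWithin_le_nhds)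
    filter_upwards [self_mem_nhdsWithin] with x hx
    have hx' : x ≠ 1 := hx.2
    have hne : x - 1 ≠ 0 := fun h => hx' (by linarith)
    rw [slope_def_field, eq_div_iff hne]
    norm_num
    ring
  have := hsq.hasDerivWithinAt.add hh
  exact this.congr_deriv (by norm_num)


/-- Remark 1.3 (iii): `v₀(x) = 1-x² + (1-x²)^{3/2}` is positive on `(-1,1)`, vanishes
at `±1`, has `v₀'(-1) = 2 > 0 > -2 = v₀'(1)`, the composition `v₀(-cos)` lies in
`W^{3,∞}(𝕊)`, but `v₀` is not C² at `±1` (its second derivative is unbounded). -/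
theorem stmt14 :
    (∀ x ∈ Ioo (-1:ℝ) 1, 0 < v0 x) ∧
    v0 1 = 0 ∧ v0 (-1) = 0 ∧
    HasDerivWithinAt v0 2 (Ici (-1)) (-1) ∧
    HasDerivWithinAt v0 (-2) (Iic 1) 1 ∧
    Function.Periodic (fun x => v0 (-Real.cos x)) (2 * Real.pi) ∧
    ContDiff ℝ 2 (fun x => v0 (-Real.cos x)) ∧
    (∃ L : NNReal, LipschitzWith L (deriv (deriv (fun x => v0 (-Real.cos x))))) ∧
    (∀ C : ℝ, ∃ x ∈ Ioo (-1:ℝ) 1, C < |deriv (deriv v0) x|) := by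
  refine ⟨?_, ?_, ?_, hdw_neg1, hdw_pos1, ?_, ?_, ?_, v0_second_unbounded⟩
  · intro x hx
    have hu : (0:ℝ) < 1 - x^2 := by nlinarith [hx.1, hx.2]
    have := Real.sqrt_nonneg (1 - x^2)
    simp only [v0]
    nlinarith
  · simp [v0]
  · simp [v0]
  · intro x
    simp [Real.cos_add_two_pi]
  · rw [v0_comp_eq]; exact contDiff_Fc
  · rw [v0_comp_eq, deriv_Fc, deriv_Gc]; exact lip_Hc
end

section
/- Let a₀ < b₀, α ∈ (0,1), and suppose v₀ : [a₀,b₀] → ℝ is such that h₀(x) := v₀((a₀+b₀)/2 - (b₀-a₀)cos(x)/2) is an even 2π-periodic C^{2+α} function with h₀(0) = h₀(π) = 0. Then (v₀ v₀'')∘((a₀+b₀)/2 - (b₀-a₀)cos/2) = (4/(b₀-a₀)²)·(h₀/sin²)·(h₀'' - h₀'/tan), and consequently v₀(x)v₀''(x) → 0 as x → a₀+ and as x → b₀-. -/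
open Set Filter Topology

private lemma deriv_contDiff_of_two {h : ℝ → ℝ} (hh : ContDiff ℝ 2 h) :
    ContDiff ℝ 1 (deriv h) := by
  rw [show (2 : WithTop ℕ∞) = 1 + 1 from rfl, contDiff_succ_iff_deriv] at hh
  exact hh.2.2

private lemma limF {h : ℝ → ℝ} (hh : ContDiff ℝ 2 h) (h0 : h 0 = 0) (h1 : deriv h 0 = 0) :
    Tendsto (fun θ => h θ / Real.sin θ ^ 2 *
      (deriv (deriv h) θ - deriv h θ * Real.cos θ / Real.sin θ)) (𝓝[≠] (0:ℝ)) (𝓝 0) := by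
  have hd1 : Differentiable ℝ h := hh.differentiable (by norm_num)
  have hdh : ContDiff ℝ 1 (deriv h) := deriv_contDiff_of_two hh
  have hd2 : Differentiable ℝ (deriv h) := hdh.differentiable one_ne_zero
  set L := deriv (deriv h) 0 with hL
  have A : Tendsto (fun θ => deriv h θ / θ) (𝓝[≠] (0:ℝ)) (𝓝 L) := by
    have hs := hasDerivAt_iff_tendsto_slope.mp (hd2 0).hasDerivAt
    have : slope (deriv h) 0 = fun θ => deriv h θ / θ := by
      funext θ; simp [slope_def_field, h1]
    rwa [this] at hs
  have B : Tendsto (fun θ => Real.sin θ / θ) (𝓝[≠] (0:ℝ)) (𝓝 1) := by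
    have hs := hasDerivAt_iff_tendsto_slope.mp (Real.hasDerivAt_sin 0)
    have : slope Real.sin 0 = fun θ => Real.sin θ / θ := by
      funext θ; simp [slope_def_field]
    rw [this] at hs; simpa using hs
  have B' : Tendsto (fun θ => θ / Real.sin θ) (𝓝[≠] (0:ℝ)) (𝓝 1) := by
    have := B.inv₀ one_ne_zero
    simp only [inv_one] at this
    refine this.congr fun θ => ?_
    rw [inv_div]
  have C : Tendsto (fun θ => h θ / θ ^ 2) (𝓝[≠] (0:ℝ)) (𝓝 (L / 2)) := by
    apply deriv.lhopital_zero_nhdsNE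
    · exact Eventually.of_forall fun x => hd1 x
    · refine eventually_mem_nhdsWithin.mono fun x (hx : x ≠ 0) => ?_
      simp only [deriv_pow_field]
      norm_num
      exact hx
    · have := (hd1.continuous.tendsto 0).mono_left (nhdsWithin_le_nhds (s := {(0:ℝ)}ᶜ))
      rwa [h0] at this
    · have := ((continuous_pow 2).tendsto (0:ℝ)).mono_left (nhdsWithin_le_nhds (s := {(0:ℝ)}ᶜ))
      simpa using this
    · have := A.div_const 2
      refine this.congr fun x => ?_
      simp only [deriv_pow_field]
      rw [div_div, mul_comm]
      norm_num
  have G1 : Tendsto (fun θ => h θ / Real.sin θ ^ 2) (𝓝[≠] (0:ℝ)) (𝓝 (L / 2)) := by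
    have hm := C.mul (B'.mul B')
    rw [show L / 2 * (1 * 1) = L / 2 by ring] at hm
    refine hm.congr' (eventuallyEq_of_mem self_mem_nhdsWithin fun θ (hθ : θ ≠ 0) => ?_)
    rcases eq_or_ne (Real.sin θ) 0 with hs | hs
    · simp [hs]
    · field_simp
  have T1 : Tendsto (fun θ => deriv (deriv h) θ) (𝓝[≠] (0:ℝ)) (𝓝 L) := by
    have : Continuous (deriv (deriv h)) := (contDiff_one_iff_deriv.mp hdh).2
    exact (this.tendsto 0).mono_left nhdsWithin_le_nhds
  have T2 : Tendsto (fun θ => deriv h θ * Real.cos θ / Real.sin θ) (𝓝[≠] (0:ℝ)) (𝓝 L) := by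
    have hc : Tendsto Real.cos (𝓝[≠] (0:ℝ)) (𝓝 1) := by
      have := (Real.continuous_cos.tendsto 0).mono_left (nhdsWithin_le_nhds (s := {(0:ℝ)}ᶜ))
      simpa using this
    have hm := (A.mul B').mul hc
    rw [show L * 1 * 1 = L by ring] at hm
    refine hm.congr' (eventuallyEq_of_mem self_mem_nhdsWithin fun θ (hθ : θ ≠ 0) => ?_)
    rcases eq_or_ne (Real.sin θ) 0 with hs | hs
    · simp [hs]
    · field_simp
  have G2 : Tendsto (fun θ => deriv (deriv h) θ - deriv h θ * Real.cos θ / Real.sin θ)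
      (𝓝[≠] (0:ℝ)) (𝓝 0) := by
    have := T1.sub T2
    simpa using this
  have := G1.mul G2
  simpa using this

/-- Remark 1.3 (iv): if `h₀(θ) := v₀((a₀+b₀)/2 - (b₀-a₀)cos(θ)/2)` is an even
`2π`-periodic `C^{2+α}` function vanishing at `0` and `π`, then
`(v₀v₀'')∘φ = (4/(b₀-a₀)²)(h₀/sin²)(h₀'' - h₀'/tan)` and consequently
`v₀v₀'' → 0` at `a₀` and at `b₀`. -/
theorem stmt15 (a0 b0 α : ℝ) (hab : a0 < b0) (hα : α ∈ Ioo (0:ℝ) 1)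
    (v0 H0 : ℝ → ℝ)
    (hv0 : ContDiffOn ℝ 2 v0 (Ioo a0 b0))
    (hH0def : ∀ θ, H0 θ = v0 ((a0 + b0) / 2 - (b0 - a0) * Real.cos θ / 2))
    (hH0 : ContDiff ℝ 2 H0)
    (hH0hold : ∃ C : ℝ, ∀ x y, |iteratedDeriv 2 H0 x - iteratedDeriv 2 H0 y| ≤ C * |x - y| ^ α)
    (hH00 : H0 0 = 0) (hH0π : H0 Real.pi = 0) :
    (∀ θ, Real.sin θ ≠ 0 →
      v0 ((a0 + b0) / 2 - (b0 - a0) * Real.cos θ / 2)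
          * deriv (deriv v0) ((a0 + b0) / 2 - (b0 - a0) * Real.cos θ / 2)
        = 4 / (b0 - a0) ^ 2 * (H0 θ / Real.sin θ ^ 2)
          * (deriv (deriv H0) θ - deriv H0 θ * Real.cos θ / Real.sin θ)) ∧
    Tendsto (fun x => v0 x * deriv (deriv v0) x) (𝓝[>] a0) (𝓝 0) ∧
    Tendsto (fun x => v0 x * deriv (deriv v0) x) (𝓝[<] b0) (𝓝 0) := by
  have hbapos : 0 < b0 - a0 := sub_pos.mpr hab
  have hba : b0 - a0 ≠ 0 := ne_of_gt hbapos
  set φ : ℝ → ℝ := fun t => (a0 + b0) / 2 - (b0 - a0) * Real.cos t / 2 with hφdef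
  -- membership
  have hmem : ∀ {t : ℝ}, Real.sin t ≠ 0 → φ t ∈ Ioo a0 b0 := by
    intro t ht
    have hs : 0 < Real.sin t ^ 2 := pow_two_pos_of_ne_zero ht
    have hpy := Real.sin_sq_add_cos_sq t
    have h1 : Real.cos t < 1 := by nlinarith
    have h2 : -1 < Real.cos t := by nlinarith
    constructor
    · show a0 < (a0 + b0) / 2 - (b0 - a0) * Real.cos t / 2
      nlinarith
    · show (a0 + b0) / 2 - (b0 - a0) * Real.cos t / 2 < b0
      nlinarith
  have hφt : ∀ t : ℝ, HasDerivAt φ ((b0 - a0) * Real.sin t / 2) t := by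
    intro t
    have h := (((Real.hasDerivAt_cos t).const_mul (b0 - a0)).div_const 2).const_sub
      ((a0 + b0) / 2)
    rw [show (b0 - a0) * Real.sin t / 2 = -((b0 - a0) * -Real.sin t / 2) by ring]
    exact h
  have hderiv1 : ∀ t, Real.sin t ≠ 0 →
      deriv H0 t = deriv v0 (φ t) * ((b0 - a0) * Real.sin t / 2) := by
    intro t ht
    have hx := hmem ht
    have hca : ContDiffAt ℝ 2 v0 (φ t) := hv0.contDiffAt (isOpen_Ioo.mem_nhds hx)
    have hdv : DifferentiableAt ℝ v0 (φ t) := hca.differentiableAt (by norm_num)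
    have hc := hdv.hasDerivAt.comp t (hφt t)
    have hfun : H0 = v0 ∘ φ := funext fun s => hH0def s
    rw [hfun]
    exact hc.deriv
  have hdv2 : ContDiffOn ℝ 1 (deriv v0) (Ioo a0 b0) :=
    hv0.deriv_of_isOpen isOpen_Ioo (by norm_num)
  have hderiv2 : ∀ t, Real.sin t ≠ 0 →
      deriv (deriv H0) t = deriv (deriv v0) (φ t) * ((b0 - a0) * Real.sin t / 2) ^ 2
        + deriv v0 (φ t) * ((b0 - a0) * Real.cos t / 2) := by
    intro t ht
    have hopen : IsOpen {s : ℝ | Real.sin s ≠ 0} :=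
      isOpen_compl_singleton.preimage Real.continuous_sin
    have hev : deriv H0 =ᶠ[𝓝 t] fun s => deriv v0 (φ s) * ((b0 - a0) * Real.sin s / 2) :=
      eventually_of_mem (hopen.mem_nhds ht) fun s hs => hderiv1 s hs
    rw [hev.deriv_eq]
    have hx := hmem ht
    have hdd : DifferentiableAt ℝ (deriv v0) (φ t) :=
      (hdv2.differentiableOn one_ne_zero).differentiableAt (isOpen_Ioo.mem_nhds hx)
    have h1 : HasDerivAt (fun s => deriv v0 (φ s))
        (deriv (deriv v0) (φ t) * ((b0 - a0) * Real.sin t / 2)) t :=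
      hdd.hasDerivAt.comp t (hφt t)
    have h2 : HasDerivAt (fun s => (b0 - a0) * Real.sin s / 2) ((b0 - a0) * Real.cos t / 2) t :=
      ((Real.hasDerivAt_sin t).const_mul (b0 - a0)).div_const 2
    rw [(h1.fun_mul h2).deriv]
    ring
  have part1 : ∀ θ, Real.sin θ ≠ 0 →
      v0 (φ θ) * deriv (deriv v0) (φ θ)
        = 4 / (b0 - a0) ^ 2 * (H0 θ / Real.sin θ ^ 2)
          * (deriv (deriv H0) θ - deriv H0 θ * Real.cos θ / Real.sin θ) := by
    intro θ hθ
    rw [hderiv2 θ hθ, hderiv1 θ hθ, hH0def θ]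
    show v0 (φ θ) * deriv (deriv v0) (φ θ) = _ * (v0 (φ θ) / _) * _
    field_simp
    ring
  -- evenness facts
  have hH0even : ∀ t, H0 (-t) = H0 t := by
    intro t; rw [hH0def, hH0def, Real.cos_neg]
  have hdH00 : deriv H0 0 = 0 := by
    have h2 : (fun t => H0 (-t)) = H0 := funext hH0even
    have h3 : deriv (fun t => H0 (-t)) 0 = -deriv H0 0 := by
      rw [deriv_comp_neg]; simp
    rw [h2] at h3
    linarith
  -- the reflected function
  set K : ℝ → ℝ := fun t => H0 (Real.pi - t) with hKdef
  have hK : ContDiff ℝ 2 K := hH0.comp (contDiff_const.sub contDiff_id)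
  have hK0 : K 0 = 0 := by simp [hKdef, hH0π]
  have hKd : ∀ t, deriv K t = -deriv H0 (Real.pi - t) := by
    intro t
    rw [hKdef]
    exact deriv_comp_const_sub _ _ _
  have hKdd : ∀ t, deriv (deriv K) t = deriv (deriv H0) (Real.pi - t) := by
    intro t
    have h2 : deriv K = fun s => -deriv H0 (Real.pi - s) := funext hKd
    rw [h2, deriv.fun_neg, deriv_comp_const_sub, neg_neg]
  have hKeven : ∀ t, K (-t) = K t := by
    intro t
    simp only [hKdef]
    rw [hH0def, hH0def]
    rw [Real.cos_pi_sub, Real.cos_pi_sub, Real.cos_neg]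
  have hdK0 : deriv K 0 = 0 := by
    have h2 : (fun t => K (-t)) = K := funext hKeven
    have h3 : deriv (fun t => K (-t)) 0 = -deriv K 0 := by
      rw [deriv_comp_neg]; simp
    rw [h2] at h3
    linarith
  have limA := limF hH0 hH00 hdH00
  have limB := limF hK hK0 hdK0
  -- relation between F H0 and F K
  have hFKF : ∀ θ : ℝ, H0 θ / Real.sin θ ^ 2
        * (deriv (deriv H0) θ - deriv H0 θ * Real.cos θ / Real.sin θ)
      = K (Real.pi - θ) / Real.sin (Real.pi - θ) ^ 2
        * (deriv (deriv K) (Real.pi - θ)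
            - deriv K (Real.pi - θ) * Real.cos (Real.pi - θ) / Real.sin (Real.pi - θ)) := by
    intro θ
    rw [hKdd, hKd, Real.sin_pi_sub, Real.cos_pi_sub,
      show Real.pi - (Real.pi - θ) = θ by ring,
      show K (Real.pi - θ) = H0 (Real.pi - (Real.pi - θ)) from rfl,
      show Real.pi - (Real.pi - θ) = θ by ring]
    ring
  -- the substitution map
  set θm : ℝ → ℝ := fun x => Real.arccos ((a0 + b0 - 2 * x) / (b0 - a0)) with hθmdef
  have hθmmem : ∀ x ∈ Ioo a0 b0, θm x ∈ Ioo 0 Real.pi ∧ φ (θm x) = x := by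
    intro x hx
    have hy1 : (a0 + b0 - 2 * x) / (b0 - a0) < 1 := by
      rw [div_lt_one hbapos]; linarith [hx.1]
    have hy2 : -1 < (a0 + b0 - 2 * x) / (b0 - a0) := by
      rw [lt_div_iff₀ hbapos]; linarith [hx.2]
    have hlt : Real.arccos ((a0 + b0 - 2 * x) / (b0 - a0)) < Real.pi := by
      refine (Real.arccos_le_pi _).lt_of_ne fun he => ?_
      have hc := Real.cos_arccos hy2.le hy1.le
      rw [he, Real.cos_pi] at hc
      linarith
    refine ⟨⟨Real.arccos_pos.mpr hy1, hlt⟩, ?_⟩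
    show (a0 + b0) / 2 - (b0 - a0) * Real.cos (Real.arccos _) / 2 = x
    rw [Real.cos_arccos hy2.le hy1.le]
    field_simp
    ring
  have hcont : Continuous θm :=
    Real.continuous_arccos.comp ((continuous_const.sub (continuous_const.mul continuous_id)).div_const _)
  have hIooA : Ioo a0 b0 ∈ 𝓝[>] a0 := Ioo_mem_nhdsGT_of_mem ⟨le_refl a0, hab⟩
  have hIooB : Ioo a0 b0 ∈ 𝓝[<] b0 := Ioo_mem_nhdsLT_of_mem ⟨hab, le_refl b0⟩
  have hsin : ∀ x ∈ Ioo a0 b0, Real.sin (θm x) ≠ 0 := fun x hx =>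
    ne_of_gt (Real.sin_pos_of_pos_of_lt_pi (hθmmem x hx).1.1 (hθmmem x hx).1.2)
  have ha : Tendsto θm (𝓝[>] a0) (𝓝[≠] (0:ℝ)) := by
    rw [tendsto_nhdsWithin_iff]
    constructor
    · have h1 : θm a0 = 0 := by
        simp only [hθmdef]
        rw [show (a0 + b0 - 2 * a0) / (b0 - a0) = 1 by field_simp; ring]
        exact Real.arccos_one
      have := (hcont.tendsto a0).mono_left (nhdsWithin_le_nhds (s := Ioi a0))
      rwa [h1] at this
    · filter_upwards [hIooA] with x hx
      exact ne_of_gt (hθmmem x hx).1.1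
  have hb : Tendsto (fun x => Real.pi - θm x) (𝓝[<] b0) (𝓝[≠] (0:ℝ)) := by
    rw [tendsto_nhdsWithin_iff]
    constructor
    · have h1 : θm b0 = Real.pi := by
        simp only [hθmdef]
        rw [show (a0 + b0 - 2 * b0) / (b0 - a0) = -1 by field_simp; ring]
        exact Real.arccos_neg_one
      have h2 := (hcont.tendsto b0).mono_left (nhdsWithin_le_nhds (s := Iio b0))
      rw [h1] at h2
      have := (tendsto_const_nhds (x := Real.pi) (f := 𝓝[<] b0)).sub h2
      simpa using this
    · filter_upwards [hIooB] with x hx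
      exact sub_ne_zero.mpr (ne_of_gt (hθmmem x hx).1.2)
  refine ⟨fun θ hθ => part1 θ hθ, ?_, ?_⟩
  · have hlim := (limA.comp ha).const_mul (4 / (b0 - a0) ^ 2)
    rw [mul_zero] at hlim
    refine hlim.congr' ?_
    filter_upwards [hIooA] with x hx
    obtain ⟨hθx, hφx⟩ := hθmmem x hx
    have h := part1 (θm x) (hsin x hx)
    rw [hφx, mul_assoc] at h
    rw [Function.comp_apply]
    exact h.symm
  · have hlim := (limB.comp hb).const_mul (4 / (b0 - a0) ^ 2)
    rw [mul_zero] at hlim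
    refine hlim.congr' ?_
    filter_upwards [hIooB] with x hx
    obtain ⟨hθx, hφx⟩ := hθmmem x hx
    have h := part1 (θm x) (hsin x hx)
    rw [hφx, mul_assoc, hFKF (θm x)] at h
    rw [Function.comp_apply]
    exact h.symm
end

section
/- Let d : [0,T] → (0,∞) be continuous, and set ϑ₀ := min_{t∈[0,T]} d(t)/2. For any λ ∈ ℝ with T|λ| < ϑ₀, and any continuous functions a, b, c with c(t) = (a(t)+b(t))/2, d(t) = (b(t)-a(t))/2, the map φ_λ(t,·) : (0,π) → (a(t),b(t)) defined by φ_λ(t,x) = c(t) - d(t)cos(x) + tλ sin²(x) is, for each t ∈ [0,T], a real-analytic diffeomorphism onto (a(t),b(t)). -/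
/-!
With `μ = tλ`, the map `x ↦ c - d cos x + μ sin² x` has derivative `sin x (d + 2μ cos x)`, and
`2|μ| ≤ 2T|λ| < d` keeps the second factor positive. So the map is strictly increasing on `[0, π]`,
and by the intermediate value theorem it carries `(0, π)` onto `(c - d, c + d) = (a, b)`.
-/

open Set Real

section

variable (c d μ : ℝ)

theorem hasDerivAt_sub_mul_cos_add_mul_sin_sq (x : ℝ) :
    HasDerivAt (fun x => c - d * cos x + μ * sin x ^ 2) (sin x * (d + 2 * μ * cos x)) x := by
  refine ((((hasDerivAt_cos x).const_mul d).const_sub c).fun_add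
    (((hasDerivAt_sin x).fun_pow 2).const_mul μ)).congr_deriv ?_
  push_cast
  ring

variable {c d μ}

theorem add_two_mul_mul_cos_pos (h : 2 * |μ| < d) (x : ℝ) : 0 < d + 2 * μ * cos x := by
  have hbound : |2 * μ * cos x| ≤ 2 * |μ| := by
    rw [abs_mul, abs_mul, abs_two]
    exact mul_le_of_le_one_right (by positivity) (abs_cos_le_one x)
  linarith [neg_abs_le (2 * μ * cos x)]

theorem deriv_sub_mul_cos_add_mul_sin_sq_pos (h : 2 * |μ| < d) {x : ℝ} (hx : x ∈ Ioo 0 π) :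
    0 < deriv (fun x => c - d * cos x + μ * sin x ^ 2) x := by
  rw [(hasDerivAt_sub_mul_cos_add_mul_sin_sq c d μ x).deriv]
  exact mul_pos (sin_pos_of_pos_of_lt_pi hx.1 hx.2) (add_two_mul_mul_cos_pos h x)

theorem continuous_sub_mul_cos_add_mul_sin_sq :
    Continuous (fun x => c - d * cos x + μ * sin x ^ 2) := by
  fun_prop

theorem strictMonoOn_sub_mul_cos_add_mul_sin_sq (h : 2 * |μ| < d) :
    StrictMonoOn (fun x => c - d * cos x + μ * sin x ^ 2) (Icc 0 π) := by
  refine strictMonoOn_of_deriv_pos (convex_Icc 0 π)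
    continuous_sub_mul_cos_add_mul_sin_sq.continuousOn fun x hx => ?_
  rw [interior_Icc] at hx
  exact deriv_sub_mul_cos_add_mul_sin_sq_pos h hx

theorem image_sub_mul_cos_add_mul_sin_sq_Ioo (h : 2 * |μ| < d) :
    (fun x => c - d * cos x + μ * sin x ^ 2) '' Ioo 0 π = Ioo (c - d) (c + d) := by
  rw [continuous_sub_mul_cos_add_mul_sin_sq.continuousOn.image_Ioo_of_strictMonoOn pi_pos.le
    (strictMonoOn_sub_mul_cos_add_mul_sin_sq h)]
  norm_num

end

theorem stmt18_general (T : ℝ) (a b c d : ℝ → ℝ)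
    (hc : ∀ t, c t = (a t + b t) / 2) (hd : ∀ t, d t = (b t - a t) / 2)
    (lam : ℝ)
    (hlam : ∀ t ∈ Icc (0:ℝ) T, T * |lam| < d t / 2) :
    ∀ t ∈ Icc (0:ℝ) T,
      (∀ x ∈ Ioo (0:ℝ) Real.pi,
        AnalyticAt ℝ (fun x => c t - d t * Real.cos x + t * lam * Real.sin x ^ 2) x) ∧
      (∀ x ∈ Ioo (0:ℝ) Real.pi,
        0 < deriv (fun x => c t - d t * Real.cos x + t * lam * Real.sin x ^ 2) x) ∧
      InjOn (fun x => c t - d t * Real.cos x + t * lam * Real.sin x ^ 2) (Ioo 0 Real.pi) ∧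
      (fun x => c t - d t * Real.cos x + t * lam * Real.sin x ^ 2) '' Ioo 0 Real.pi
        = Ioo (a t) (b t) := by
  intro t ht
  have hμ : 2 * |t * lam| < d t := by
    have ht_abs : |t| ≤ T := abs_le.2 ⟨by linarith [ht.1, ht.2], ht.2⟩
    calc 2 * |t * lam| = 2 * (|t| * |lam|) := by rw [abs_mul]
      _ ≤ 2 * (T * |lam|) := by gcongr
      _ < d t := by linarith [hlam t ht]
  have hab : c t - d t = a t ∧ c t + d t = b t := by
    constructor <;> rw [hc, hd] <;> ring
  refine ⟨fun x _ => by fun_prop, fun x hx => deriv_sub_mul_cos_add_mul_sin_sq_pos hμ hx,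
    (strictMonoOn_sub_mul_cos_add_mul_sin_sq hμ).injOn.mono Ioo_subset_Icc_self, ?_⟩
  rw [image_sub_mul_cos_add_mul_sin_sq_Ioo hμ, hab.1, hab.2]

/-- Section 4: for `T|λ| < ϑ₀ = min d/2`, the map
`φ_λ(t,x) = c(t) - d(t)cos(x) + tλ sin²(x)` is, for each `t ∈ [0,T]`, a real-analytic
diffeomorphism from `(0,π)` onto `(a(t), b(t))`. -/
theorem stmt18 (T : ℝ) (hT : 0 < T) (a b c d : ℝ → ℝ)
    (hc : ∀ t, c t = (a t + b t) / 2) (hd : ∀ t, d t = (b t - a t) / 2)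
    (hd_cont : ContinuousOn d (Icc 0 T))
    (hd_pos : ∀ t ∈ Icc (0:ℝ) T, 0 < d t)
    (lam : ℝ)
    (hlam : ∀ t ∈ Icc (0:ℝ) T, T * |lam| < d t / 2) :
    ∀ t ∈ Icc (0:ℝ) T,
      (∀ x ∈ Ioo (0:ℝ) Real.pi,
        AnalyticAt ℝ (fun x => c t - d t * Real.cos x + t * lam * Real.sin x ^ 2) x) ∧
      (∀ x ∈ Ioo (0:ℝ) Real.pi,
        0 < deriv (fun x => c t - d t * Real.cos x + t * lam * Real.sin x ^ 2) x) ∧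
      InjOn (fun x => c t - d t * Real.cos x + t * lam * Real.sin x ^ 2) (Ioo 0 Real.pi) ∧
      (fun x => c t - d t * Real.cos x + t * lam * Real.sin x ^ 2) '' Ioo 0 Real.pi
        = Ioo (a t) (b t) :=
  stmt18_general T a b c d hc hd lam hlam
end
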